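/- arXiv:1711.05064 — 6 statements merged into one kernel-verified Lean document; each statement's English description precedes it below -/
import Mathlib

section
/- Let (a_n)_{n∈ℕ} be a sequence of quaternions and let R ∈ (0,∞] satisfy 1/R = limsup_{n→∞} |a_n|^{1/n}. Then for every q ∈ ℍ with |q| < R the power series Σ_{n∈ℕ} q^n a_n converges absolutely, and the function f(q) = Σ_{n∈ℕ} q^n a_n is slice regular on the open ball B(0,R) = {q ∈ ℍ : |q| < R}. -/
open Quaternion Filter Topology ContinuousLinearMap

set_option maxHeartbeats 1000000

noncomputable section

section aux

variable (I : ℍ[ℝ])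

/-- The linear embedding of the slice plane. -/
def sliceL : ℝ × ℝ →L[ℝ] ℍ[ℝ] :=
  (ContinuousLinearMap.fst ℝ ℝ ℝ).smulRight (1 : ℍ[ℝ]) +
    (ContinuousLinearMap.snd ℝ ℝ ℝ).smulRight I

lemma sliceL_apply (v : ℝ × ℝ) : sliceL I v = (v.1 : ℍ[ℝ]) + v.2 • I := by
  simp only [sliceL, ContinuousLinearMap.add_apply, ContinuousLinearMap.smulRight_apply,
    ContinuousLinearMap.coe_fst', ContinuousLinearMap.coe_snd']
  rw [← Quaternion.coe_mul_eq_smul, mul_one]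

lemma sliceL_comm (v w : ℝ × ℝ) : Commute (sliceL I v) (sliceL I w) := by
  rw [sliceL_apply, sliceL_apply]
  refine Commute.add_right ?_ ?_
  · exact (Quaternion.coe_commute w.1 _).symm
  · exact Commute.add_left (Quaternion.coe_commute v.1 _)
      (((Commute.refl I).smul_left v.2).smul_right w.2)

lemma sliceL_comm_I (v : ℝ × ℝ) : Commute I (sliceL I v) := by
  rw [sliceL_apply]
  exact (Quaternion.coe_commute v.1 I).symm.add_right ((Commute.refl I).smul_right v.2)

lemma hasFDerivAt_sliceL_pow (n : ℕ) (p : ℝ × ℝ) :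
    HasFDerivAt (fun y => (sliceL I y) ^ n)
      (n • ((ContinuousLinearMap.mul ℝ ℍ[ℝ] ((sliceL I p) ^ (n - 1))).comp (sliceL I))) p := by
  induction n with
  | zero => simpa using hasFDerivAt_const (1 : ℍ[ℝ]) p
  | succ n ih =>
      have h := ((sliceL I).hasFDerivAt (x := p)).mul' ih
      have heq : (⇑(sliceL I) * fun y => (sliceL I y) ^ n) = fun y => (sliceL I y) ^ (n + 1) := by
        funext y; rw [Pi.mul_apply, ← pow_succ']
      rw [heq] at h
      refine h.congr_fderiv (ContinuousLinearMap.ext fun v => ?_).symm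
      simp only [ContinuousLinearMap.add_apply, ContinuousLinearMap.coe_smul',
        Pi.smul_apply, ContinuousLinearMap.coe_comp', Function.comp_apply,
        ContinuousLinearMap.mul_apply', ContinuousLinearMap.smulRight_apply,
        ContinuousLinearMap.smul_apply, smul_eq_mul, op_smul_eq_mul]
      rcases n with _ | m
      · simp
      · have h1 : sliceL I p * (sliceL I p) ^ (m + 1 - 1) = (sliceL I p) ^ (m + 1) := by
          rw [Nat.add_sub_cancel, ← pow_succ']
        have h2 : sliceL I v * (sliceL I p) ^ (m + 1) = (sliceL I p) ^ (m + 1) * sliceL I v :=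
          ((sliceL_comm I v p).pow_right (m + 1)).eq
        rw [Nat.add_sub_cancel, mul_smul_comm, ← mul_assoc, h1, h2, succ_nsmul]
end aux

-- auxiliary summability lemma
lemma aux_summable (a : ℕ → ℍ[ℝ]) (R : ENNReal) (hR : 0 < R)
    (hlim : R⁻¹ =
      Filter.limsup (fun n : ℕ => ENNReal.ofReal (‖a n‖ ^ (1 / (n : ℝ)))) Filter.atTop)
    (k : ℕ) (t : ℝ) (ht : 0 ≤ t) (htR : ENNReal.ofReal t < R) :
    Summable (fun n : ℕ => (n : ℝ) ^ k * t ^ n * ‖a n‖) := by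
  -- choose s with R⁻¹ < ofReal s and t * s < 1
  obtain ⟨s, hs0, hls, hts⟩ :
      ∃ s : ℝ, 0 < s ∧ R⁻¹ < ENNReal.ofReal s ∧ t * s < 1 := by
    rcases eq_or_lt_of_le ht with h0 | h0
    · obtain ⟨c, hc1, hc2⟩ := exists_between (ENNReal.inv_lt_top.mpr hR)
      refine ⟨c.toReal, ?_, ?_, ?_⟩
      · have : (0:ENNReal) < c := lt_of_le_of_lt zero_le hc1
        exact ENNReal.toReal_pos this.ne' hc2.ne
      · rwa [ENNReal.ofReal_toReal hc2.ne]
      · rw [← h0]; simpa using one_pos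
    · have h1 : R⁻¹ < (ENNReal.ofReal t)⁻¹ := by
        rw [ENNReal.inv_lt_inv]; exact htR
      obtain ⟨c, hc1, hc2⟩ := exists_between h1
      have hct : c < ⊤ := lt_of_lt_of_le hc2 le_top
      refine ⟨c.toReal, ?_, ?_, ?_⟩
      · have : (0:ENNReal) < c := lt_of_le_of_lt zero_le hc1
        exact ENNReal.toReal_pos this.ne' hct.ne
      · rwa [ENNReal.ofReal_toReal hct.ne]
      · have h2 : c.toReal < t⁻¹ := by
          have hne : (ENNReal.ofReal t)⁻¹ ≠ ⊤ :=
            ENNReal.inv_ne_top.mpr (ENNReal.ofReal_pos.mpr h0).ne'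
          have := ENNReal.toReal_strict_mono hne hc2
          rwa [← ENNReal.ofReal_inv_of_pos h0, ENNReal.toReal_ofReal (le_of_lt (inv_pos.mpr h0))] at this
        calc t * c.toReal < t * t⁻¹ := by
              exact mul_lt_mul_of_pos_left h2 h0
          _ = 1 := mul_inv_cancel₀ h0.ne'
  have hev : ∀ᶠ n in atTop, ENNReal.ofReal (‖a n‖ ^ (1 / (n:ℝ))) < ENNReal.ofReal s :=
    eventually_lt_of_limsup_lt (by rw [← hlim]; exact hls)
  have hbound : ∀ᶠ n in atTop, ‖a n‖ ≤ s ^ n := by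
    filter_upwards [hev, eventually_ge_atTop 1] with n hn hn1
    have h1 : ‖a n‖ ^ (1 / (n:ℝ)) < s := by
      have := (ENNReal.ofReal_lt_ofReal_iff hs0).mp hn
      exact this
    have h2 : (‖a n‖ ^ (1 / (n:ℝ))) ^ n ≤ s ^ n :=
      pow_le_pow_left₀ (Real.rpow_nonneg (norm_nonneg _) _) h1.le n
    rwa [one_div, Real.rpow_inv_natCast_pow (norm_nonneg _) (by omega)] at h2
  have hg : Summable (fun n : ℕ => (n:ℝ) ^ k * (t * s) ^ n) :=
    summable_pow_mul_geometric_of_norm_lt_one k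
      (by rw [Real.norm_eq_abs, abs_of_nonneg (mul_nonneg ht hs0.le)]; exact hts)
  apply Summable.of_norm_bounded_eventually_nat hg
  filter_upwards [hbound] with n hn
  have h3 : (0:ℝ) ≤ (n:ℝ)^k * t^n * ‖a n‖ :=
    mul_nonneg (mul_nonneg (pow_nonneg (Nat.cast_nonneg n) _) (pow_nonneg ht _)) (norm_nonneg _)
  rw [Real.norm_eq_abs, abs_of_nonneg h3, mul_pow]
  calc (n:ℝ)^k * t^n * ‖a n‖ ≤ (n:ℝ)^k * t^n * s^n := by
        apply mul_le_mul_of_nonneg_left hn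
        exact mul_nonneg (pow_nonneg (Nat.cast_nonneg n) _) (pow_nonneg ht _)
    _ = (n:ℝ)^k * (t^n * s^n) := by ring


/-- The 2-sphere `𝕊 = {q ∈ ℍ : q² = -1}` of quaternionic imaginary units. -/
def QS : Set ℍ[ℝ] := {q | q ^ 2 = -1}

/-- The slice function `g_I(x,y) = f(x + yI)`. -/
def sliceFun (f : ℍ[ℝ] → ℍ[ℝ]) (I : ℍ[ℝ]) (p : ℝ × ℝ) : ℍ[ℝ] :=
  f ((p.1 : ℍ[ℝ]) + p.2 • I)

/-- `f` is slice regular on `Ω`: for each imaginary unit `I`, the slice function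
`g_I(x,y) = f(x+yI)` is real differentiable and satisfies `∂g/∂x + I ∂g/∂y = 0`
at every point `(x,y)` with `x + yI ∈ Ω`. -/
def SliceRegularOn (f : ℍ[ℝ] → ℍ[ℝ]) (Ω : Set ℍ[ℝ]) : Prop :=
  ∀ I ∈ QS, ∀ p : ℝ × ℝ, ((p.1 : ℍ[ℝ]) + p.2 • I) ∈ Ω →
    DifferentiableAt ℝ (sliceFun f I) p ∧
    fderiv ℝ (sliceFun f I) p (1, 0) + I * fderiv ℝ (sliceFun f I) p (0, 1) = 0

/-- The 2-sphere `x + y𝕊 = {x + yJ : J ∈ 𝕊}` (a real point when `y = 0`). -/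
def qSphere (x y : ℝ) : Set ℍ[ℝ] := {q | ∃ I ∈ QS, q = (x : ℍ[ℝ]) + y • I}

/-- The symmetric open set `U(x₀+y₀𝕊, R) = {q : |(q-x₀)² + y₀²| < R²}`. -/
def sphU (x0 y0 R : ℝ) : Set ℍ[ℝ] :=
  {q | ‖(q - (x0 : ℍ[ℝ])) ^ 2 + ((y0 : ℍ[ℝ])) ^ 2‖ < R ^ 2}

/-- `Ω` is axially symmetric. -/
def AxSymm (Ω : Set ℍ[ℝ]) : Prop :=
  ∀ x y : ℝ, ∀ I ∈ QS, ((x : ℍ[ℝ]) + y • I) ∈ Ω → qSphere x y ⊆ Ω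

/-- `Ω` is a symmetric slice domain: an axially symmetric, open, connected set that
meets the real axis and whose intersection with each slice `L_I = ℝ + ℝI` is connected. -/
def SymmSliceDomain (Ω : Set ℍ[ℝ]) : Prop :=
  IsOpen Ω ∧ IsConnected Ω ∧ AxSymm Ω ∧ (∃ r : ℝ, (r : ℍ[ℝ]) ∈ Ω) ∧
    ∀ I ∈ QS, IsConnected {q ∈ Ω | ∃ a b : ℝ, q = (a : ℍ[ℝ]) + b • I}

/-- Abel's theorem for quaternionic power series `Σ qⁿ aₙ`: if
`1/R = limsup |aₙ|^{1/n}`, the series converges absolutely for `|q| < R` and its sum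
is slice regular on the ball `B(0,R)`. -/
theorem quaternionic_power_series_regular (a : ℕ → ℍ[ℝ]) (R : ENNReal) (hR : 0 < R)
    (hlim : R⁻¹ =
      Filter.limsup (fun n : ℕ => ENNReal.ofReal (‖a n‖ ^ (1 / (n : ℝ)))) Filter.atTop) :
    (∀ q : ℍ[ℝ], (‖q‖₊ : ENNReal) < R → Summable (fun n : ℕ => ‖q ^ n * a n‖)) ∧
    SliceRegularOn (fun q => ∑' n : ℕ, q ^ n * a n)
      {q : ℍ[ℝ] | (‖q‖₊ : ENNReal) < R} := by
  have part1 : ∀ q : ℍ[ℝ], (‖q‖₊ : ENNReal) < R → Summable (fun n : ℕ => ‖q ^ n * a n‖) := by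
    intro q hq
    have h0 : ENNReal.ofReal ‖q‖ < R := by rwa [ofReal_norm]
    have h1 := aux_summable a R hR hlim 0 ‖q‖ (norm_nonneg q) h0
    simp only [pow_zero, one_mul] at h1
    refine Summable.of_nonneg_of_le (fun n => norm_nonneg _) (fun n => ?_) h1
    rw [norm_mul, norm_pow]
  refine ⟨part1, ?_⟩
  intro I hI p hp
  set L := sliceL I with hLdef
  have hL : ∀ v : ℝ × ℝ, L v = (v.1 : ℍ[ℝ]) + v.2 • I := sliceL_apply I
  have hI2 : I * I = -1 := by have := hI; rwa [QS, Set.mem_setOf_eq, sq] at this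
  have hInorm : ‖I‖ = 1 := by
    have h1 : ‖I‖ * ‖I‖ = 1 := by rw [← norm_mul, hI2]; simp
    nlinarith [norm_nonneg I]
  -- the point and the radius
  have hzR : (‖L p‖₊ : ENNReal) < R := by rw [hL]; exact hp
  obtain ⟨c, hc1, hc2⟩ := exists_between hzR
  have hcne : c ≠ ⊤ := (lt_of_lt_of_le hc2 le_top).ne
  set r : ℝ := c.toReal with hrdef
  have hr1 : ‖L p‖ < r := by
    have h := ENNReal.toReal_strict_mono hcne hc1
    rwa [ENNReal.coe_toReal, coe_nnnorm] at h
  have hr2 : ENNReal.ofReal r < R := by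
    rwa [hrdef, ENNReal.ofReal_toReal hcne]
  have hr0 : 0 < r := lt_of_le_of_lt (norm_nonneg _) hr1
  -- the open convex set
  set s : Set (ℝ × ℝ) := {y | ‖L y‖ < r} with hsdef
  have hs_open : IsOpen s := isOpen_lt (L.continuous.norm) continuous_const
  have hs_conv : Convex ℝ s := by
    have : s = (L : ℝ × ℝ →ₗ[ℝ] ℍ[ℝ]) ⁻¹' Metric.ball (0 : ℍ[ℝ]) r := by
      ext y; simp [hsdef, mem_ball_zero_iff]
    rw [this]
    exact (convex_ball (0 : ℍ[ℝ]) r).linear_preimage _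
  have hps : p ∈ s := hr1
  -- bound on L
  have hLb : ∀ v : ℝ × ℝ, ‖L v‖ ≤ 2 * ‖v‖ := by
    intro v
    rw [hL]
    calc ‖(v.1 : ℍ[ℝ]) + v.2 • I‖ ≤ ‖(v.1 : ℍ[ℝ])‖ + ‖v.2 • I‖ := norm_add_le _ _
      _ = |v.1| + |v.2| := by
          simp [norm_smul, hInorm, Quaternion.norm_coe, Real.norm_eq_abs]
      _ ≤ ‖v‖ + ‖v‖ := add_le_add (norm_fst_le v) (norm_snd_le v)
      _ = 2 * ‖v‖ := by ring
  -- the series of derivatives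
  set f : ℕ → (ℝ × ℝ) → ℍ[ℝ] := fun n y => (L y) ^ n * a n with hfdef
  set f' : ℕ → (ℝ × ℝ) → (ℝ × ℝ →L[ℝ] ℍ[ℝ]) := fun n y =>
    n • (((ContinuousLinearMap.mul ℝ ℍ[ℝ]).flip (a n)).comp
      ((ContinuousLinearMap.mul ℝ ℍ[ℝ] ((L y) ^ (n - 1))).comp L)) with hf'def
  have hf'apply : ∀ n y v, f' n y v = n • ((L y) ^ (n - 1) * L v * a n) := by
    intro n y v
    simp [hf'def]
  have hf : ∀ n y, y ∈ s → HasFDerivAt (f n) (f' n y) y := by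
    intro n y _
    have h := (hasFDerivAt_sliceL_pow I n y).mul_const' (a n)
    refine h.congr_fderiv (ContinuousLinearMap.ext fun v => ?_).symm
    rw [hf'apply]
    simp only [ContinuousLinearMap.smulRight_apply, ContinuousLinearMap.smul_apply,
      ContinuousLinearMap.coe_comp', Function.comp_apply, ContinuousLinearMap.mul_apply',
      smul_eq_mul, smul_mul_assoc, op_smul_eq_mul]
    rfl
  -- the bound
  set u : ℕ → ℝ := fun n => (n : ℝ) * r ^ (n - 1) * ‖a n‖ * 2 with hudef
  have hf' : ∀ n y, y ∈ s → ‖f' n y‖ ≤ u n := by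
    intro n y hy
    have hTb : ∀ T : ℝ × ℝ →L[ℝ] ℍ[ℝ], T = (((ContinuousLinearMap.mul ℝ ℍ[ℝ]).flip (a n)).comp
        ((ContinuousLinearMap.mul ℝ ℍ[ℝ] ((L y) ^ (n - 1))).comp L)) →
        ‖T‖ ≤ r ^ (n - 1) * ‖a n‖ * 2 := by
      intro T hT
      apply ContinuousLinearMap.opNorm_le_bound
      · positivity
      · intro v
        rw [hT]
        simp only [ContinuousLinearMap.coe_comp', Function.comp_apply,
          ContinuousLinearMap.mul_apply', ContinuousLinearMap.flip_apply]
        rw [norm_mul, norm_mul, norm_pow]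
        have h1 : ‖L y‖ ^ (n - 1) ≤ r ^ (n - 1) :=
          pow_le_pow_left₀ (norm_nonneg _) (le_of_lt hy) _
        calc ‖L y‖ ^ (n-1) * ‖L v‖ * ‖a n‖ ≤ r ^ (n-1) * (2 * ‖v‖) * ‖a n‖ := by
              apply mul_le_mul_of_nonneg_right _ (norm_nonneg _)
              exact mul_le_mul h1 (hLb v) (norm_nonneg _) (by positivity)
          _ = r ^ (n-1) * ‖a n‖ * 2 * ‖v‖ := by ring
    have h2 := hTb _ rfl
    calc ‖f' n y‖ = (n:ℝ) * ‖(((ContinuousLinearMap.mul ℝ ℍ[ℝ]).flip (a n)).comp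
        ((ContinuousLinearMap.mul ℝ ℍ[ℝ] ((L y) ^ (n - 1))).comp L))‖ := by
          rw [hf'def]
          simp only [← Nat.cast_smul_eq_nsmul ℝ, norm_smul, Real.norm_natCast]
          rw [(NormedSpace.toNormSMulClass (𝕜 := ℝ) (E := ℝ × ℝ →L[ℝ] ℍ[ℝ])).norm_smul, Real.norm_natCast]
      _ ≤ (n:ℝ) * (r ^ (n - 1) * ‖a n‖ * 2) :=
          mul_le_mul_of_nonneg_left h2 (Nat.cast_nonneg n)
      _ = u n := by rw [hudef]; ring
  have hu : Summable u := by
    have hg := (aux_summable a R hR hlim 1 r hr0.le hr2).mul_left (2 / r)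
    refine Summable.of_nonneg_of_le (fun n => ?_) (fun n => ?_) hg
    · rw [hudef]; positivity
    · rcases n with _ | m
      · simp [hudef]
      · simp only [hudef, Nat.add_sub_cancel, pow_one]
        apply le_of_eq
        rw [pow_succ]
        field_simp
  -- summability of the series at p
  have hf0 : Summable (fun n => f n p) := by
    apply Summable.of_norm
    have h0 := aux_summable a R hR hlim 0 r hr0.le hr2
    simp only [pow_zero, one_mul] at h0
    refine Summable.of_nonneg_of_le (fun n => norm_nonneg _) (fun n => ?_) h0
    simp only [hfdef]
    rw [norm_mul, norm_pow]
    exact mul_le_mul_of_nonneg_right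
      (pow_le_pow_left₀ (norm_nonneg _) hr1.le n) (norm_nonneg _)
  have H : HasFDerivAt (fun y => ∑' n, f n y) (∑' n, f' n p) p :=
    hasFDerivAt_tsum_of_isPreconnected hu hs_open hs_conv.isPreconnected hf hf' hps hf0 hps
  have heq : sliceFun (fun q => ∑' n : ℕ, q ^ n * a n) I = fun y => ∑' n, f n y := by
    funext y
    simp only [sliceFun, hfdef]
    rw [← hL y]
  constructor
  · rw [heq]; exact H.differentiableAt
  · rw [heq, H.fderiv]
    have hsum : Summable (fun n => f' n p) := by
      apply Summable.of_norm (E := ℝ × ℝ →L[ℝ] ℍ[ℝ])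
      exact Summable.of_nonneg_of_le (fun n => norm_nonneg (f' n p)) (fun n => hf' n p hps) hu
    have happly : ∀ v, (∑' n, f' n p) v = ∑' n, f' n p v := fun v =>
      (ContinuousLinearMap.apply ℝ ℍ[ℝ] v).map_tsum hsum
    have hsumv : ∀ v, Summable (fun n => f' n p v) := fun v =>
      hsum.map (ContinuousLinearMap.apply ℝ ℍ[ℝ] v).toLinearMap.toAddMonoidHom
        (ContinuousLinearMap.apply ℝ ℍ[ℝ] v).continuous
    rw [happly (1,0), happly (0,1)]
    have h3 : I * ∑' n, f' n p (0,1) = ∑' n, I * f' n p (0,1) :=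
      (ContinuousLinearMap.mul ℝ ℍ[ℝ] I).map_tsum (hsumv (0,1))
    rw [h3, ← Summable.tsum_add (hsumv (1,0)) ((hsumv (0,1)).mul_left I)]
    have hterm : ∀ n : ℕ, f' n p (1,0) + I * f' n p (0,1) = 0 := by
      intro n
      rw [hf'apply, hf'apply]
      have e1 : L (1,0) = 1 := by rw [hL]; simp
      have e2 : L (0,1) = I := by rw [hL]; simp
      rw [e1, e2, mul_one]
      have hc : Commute I ((L p) ^ (n-1)) := (sliceL_comm_I I p).pow_right _
      have hneg : I * ((L p) ^ (n-1) * I * a n) = -((L p) ^ (n-1) * a n) := by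
        rw [← mul_assoc, ← mul_assoc, hc.eq, mul_assoc _ I I, hI2, mul_neg_one, neg_mul]
      rw [← Nat.cast_smul_eq_nsmul ℝ, ← Nat.cast_smul_eq_nsmul ℝ, mul_smul_comm, hneg,
        smul_neg, add_neg_cancel]
    calc ∑' n : ℕ, (f' n p (1,0) + I * f' n p (0,1)) = ∑' _ : ℕ, (0:ℍ[ℝ]) :=
          tsum_congr hterm
      _ = 0 := tsum_zero
end
end

section
/- Let Ω ⊆ ℍ be a domain (open connected set) and let f : Ω → ℍ. Then f is slice regular if and only if f is σ-analytic, i.e. for every q₀ ∈ Ω there exist R > 0 and a sequence (a_n)_{n∈ℕ} of quaternions such that for every q ∈ Ω with σ(q,q₀) < R the series Σ_{n∈ℕ} (q−q₀)^{*n} a_n converges and equals f(q). -/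
open Quaternion Filter Topology

noncomputable section

/-- `Im p` and `Im q` are ℝ-linearly dependent, i.e. `p` and `q` lie on a common
complex plane `L_I`. -/
def SameSlice (q p : ℍ[ℝ]) : Prop :=
  ∃ c d : ℝ, (c, d) ≠ 0 ∧ c • q.im + d • p.im = 0

open scoped Classical in
/-- The distance `σ`. -/
def qsigma (q p : ℍ[ℝ]) : ℝ :=
  if SameSlice q p then ‖q - p‖
  else Real.sqrt ((q.re - p.re) ^ 2 + (‖q.im‖ + ‖p.im‖) ^ 2)

/-- The `n`-th `*`-power `(q - q₀)^{*n} = Σ_{k=0}^{n} (n choose k) q^k (-q₀)^{n-k}`. -/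
def starPow (q q0 : ℍ[ℝ]) (n : ℕ) : ℍ[ℝ] :=
  ∑ k ∈ Finset.range (n + 1), (n.choose k : ℝ) • (q ^ k * (-q0) ^ (n - k))

namespace SigAux

lemma normSq_eq (a : ℍ[ℝ]) : (normSq a : ℝ) = ‖a‖ ^ 2 := by
  rw [Quaternion.normSq_eq_norm_mul_self, sq]

lemma norm_of_unit {I : ℍ[ℝ]} (hI : I * I = -1) : ‖I‖ = 1 := by
  have h : ‖I‖ * ‖I‖ = 1 := by
    rw [← norm_mul, hI]; simp
  nlinarith [norm_nonneg I]

lemma re_of_unit {I : ℍ[ℝ]} (hI : I * I = -1) : I.re = 0 := by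
  have h1 : I * (star I + I) = ((normSq I - 1 : ℝ) : ℍ[ℝ]) := by
    rw [mul_add, Quaternion.self_mul_star, hI]
    push_cast
    rw [sub_eq_add_neg]
  rw [Quaternion.star_add_self'] at h1
  by_contra hre
  have h3 : (2 * I.re : ℝ) ≠ 0 := by simpa using hre
  have h2 : I = (((normSq I - 1) / (2 * I.re) : ℝ) : ℍ[ℝ]) := by
    rw [Quaternion.mul_coe_eq_smul] at h1
    have h4 : I = (2 * I.re)⁻¹ • ((normSq I - 1 : ℝ) : ℍ[ℝ]) := by
      rw [← h1, smul_smul, inv_mul_cancel₀ h3, one_smul]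
    rw [Quaternion.smul_coe] at h4
    rw [div_eq_inv_mul]
    exact h4
  set r := ((normSq I - 1) / (2 * I.re) : ℝ) with hr
  rw [h2, ← Quaternion.coe_mul] at hI
  have h4 : r * r = -1 := by
    rwa [show (-1 : ℍ[ℝ]) = ((-1 : ℝ) : ℍ[ℝ]) by norm_cast,
      Quaternion.coe_inj] at hI
  nlinarith

lemma unit_iff_QS {I : ℍ[ℝ]} : I ∈ QS ↔ I * I = -1 := by
  simp [QS, sq]

end SigAux
namespace SigAux

/-- The embedding `ℂ → ℍ` sending `i` to `I`. -/
def phi (I : ℍ[ℝ]) (hI : I * I = -1) : ℂ →ₐ[ℝ] ℍ[ℝ] := Complex.liftAux I hI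

lemma phi_apply (I : ℍ[ℝ]) (hI : I * I = -1) (z : ℂ) :
    phi I hI z = ((z.re : ℝ) : ℍ[ℝ]) + z.im • I := by
  rw [phi, Complex.liftAux_apply]
  rfl

lemma norm_phi (I : ℍ[ℝ]) (hI : I * I = -1) (z : ℂ) : ‖phi I hI z‖ = ‖z‖ := by
  have hre := re_of_unit hI
  have hns : normSq I = 1 := by
    have := normSq_eq I
    rw [norm_of_unit hI] at this
    simpa using this
  have hns' : I.imI ^ 2 + I.imJ ^ 2 + I.imK ^ 2 = 1 := by
    have := hns
    rw [Quaternion.normSq_def', hre] at this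
    linarith
  have h1 : ‖phi I hI z‖ ^ 2 = ‖z‖ ^ 2 := by
    rw [← normSq_eq, phi_apply]
    have h2 : normSq (((z.re : ℝ) : ℍ[ℝ]) + z.im • I) = z.re ^ 2 + z.im ^ 2 := by
      rw [Quaternion.normSq_def']
      simp only [Quaternion.re_add, Quaternion.imI_add, Quaternion.imJ_add,
        Quaternion.imK_add, Quaternion.re_coe, Quaternion.imI_coe,
        Quaternion.imJ_coe, Quaternion.imK_coe, Quaternion.re_smul,
        Quaternion.imI_smul, Quaternion.imJ_smul, Quaternion.imK_smul,
        smul_eq_mul, hre, mul_zero, add_zero]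
      nlinarith [hns']
    rw [h2, Complex.sq_norm, Complex.normSq_apply]
    ring
  exact (pow_left_inj₀ (norm_nonneg _) (norm_nonneg _) two_ne_zero).mp h1

end SigAux
namespace SigAux

/-- `ℍ` as a left `ℂ`-module via `phi`. -/
def qMod (I : ℍ[ℝ]) (hI : I * I = -1) : Module ℂ ℍ[ℝ] :=
  Module.compHom ℍ[ℝ] (phi I hI).toRingHom

lemma qMod_smul (I : ℍ[ℝ]) (hI : I * I = -1) (z : ℂ) (a : ℍ[ℝ]) :
    (letI := qMod I hI; z • a) = phi I hI z * a := rfl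

/-- `ℍ` as a complex normed space via `phi`. -/
def qNS (I : ℍ[ℝ]) (hI : I * I = -1) :
    @NormedSpace ℂ ℍ[ℝ] _ _ := by
  letI := qMod I hI
  exact @NormedSpace.mk ℂ ℍ[ℝ] _ _ _ (by
    intro z a
    rw [qMod_smul, norm_mul, norm_phi])

lemma qNS_smul (I : ℍ[ℝ]) (hI : I * I = -1) (z : ℂ) (a : ℍ[ℝ]) :
    (letI := qNS I hI; z • a) = phi I hI z * a := rfl

def qTower (I : ℍ[ℝ]) (hI : I * I = -1) :
    @IsScalarTower ℝ ℂ ℍ[ℝ] _ (qNS I hI).toModule.toSMul _ := by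
  letI := qNS I hI
  constructor
  intro r z a
  show phi I hI (r • z) * a = r • (phi I hI z * a)
  rw [map_smul, smul_mul_assoc]

end SigAux
namespace SigAux

lemma erp_apply (w : ℂ) : Complex.equivRealProdCLM w = (w.re, w.im) := by
  have : Complex.equivRealProdCLM.symm (w.re, w.im) = w := by
    rw [Complex.equivRealProdCLM_symm_apply]
    simp [Complex.re_add_im]
  exact (Complex.equivRealProdCLM.symm_apply_eq.mp this).symm

lemma sliceFun_eq_comp (f : ℍ[ℝ] → ℍ[ℝ]) (I : ℍ[ℝ]) :
    sliceFun f I = (fun w : ℂ => f (((w.re : ℝ) : ℍ[ℝ]) + w.im • I)) ∘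
      (Complex.equivRealProdCLM.symm : ℝ × ℝ → ℂ) := by
  funext p
  simp only [Function.comp_apply, Complex.equivRealProdCLM_symm_apply, sliceFun]
  norm_num

lemma g_eq_comp (f : ℍ[ℝ] → ℍ[ℝ]) (I : ℍ[ℝ]) :
    (fun w : ℂ => f (((w.re : ℝ) : ℍ[ℝ]) + w.im • I)) =
      (sliceFun f I) ∘ (Complex.equivRealProdCLM : ℂ → ℝ × ℝ) := by
  funext w
  simp only [Function.comp_apply, erp_apply, sliceFun]

lemma basis_decomp (D : ℝ × ℝ →L[ℝ] ℍ[ℝ]) (w : ℂ) :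
    D (w.re, w.im) = w.re • D (1, 0) + w.im • D (0, 1) := by
  have : ((w.re, w.im) : ℝ × ℝ) = w.re • ((1,0) : ℝ × ℝ) + w.im • ((0,1) : ℝ × ℝ) := by
    simp [Prod.ext_iff]
  rw [this, map_add, map_smul, map_smul]

lemma diffAt_of_slice {f : ℍ[ℝ] → ℍ[ℝ]} {I : ℍ[ℝ]} (hI : I * I = -1) {z : ℂ}
    (hd : DifferentiableAt ℝ (sliceFun f I) (z.re, z.im))
    (hcr : fderiv ℝ (sliceFun f I) (z.re, z.im) (1, 0)
      + I * fderiv ℝ (sliceFun f I) (z.re, z.im) (0, 1) = 0) :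
    @DifferentiableAt ℂ _ ℂ _ _ _ ℍ[ℝ] _ (qNS I hI).toModule _
      (fun w : ℂ => f (((w.re : ℝ) : ℍ[ℝ]) + w.im • I)) z := by
  letI := qNS I hI
  letI := qTower I hI
  set D := fderiv ℝ (sliceFun f I) (z.re, z.im) with hDdef
  set d := D (1, 0) with hd10
  have hD01 : D (0, 1) = I * d := by
    have h1 : I * (d + I * D (0, 1)) = 0 := by rw [hcr, mul_zero]
    rw [mul_add, ← mul_assoc, hI, neg_one_mul] at h1
    exact (sub_eq_zero.mp (by rw [sub_eq_add_neg]; exact h1)).symm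
  have hce : HasFDerivAt (⇑Complex.equivRealProdCLM)
      (Complex.equivRealProdCLM : ℂ →L[ℝ] ℝ × ℝ) z :=
    Complex.equivRealProdCLM.toContinuousLinearMap.hasFDerivAt
  have hgR : HasFDerivAt (fun w : ℂ => f (((w.re : ℝ) : ℍ[ℝ]) + w.im • I))
      (D.comp (Complex.equivRealProdCLM : ℂ →L[ℝ] ℝ × ℝ)) z := by
    rw [g_eq_comp f I]
    have h2 : HasFDerivAt (sliceFun f I) D (Complex.equivRealProdCLM z) := by
      rw [erp_apply]; exact hd.hasFDerivAt
    exact h2.comp z hce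
  set M : ℂ →L[ℂ] ℍ[ℝ] := (ContinuousLinearMap.id ℂ ℂ).smulRight d with hM
  have hres : M.restrictScalars ℝ = D.comp (Complex.equivRealProdCLM : ℂ →L[ℝ] ℝ × ℝ) := by
    apply ContinuousLinearMap.ext
    intro w
    have hlhs : M w = w • d := rfl
    have h3 : (w • d : ℍ[ℝ]) = w.re • d + w.im • (I * d) := by
      rw [qNS_smul, phi_apply, add_mul, Quaternion.coe_mul_eq_smul, smul_mul_assoc]
    show M w = D (Complex.equivRealProdCLM w)
    rw [hlhs, h3, erp_apply, basis_decomp D w, hD01]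
  exact (hasFDerivAt_of_restrictScalars ℝ hgR hres).differentiableAt

lemma slice_of_diffAt {f : ℍ[ℝ] → ℍ[ℝ]} {I : ℍ[ℝ]} (hI : I * I = -1) {z : ℂ}
    (h : @DifferentiableAt ℂ _ ℂ _ _ _ ℍ[ℝ] _ (qNS I hI).toModule _
      (fun w : ℂ => f (((w.re : ℝ) : ℍ[ℝ]) + w.im • I)) z) :
    DifferentiableAt ℝ (sliceFun f I) (z.re, z.im) ∧
      fderiv ℝ (sliceFun f I) (z.re, z.im) (1, 0)
        + I * fderiv ℝ (sliceFun f I) (z.re, z.im) (0, 1) = 0 := by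
  letI := qNS I hI
  letI := qTower I hI
  set M := @fderiv ℂ _ ℂ _ _ _ ℍ[ℝ] _ (qNS I hI).toModule _
      (fun w : ℂ => f (((w.re : ℝ) : ℍ[ℝ]) + w.im • I)) z with hMdef
  have hM : HasFDerivAt (fun w : ℂ => f (((w.re : ℝ) : ℍ[ℝ]) + w.im • I)) M z :=
    h.hasFDerivAt
  have hR := hM.restrictScalars ℝ
  have hes : HasFDerivAt (⇑Complex.equivRealProdCLM.symm)
      (Complex.equivRealProdCLM.symm : ℝ × ℝ →L[ℝ] ℂ) ((z.re, z.im) : ℝ × ℝ) :=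
    Complex.equivRealProdCLM.symm.toContinuousLinearMap.hasFDerivAt
  have hval : Complex.equivRealProdCLM.symm ((z.re, z.im) : ℝ × ℝ) = z := by
    rw [Complex.equivRealProdCLM_symm_apply]; simp [Complex.re_add_im]
  have hsl : HasFDerivAt (sliceFun f I)
      ((M.restrictScalars ℝ).comp (Complex.equivRealProdCLM.symm : ℝ × ℝ →L[ℝ] ℂ))
      (z.re, z.im) := by
    rw [sliceFun_eq_comp f I]
    refine HasFDerivAt.comp _ ?_ hes
    rw [hval]; exact hR
  constructor
  · exact hsl.differentiableAt
  · rw [hsl.fderiv]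
    have he1 : Complex.equivRealProdCLM.symm ((1, 0) : ℝ × ℝ) = 1 := by
      rw [Complex.equivRealProdCLM_symm_apply]; simp
    have he2 : Complex.equivRealProdCLM.symm ((0, 1) : ℝ × ℝ) = Complex.I := by
      rw [Complex.equivRealProdCLM_symm_apply]; simp
    have hMI : M Complex.I = I * M 1 := by
      have h5 : (Complex.I : ℂ) = Complex.I • (1 : ℂ) := by simp
      rw [h5, map_smul, qNS_smul, phi]
      rw [Complex.liftAux_apply_I]
    show M (Complex.equivRealProdCLM.symm (1, 0))
        + I * M (Complex.equivRealProdCLM.symm (0, 1)) = 0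
    rw [he1, he2, hMI, ← mul_assoc, hI, neg_one_mul, add_neg_cancel]

end SigAux
namespace SigAux

lemma starPow_eq {q q0 : ℍ[ℝ]} (h : Commute q q0) (n : ℕ) :
    starPow q q0 n = (q - q0) ^ n := by
  rw [sub_eq_add_neg, (h.neg_right.add_pow n), starPow]
  apply Finset.sum_congr rfl
  intro k hk
  rw [mul_assoc, show ((n.choose k : ℕ) : ℍ[ℝ]) = (((n.choose k : ℕ) : ℝ) : ℍ[ℝ]) by norm_cast, Quaternion.mul_coe_eq_smul, mul_smul_comm]

lemma slice_hasSum {f : ℍ[ℝ] → ℍ[ℝ]} {Ω : Set ℍ[ℝ]} (hf : SliceRegularOn f Ω)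
    {I : ℍ[ℝ]} (hI : I * I = -1) {z0 : ℂ} {r : NNReal} (hr : 0 < r)
    (hball : ∀ z : ℂ, z ∈ Metric.closedBall z0 (r : ℝ) → phi I hI z ∈ Ω) :
    ∃ c : ℕ → ℍ[ℝ],
      (∀ z : ℂ, dist z z0 < (r : ℝ) →
        Tendsto (fun N => ∑ n ∈ Finset.range N, (phi I hI z - phi I hI z0) ^ n * c n)
          atTop (𝓝 (f (phi I hI z)))) ∧
      (∀ t : ℝ, |t| < (r : ℝ) →
        HasSum (fun n => t ^ n • c n) (f (phi I hI (z0 + t)))) := by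
  letI := qNS I hI
  letI := qTower I hI
  set g : ℂ → ℍ[ℝ] := fun w => f (((w.re : ℝ) : ℍ[ℝ]) + w.im • I) with hg
  have hgphi : ∀ w : ℂ, g w = f (phi I hI w) := by
    intro w; rw [phi_apply]
  have hdiff : DifferentiableOn ℂ g (Metric.closedBall z0 (r : ℝ)) := by
    intro z hz
    apply DifferentiableAt.differentiableWithinAt
    have hmem : ((z.re : ℝ) : ℍ[ℝ]) + z.im • I ∈ Ω := by
      have h1 := hball z hz
      rwa [phi_apply] at h1
    obtain ⟨h1, h2⟩ := hf I (unit_iff_QS.mpr hI) (z.re, z.im) hmem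
    exact diffAt_of_slice hI h1 h2
  have hps : HasFPowerSeriesOnBall g (cauchyPowerSeries g z0 r) z0 r :=
    hdiff.hasFPowerSeriesOnBall hr
  set p := cauchyPowerSeries g z0 r with hp
  refine ⟨fun n => p.coeff n, ?_, ?_⟩
  · intro z hz
    have hzmem : z ∈ Metric.eball z0 (r : ENNReal) := by
      rw [Metric.emetric_ball_nnreal]
      exact hz
    have hsum := hps.hasSum_sub hzmem
    have h4 : (fun n => p n fun _ => z - z0) =
        fun n => (phi I hI z - phi I hI z0) ^ n * p.coeff n := by
      funext n
      rw [p.apply_eq_pow_smul_coeff, qNS_smul, map_pow, map_sub]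
    rw [h4] at hsum
    have h5 := hsum.tendsto_sum_nat
    rwa [hgphi] at h5
  · intro t ht
    have hzmem : z0 + (t : ℂ) ∈ Metric.eball z0 (r : ENNReal) := by
      rw [Metric.emetric_ball_nnreal, Metric.mem_ball, dist_eq_norm]
      simpa using ht
    have hsum := hps.hasSum_sub hzmem
    have h4 : (fun n => p n fun _ => z0 + (t : ℂ) - z0) = fun n => t ^ n • p.coeff n := by
      funext n
      rw [p.apply_eq_pow_smul_coeff]
      have h6 : (z0 + (t : ℂ) - z0) = ((t : ℝ) : ℂ) := by ring
      rw [h6, ← Complex.ofReal_pow, qNS_smul, phi_apply]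
      simp only [Complex.ofReal_re, Complex.ofReal_im, zero_smul, add_zero]
      rw [Quaternion.coe_mul_eq_smul]
    rw [h4] at hsum
    rwa [hgphi] at hsum

lemma coeff_unique {c d : ℕ → ℍ[ℝ]} {S : ℝ → ℍ[ℝ]} {r : ℝ} (hr : 0 < r)
    (hc : ∀ t : ℝ, |t| < r → HasSum (fun n => t ^ n • c n) (S t))
    (hd : ∀ t : ℝ, |t| < r → HasSum (fun n => t ^ n • d n) (S t)) : c = d := by
  have key : ∀ e : ℕ → ℍ[ℝ], (∀ t : ℝ, |t| < r → HasSum (fun n => t ^ n • e n) (S t)) →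
      HasFPowerSeriesAt S
        (fun n => ContinuousMultilinearMap.mkPiRing ℝ (Fin n) (e n)) 0 := by
    intro e he
    set P : FormalMultilinearSeries ℝ ℝ ℍ[ℝ] :=
      (fun n => ContinuousMultilinearMap.mkPiRing ℝ (Fin n) (e n) :
        FormalMultilinearSeries ℝ ℝ ℍ[ℝ]) with hP
    show HasFPowerSeriesAt S P 0
    have happ : ∀ (n : ℕ) (t : ℝ), (P n fun _ => t) = t ^ n • e n := by
      intro n t
      rw [P.apply_eq_pow_smul_coeff]
      congr 1
      rw [hP]
      simp [FormalMultilinearSeries.coeff, ContinuousMultilinearMap.mkPiRing_apply]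
    have hrad : ENNReal.ofReal (r / 2) ≤ P.radius := by
      have hb : Tendsto (fun n => (r / 2) ^ n • e n) atTop (𝓝 0) :=
        (he (r / 2) (by rw [abs_of_pos (by linarith)]; linarith)).summable.tendsto_atTop_zero
      have hb2 : Tendsto (fun n => ‖P n‖ * (r / 2) ^ n) atTop (𝓝 0) := by
        have h7 : (fun n => ‖P n‖ * (r / 2) ^ n) = fun n => ‖(r / 2) ^ n • e n‖ := by
          funext n
          rw [norm_smul, ContinuousMultilinearMap.norm_mkPiRing]
          rw [Real.norm_eq_abs, abs_of_nonneg (by positivity), mul_comm]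
        rw [h7]
        simpa using hb.norm
      obtain ⟨C, hC⟩ := hb2.bddAbove_range
      have h8 : (((r / 2).toNNReal : ℝ)) = r / 2 := Real.coe_toNNReal _ (by linarith)
      have h9 := P.le_radius_of_bound C (r := (r / 2).toNNReal) (by
        intro n
        rw [h8]
        exact hC (Set.mem_range_self n))
      simpa [ENNReal.ofReal] using h9
    refine ⟨ENNReal.ofReal (r / 2), ⟨hrad, ENNReal.ofReal_pos.mpr (by linarith), ?_⟩⟩
    intro y hy
    rw [mem_emetric_ball_zero_iff, ← ofReal_norm] at hy
    have hy2 : |y| < r := by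
      have h10 := (ENNReal.ofReal_lt_ofReal_iff_of_nonneg (norm_nonneg y)).mp hy
      rw [Real.norm_eq_abs] at h10
      linarith
    have := he y hy2
    rw [zero_add]
    have hfe : (fun n => P n fun _ => y) = fun n => y ^ n • e n := funext fun n => happ n y
    rw [hfe]
    exact this
  have h1 := key c hc
  have h2 := key d hd
  have h3 := h1.eq_formalMultilinearSeries h2
  funext n
  have h4 := congrFun h3 n
  have h5 := congrArg (fun (m : ContinuousMultilinearMap ℝ (fun _ : Fin n => ℝ) ℍ[ℝ]) =>
    m fun _ => (1 : ℝ)) h4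
  simpa using h5

end SigAux
namespace SigAux

def iq : ℍ[ℝ] := ⟨0, 1, 0, 0⟩

lemma iq_unit : iq * iq = -1 := by
  show (⟨0, 1, 0, 0⟩ : ℍ[ℝ]) * ⟨0, 1, 0, 0⟩ = -1
  ext <;> simp [iq, Quaternion.re_mul, Quaternion.imI_mul, Quaternion.imJ_mul,
    Quaternion.imK_mul]

lemma pure_unit {v : ℍ[ℝ]} (hv : v.re = 0) (hnv : ‖v‖ = 1) : v * v = -1 := by
  have h3 : v.im = v := by
    conv_rhs => rw [← Quaternion.re_add_im v]
    rw [hv]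
    simp
  have h2 := Quaternion.im_sq (a := v)
  rw [h3] at h2
  rw [← sq, h2, normSq_eq, hnv]
  norm_num

lemma norm_sq_decomp (q : ℍ[ℝ]) : ‖q‖ ^ 2 = q.re ^ 2 + ‖q.im‖ ^ 2 := by
  rw [← normSq_eq, ← normSq_eq, Quaternion.normSq_def', Quaternion.normSq_def',
    Quaternion.re_im, Quaternion.imI_im, Quaternion.imJ_im, Quaternion.imK_im]
  ring

end SigAux
namespace SigAux

lemma dist_phi (I : ℍ[ℝ]) (hI : I * I = -1) (z w : ℂ) :
    ‖phi I hI z - phi I hI w‖ = dist z w := by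
  rw [← map_sub, norm_phi, dist_eq_norm]

lemma commute_phi (I : ℍ[ℝ]) (hI : I * I = -1) (z w : ℂ) :
    Commute (phi I hI z) (phi I hI w) := by
  show _ = _
  rw [← map_mul, ← map_mul, mul_comm]

lemma forward {f : ℍ[ℝ] → ℍ[ℝ]} {Ω : Set ℍ[ℝ]} (hΩ : IsOpen Ω) (hf : SliceRegularOn f Ω)
    {q0 : ℍ[ℝ]} (hq0 : q0 ∈ Ω) :
    ∃ R > (0 : ℝ), ∃ a : ℕ → ℍ[ℝ], ∀ q ∈ Ω, qsigma q q0 < R →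
      Tendsto (fun N => ∑ n ∈ Finset.range N, starPow q q0 n * a n) atTop (𝓝 (f q)) := by
  obtain ⟨ε0, hε0, hball⟩ := Metric.isOpen_iff.mp hΩ q0 hq0
  set ε := ε0 / 3 with hεdef
  have hεpos : 0 < ε := by positivity
  set r : NNReal := (2 * ε).toNNReal with hrdef
  have hrc : (r : ℝ) = 2 * ε := Real.coe_toNNReal _ (by linarith)
  have hrpos : 0 < r := Real.toNNReal_pos.mpr (by linarith)
  have hb : ∀ (I : ℍ[ℝ]) (hI : I * I = -1) (z0 : ℂ), phi I hI z0 = q0 →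
      ∀ z ∈ Metric.closedBall z0 (r : ℝ), phi I hI z ∈ Ω := by
    intro I hI z0 hz0 z hz
    apply hball
    rw [Metric.mem_ball, dist_eq_norm, ← hz0, dist_phi I hI z z0]
    rw [Metric.mem_closedBall, hrc] at hz
    linarith
  by_cases him : q0.im = 0
  · -- real center
    set z0 : ℂ := (q0.re : ℂ) with hz0def
    have hphi0 : ∀ (I : ℍ[ℝ]) (hI : I * I = -1), phi I hI z0 = q0 := by
      intro I hI
      rw [phi_apply]
      simp only [hz0def, Complex.ofReal_re, Complex.ofReal_im, zero_smul, add_zero]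
      conv_rhs => rw [← Quaternion.re_add_im q0, him, add_zero]
    have hex : ∀ (I : ℍ[ℝ]) (hI : I * I = -1), ∃ c : ℕ → ℍ[ℝ],
        (∀ z : ℂ, dist z z0 < (r : ℝ) →
          Tendsto (fun N => ∑ n ∈ Finset.range N,
            (phi I hI z - phi I hI z0) ^ n * c n)
            atTop (𝓝 (f (phi I hI z)))) ∧
        (∀ t : ℝ, |t| < (r : ℝ) →
          HasSum (fun n => t ^ n • c n) (f (phi I hI (z0 + t)))) := by
      intro I hI
      exact slice_hasSum hf hI hrpos (hb I hI z0 (hphi0 I hI))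
    choose c hc1 hc2 using hex
    set a : ℕ → ℍ[ℝ] := c iq iq_unit with hadef
    have hphit : ∀ (I : ℍ[ℝ]) (hI : I * I = -1) (t : ℝ),
        phi I hI (z0 + t) = ((q0.re + t : ℝ) : ℍ[ℝ]) := by
      intro I hI t
      rw [phi_apply]
      simp only [hz0def, Complex.add_re, Complex.ofReal_re, Complex.add_im,
        Complex.ofReal_im, zero_add, add_zero, zero_smul]
    have hcoef : ∀ (I : ℍ[ℝ]) (hI : I * I = -1), c I hI = a := by
      intro I hI
      refine coeff_unique (r := (r : ℝ)) (S := fun t => f ((q0.re + t : ℝ) : ℍ[ℝ]))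
        (by exact_mod_cast hrpos) ?_ ?_
      · intro t ht
        have := hc2 I hI t ht
        rwa [hphit I hI t] at this
      · intro t ht
        have := hc2 iq iq_unit t ht
        rwa [hphit iq iq_unit t] at this
    refine ⟨ε, hεpos, a, ?_⟩
    intro q hq hlt
    have hss : SameSlice q q0 := ⟨0, 1, by norm_num [Prod.ext_iff], by simp [him]⟩
    rw [qsigma, if_pos hss] at hlt
    have hrep : ∃ (I : ℍ[ℝ]) (hI : I * I = -1) (z : ℂ), phi I hI z = q := by
      by_cases hqim : q.im = 0
      · refine ⟨iq, iq_unit, (q.re : ℂ), ?_⟩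
        rw [phi_apply]
        simp only [Complex.ofReal_re, Complex.ofReal_im, zero_smul, add_zero]
        conv_rhs => rw [← Quaternion.re_add_im q, hqim, add_zero]
      · set I : ℍ[ℝ] := ‖q.im‖⁻¹ • q.im with hIdef
        have hre : I.re = 0 := by
          rw [hIdef, Quaternion.re_smul, Quaternion.re_im, smul_zero]
        have hnq : ‖q.im‖ ≠ 0 := norm_ne_zero_iff.mpr hqim
        have hnorm : ‖I‖ = 1 := by
          rw [hIdef, norm_smul, norm_inv, norm_norm, inv_mul_cancel₀ hnq]
        refine ⟨I, pure_unit hre hnorm, (q.re : ℂ) + ‖q.im‖ * Complex.I, ?_⟩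
        rw [phi_apply]
        simp only [Complex.add_re, Complex.ofReal_re, Complex.mul_re,
          Complex.ofReal_im, Complex.I_re, Complex.I_im, Complex.add_im,
          Complex.mul_im, mul_zero, mul_one, zero_mul, sub_zero, zero_add, add_zero]
        rw [hIdef, smul_smul, mul_inv_cancel₀ hnq, one_smul, Quaternion.re_add_im]
    obtain ⟨I, hI, z, hz1⟩ := hrep
    have hz0 := hphi0 I hI
    have hdist : dist z z0 = ‖q - q0‖ := by
      rw [← hz1, ← hz0, dist_phi]
    have hlt2 : dist z z0 < (r : ℝ) := by
      rw [hdist, hrc]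
      linarith
    have htd := hc1 I hI z hlt2
    have hcomm : Commute q q0 := by
      rw [← hz1, ← hz0]
      exact commute_phi I hI z z0
    have hfun : (fun N => ∑ n ∈ Finset.range N, (phi I hI z - phi I hI z0) ^ n * c I hI n)
        = fun N => ∑ n ∈ Finset.range N, starPow q q0 n * a n := by
      funext N
      apply Finset.sum_congr rfl
      intro n _
      rw [hz1, hz0, hcoef I hI, starPow_eq hcomm]
    rw [hfun, hz1] at htd
    exact htd
  · -- non-real center
    have hnq0 : ‖q0.im‖ ≠ 0 := norm_ne_zero_iff.mpr him
    have hnq0pos : 0 < ‖q0.im‖ := norm_pos_iff.mpr him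
    set I0 : ℍ[ℝ] := ‖q0.im‖⁻¹ • q0.im with hI0def
    have hre0 : I0.re = 0 := by
      rw [hI0def, Quaternion.re_smul, Quaternion.re_im, smul_zero]
    have hnorm0 : ‖I0‖ = 1 := by
      rw [hI0def, norm_smul, norm_inv, norm_norm, inv_mul_cancel₀ hnq0]
    have hI0 : I0 * I0 = -1 := pure_unit hre0 hnorm0
    have hsm0 : ‖q0.im‖ • I0 = q0.im := by
      rw [hI0def, smul_smul, mul_inv_cancel₀ hnq0, one_smul]
    set z0 : ℂ := (q0.re : ℂ) + ‖q0.im‖ * Complex.I with hz0def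
    have hz0re : z0.re = q0.re := by simp [hz0def]
    have hz0im : z0.im = ‖q0.im‖ := by simp [hz0def]
    have hphi0 : phi I0 hI0 z0 = q0 := by
      rw [phi_apply, hz0re, hz0im, hsm0, Quaternion.re_add_im]
    obtain ⟨c, hc1, hc2⟩ := slice_hasSum hf hI0 hrpos (hb I0 hI0 z0 hphi0)
    refine ⟨min ε (‖q0.im‖ / 2), lt_min hεpos (by linarith), c, ?_⟩
    intro q hq hlt
    have hss : SameSlice q q0 := by
      by_contra hcon
      rw [qsigma, if_neg hcon] at hlt
      have h1 : ‖q0.im‖ ≤ Real.sqrt ((q.re - q0.re) ^ 2 + (‖q.im‖ + ‖q0.im‖) ^ 2) := by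
        have h0 : ‖q0.im‖ ^ 2 ≤ (q.re - q0.re) ^ 2 + (‖q.im‖ + ‖q0.im‖) ^ 2 := by
          nlinarith [norm_nonneg q.im, sq_nonneg (q.re - q0.re)]
        calc ‖q0.im‖ = Real.sqrt (‖q0.im‖ ^ 2) := (Real.sqrt_sq (norm_nonneg _)).symm
          _ ≤ _ := Real.sqrt_le_sqrt h0
      have h2 : min ε (‖q0.im‖ / 2) ≤ ‖q0.im‖ / 2 := min_le_right _ _
      linarith
    rw [qsigma, if_pos hss] at hlt
    obtain ⟨cc, dd, hne, hlin⟩ := hss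
    have hcc : cc ≠ 0 := by
      intro h0
      rw [h0, zero_smul, zero_add] at hlin
      rcases smul_eq_zero.mp hlin with h | h
      · exact hne (by simp [Prod.ext_iff, h0, h])
      · exact him h
    set t : ℝ := -(cc⁻¹ * dd) with htdef
    have him2 : q.im = t • q0.im := by
      have h1 : cc • q.im = -(dd • q0.im) := eq_neg_of_add_eq_zero_left hlin
      have h2 : q.im = -((cc⁻¹ * dd) • q0.im) := by
        have h3 := congrArg (fun x => cc⁻¹ • x) h1
        simpa [smul_smul, inv_mul_cancel₀ hcc] using h3
      rw [htdef, neg_smul]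
      exact h2
    set z : ℂ := (q.re : ℂ) + (t * ‖q0.im‖) * Complex.I with hzdef
    have hphiz : phi I0 hI0 z = q := by
      rw [phi_apply]
      have hzre : z.re = q.re := by simp [hzdef]
      have hzim : z.im = t * ‖q0.im‖ := by simp [hzdef]
      rw [hzre, hzim, ← smul_smul, hsm0, ← him2, Quaternion.re_add_im]
    have hdist : dist z z0 = ‖q - q0‖ := by
      rw [← hphiz, ← hphi0, dist_phi]
    have hlt2 : dist z z0 < (r : ℝ) := by
      rw [hdist, hrc]
      have := min_le_left ε (‖q0.im‖ / 2)
      linarith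
    have htd := hc1 z hlt2
    have hcomm : Commute q q0 := by
      rw [← hphiz, ← hphi0]
      exact commute_phi I0 hI0 z z0
    have hfun : (fun N => ∑ n ∈ Finset.range N, (phi I0 hI0 z - phi I0 hI0 z0) ^ n * c n)
        = fun N => ∑ n ∈ Finset.range N, starPow q q0 n * c n := by
      funext N
      apply Finset.sum_congr rfl
      intro n _
      rw [hphiz, hphi0, starPow_eq hcomm]
    rw [hfun, hphiz] at htd
    exact htd

end SigAux
namespace SigAux

lemma backward {f : ℍ[ℝ] → ℍ[ℝ]} {Ω : Set ℍ[ℝ]} (hΩ : IsOpen Ω)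
    (H : ∀ q0 ∈ Ω, ∃ R > (0 : ℝ), ∃ a : ℕ → ℍ[ℝ], ∀ q ∈ Ω, qsigma q q0 < R →
      Tendsto (fun N => ∑ n ∈ Finset.range N, starPow q q0 n * a n) atTop (𝓝 (f q))) :
    SliceRegularOn f Ω := by
  intro I hIQS p hp
  have hI : I * I = -1 := unit_iff_QS.mp hIQS
  letI := qNS I hI
  letI := qTower I hI
  have hre : I.re = 0 := re_of_unit hI
  have hIim : I.im = I := by
    conv_rhs => rw [← Quaternion.re_add_im I]
    rw [hre]
    simp
  set q0 : ℍ[ℝ] := (p.1 : ℍ[ℝ]) + p.2 • I with hq0def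
  obtain ⟨R, hR, a, ha⟩ := H q0 hp
  set z0 : ℂ := (p.1 : ℂ) + (p.2 : ℂ) * Complex.I with hz0def
  have hz0re : z0.re = p.1 := by simp [hz0def]
  have hz0im : z0.im = p.2 := by simp [hz0def]
  have hphi0 : phi I hI z0 = q0 := by rw [phi_apply, hz0re, hz0im]
  obtain ⟨ε0, hε0, hball⟩ := Metric.isOpen_iff.mp hΩ q0 hp
  set u : ℝ := min ε0 R with hudef
  have hu : 0 < u := lt_min hε0 hR
  set g : ℂ → ℍ[ℝ] := fun w => f (((w.re : ℝ) : ℍ[ℝ]) + w.im • I) with hgdef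
  have hgphi : ∀ w : ℂ, g w = f (phi I hI w) := by
    intro w; rw [phi_apply]
  have hqim : ∀ z : ℂ, (phi I hI z).im = z.im • I := by
    intro z
    rw [phi_apply]
    rw [Quaternion.im_add, Quaternion.im_coe, Quaternion.im_smul, hIim, zero_add]
  have hconv : ∀ z : ℂ, dist z z0 < u →
      Tendsto (fun N => ∑ n ∈ Finset.range N, ((z - z0) ^ n • a n : ℍ[ℝ]))
        atTop (𝓝 (f (phi I hI z))) := by
    intro z hz
    have hmem : phi I hI z ∈ Ω := by
      apply hball
      rw [Metric.mem_ball, dist_eq_norm, ← hphi0, dist_phi I hI z z0]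
      exact lt_of_lt_of_le hz (min_le_left _ _)
    have hss : SameSlice (phi I hI z) q0 := by
      have h1 : q0.im = p.2 • I := by
        rw [← hphi0, hqim, hz0im]
      by_cases hp2 : p.2 = 0
      · exact ⟨0, 1, by norm_num [Prod.ext_iff], by simp [h1, hp2]⟩
      · refine ⟨p.2, -z.im, by simp [Prod.ext_iff, hp2], ?_⟩
        rw [hqim, h1, smul_smul, neg_smul, smul_smul, ← sub_eq_add_neg, ← sub_smul]
        rw [mul_comm, sub_self, zero_smul]
    have hsig : qsigma (phi I hI z) q0 < R := by
      rw [qsigma, if_pos hss, ← hphi0, dist_phi I hI z z0]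
      exact lt_of_lt_of_le hz (min_le_right _ _)
    have htd := ha (phi I hI z) hmem hsig
    have hcomm : Commute (phi I hI z) q0 := by
      rw [← hphi0]; exact commute_phi I hI z z0
    have hfun : (fun N => ∑ n ∈ Finset.range N, starPow (phi I hI z) q0 n * a n)
        = fun N => ∑ n ∈ Finset.range N, ((z - z0) ^ n • a n : ℍ[ℝ]) := by
      funext N
      apply Finset.sum_congr rfl
      intro n _
      rw [starPow_eq hcomm, ← hphi0, ← map_sub, ← map_pow, ← qNS_smul]
    rwa [hfun] at htd
  set P : FormalMultilinearSeries ℂ ℂ ℍ[ℝ] :=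
    (fun n => ContinuousMultilinearMap.mkPiRing ℂ (Fin n) (a n) :
      FormalMultilinearSeries ℂ ℂ ℍ[ℝ]) with hPdef
  have happ : ∀ (n : ℕ) (w : ℂ), (P n fun _ => w) = w ^ n • a n := by
    intro n w
    rw [P.apply_eq_pow_smul_coeff]
    congr 1
    rw [hPdef]
    simp [FormalMultilinearSeries.coeff, ContinuousMultilinearMap.mkPiRing_apply]
  have hterms : Tendsto (fun n => (((u / 2 : ℝ) : ℂ)) ^ n • a n) atTop (𝓝 (0 : ℍ[ℝ])) := by
    have hz1 : dist (z0 + ((u / 2 : ℝ) : ℂ)) z0 < u := by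
      rw [dist_eq_norm]
      simp only [add_sub_cancel_left]
      rw [Complex.norm_real, Real.norm_eq_abs, abs_of_pos (by linarith)]
      linarith
    have hN := hconv (z0 + ((u / 2 : ℝ) : ℂ)) hz1
    have hw : (z0 + ((u / 2 : ℝ) : ℂ)) - z0 = ((u / 2 : ℝ) : ℂ) := by ring
    rw [hw] at hN
    have hN1 := hN.comp (tendsto_add_atTop_nat 1)
    have hsub := hN1.sub hN
    rw [sub_self] at hsub
    have heq : (fun N => (∑ n ∈ Finset.range (N + 1), (((u / 2 : ℝ) : ℂ)) ^ n • a n)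
        - ∑ n ∈ Finset.range N, (((u / 2 : ℝ) : ℂ)) ^ n • a n)
        = fun N => (((u / 2 : ℝ) : ℂ)) ^ N • a N := by
      funext N
      rw [Finset.sum_range_succ, add_sub_cancel_left]
    rwa [← heq]
  have hrad : ENNReal.ofReal (u / 2) ≤ P.radius := by
    have hb2 : Tendsto (fun n => ‖P n‖ * (u / 2) ^ n) atTop (𝓝 0) := by
      have h7 : (fun n => ‖P n‖ * (u / 2) ^ n)
          = fun n => ‖(((u / 2 : ℝ) : ℂ)) ^ n • a n‖ := by
        funext n
        rw [norm_smul, ContinuousMultilinearMap.norm_mkPiRing, norm_pow,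
          Complex.norm_real, Real.norm_eq_abs, abs_of_nonneg (by positivity), mul_comm]
      rw [h7]
      simpa using hterms.norm
    obtain ⟨C, hC⟩ := hb2.bddAbove_range
    have h8 : (((u / 2).toNNReal : ℝ)) = u / 2 := Real.coe_toNNReal _ (by linarith)
    have h9 := P.le_radius_of_bound C (r := (u / 2).toNNReal) (by
      intro n
      rw [h8]
      exact hC (Set.mem_range_self n))
    simpa [ENNReal.ofReal] using h9
  have hps : HasFPowerSeriesOnBall g P z0 (ENNReal.ofReal (u / 2)) := by
    refine ⟨hrad, ENNReal.ofReal_pos.mpr (by linarith), ?_⟩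
    intro w hw
    rw [mem_emetric_ball_zero_iff, ← ofReal_norm] at hw
    have hw2 : ‖w‖ < u / 2 :=
      (ENNReal.ofReal_lt_ofReal_iff_of_nonneg (norm_nonneg w)).mp hw
    have hsum : HasSum (fun n => P n fun _ => w) (P.sum w) := by
      apply P.hasSum
      rw [mem_emetric_ball_zero_iff, ← ofReal_norm]
      exact lt_of_lt_of_le ((ENNReal.ofReal_lt_ofReal_iff_of_nonneg (norm_nonneg w)).mpr hw2) hrad
    have ht1 : Tendsto (fun N => ∑ n ∈ Finset.range N, (P n fun _ => w))
        atTop (𝓝 (P.sum w)) := hsum.tendsto_sum_nat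
    have ht2 : Tendsto (fun N => ∑ n ∈ Finset.range N, (P n fun _ => w))
        atTop (𝓝 (f (phi I hI (z0 + w)))) := by
      have hzw : dist (z0 + w) z0 < u := by
        rw [dist_eq_norm]
        simp only [add_sub_cancel_left]
        linarith
      have := hconv (z0 + w) hzw
      have hw3 : (z0 + w) - z0 = w := by ring
      rw [hw3] at this
      have hfun2 : (fun N => ∑ n ∈ Finset.range N, (P n fun _ => w))
          = fun N => ∑ n ∈ Finset.range N, (w ^ n • a n : ℍ[ℝ]) := by
        funext N
        exact Finset.sum_congr rfl fun n _ => happ n w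
      rw [hfun2]
      exact this
    have heq2 : P.sum w = f (phi I hI (z0 + w)) := tendsto_nhds_unique ht1 ht2
    rw [hgphi]
    rw [← heq2]
    exact hsum
  have hda : DifferentiableAt ℂ g z0 :=
    hps.hasFPowerSeriesAt.analyticAt.differentiableAt
  have hfin := slice_of_diffAt hI hda
  rw [hz0re, hz0im] at hfin
  simpa using hfin

end SigAux
/-- on a domain `Ω ⊆ ℍ`, a function is slice regular iff it is σ-analytic. -/
theorem sliceRegular_iff_sigma_analytic (Ω : Set ℍ[ℝ]) (hΩ : IsOpen Ω)
    (hconn : IsConnected Ω) (f : ℍ[ℝ] → ℍ[ℝ]) :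
    SliceRegularOn f Ω ↔
      ∀ q0 ∈ Ω, ∃ R > (0 : ℝ), ∃ a : ℕ → ℍ[ℝ], ∀ q ∈ Ω, qsigma q q0 < R →
        Filter.Tendsto (fun N => ∑ n ∈ Finset.range N, starPow q q0 n * a n)
          Filter.atTop (nhds (f q)) := by
  constructor
  · intro hf q0 hq0
    exact SigAux.forward hΩ hf hq0
  · intro H
    exact SigAux.backward hΩ H
end
end

section
/- Let q₀ = x₀ + I y₀ with x₀ ∈ ℝ, y₀ > 0, I ∈ 𝕊, and let 0 < R ≤ y₀. Then the σ-ball Σ(q₀,R) = {q ∈ ℍ : σ(q,q₀) < R} equals the two-dimensional disc {z ∈ L_I : |z−q₀| < R} in the complex plane L_I through q₀. -/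
/-! Off the slice `L_I`, `σ(q, q₀) ≥ |Im q₀| = y₀ ≥ R`, so the σ-ball lies in `L_I`, and there `σ` is
the Euclidean distance. -/

open Quaternion Filter Topology

noncomputable section

lemma norm_eq_one_of_mem_QS {I : ℍ[ℝ]} (hI : I ∈ QS) : ‖I‖ = 1 := by
  have h : ‖I‖ ^ 2 = 1 := by rw [← norm_pow, hI, norm_neg, norm_one]
  exact (pow_eq_one_iff_of_nonneg (norm_nonneg I) two_ne_zero).1 h

lemma re_eq_zero_of_mem_QS {I : ℍ[ℝ]} (hI : I ∈ QS) : I.re = 0 := by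
  have hnormSq : normSq I = 1 := by
    rw [normSq_eq_norm_mul_self, norm_eq_one_of_mem_QS hI, mul_one]
  rw [← sq_eq_neg_normSq, hnormSq]
  exact hI

lemma im_coe_add_smul {I : ℍ[ℝ]} (hI : I.re = 0) (x y : ℝ) :
    ((x : ℍ[ℝ]) + y • I).im = y • I := by
  have hIim : I.im = I := by simpa [hI] using re_add_im I
  rw [im_add, im_coe, zero_add, im_smul, hIim]

lemma exists_eq_coe_add_smul_iff {I : ℍ[ℝ]} (hI : I.re = 0) (z : ℍ[ℝ]) :
    (∃ a b : ℝ, z = a + b • I) ↔ ∃ b : ℝ, z.im = b • I := by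
  constructor
  · rintro ⟨a, b, rfl⟩
    exact ⟨b, im_coe_add_smul hI a b⟩
  · rintro ⟨b, hb⟩
    exact ⟨z.re, b, by rw [← hb, re_add_im]⟩

lemma sameSlice_iff_exists_im_eq_smul {q p : ℍ[ℝ]} (hp : p.im ≠ 0) :
    SameSlice q p ↔ ∃ t : ℝ, q.im = t • p.im := by
  constructor
  · rintro ⟨c, d, hcd, h⟩
    have hc : c ≠ 0 := by
      rintro rfl
      have hd : d ≠ 0 := fun hd => hcd (by simp [hd])
      simp [hd, hp] at h
    refine ⟨-d / c, smul_right_injective _ hc ?_⟩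
    show c • q.im = c • ((-d / c) • p.im)
    rw [smul_smul, mul_div_cancel₀ _ hc, neg_smul, eq_neg_iff_add_eq_zero]
    exact h
  · rintro ⟨t, ht⟩
    exact ⟨1, -t, by simp, by rw [ht, one_smul, neg_smul, add_neg_cancel]⟩

lemma sameSlice_coe_add_smul_iff {I : ℍ[ℝ]} (hI : I ∈ QS) (x : ℝ) {y : ℝ} (hy : y ≠ 0)
    (q : ℍ[ℝ]) : SameSlice q (x + y • I) ↔ ∃ a b : ℝ, q = a + b • I := by
  have hI0 : I ≠ 0 := norm_ne_zero_iff.1 (by simp [norm_eq_one_of_mem_QS hI])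
  have hre := re_eq_zero_of_mem_QS hI
  rw [sameSlice_iff_exists_im_eq_smul (by simp [im_coe_add_smul hre, hy, hI0]),
    im_coe_add_smul hre, exists_eq_coe_add_smul_iff hre]
  constructor
  · rintro ⟨t, ht⟩
    exact ⟨t * y, by rw [ht, smul_smul]⟩
  · rintro ⟨b, hb⟩
    exact ⟨b / y, by rw [hb, smul_smul, div_mul_cancel₀ _ hy]⟩

lemma qsigma_of_sameSlice {q p : ℍ[ℝ]} (h : SameSlice q p) : qsigma q p = ‖q - p‖ :=
  if_pos h

lemma norm_im_le_qsigma_of_not_sameSlice {q p : ℍ[ℝ]} (h : ¬SameSlice q p) :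
    ‖p.im‖ ≤ qsigma q p := by
  rw [qsigma, if_neg h]
  apply Real.le_sqrt_of_sq_le
  nlinarith [norm_nonneg q.im, norm_nonneg p.im, sq_nonneg (q.re - p.re)]

theorem sigma_ball_eq_disc_general (x0 y0 R : ℝ) (I : ℍ[ℝ]) (hI : I ∈ QS)
    (hy : 0 < y0) (hRy : R ≤ y0) :
    {q : ℍ[ℝ] | qsigma q ((x0 : ℍ[ℝ]) + y0 • I) < R} =
      {z : ℍ[ℝ] | (∃ a b : ℝ, z = (a : ℍ[ℝ]) + b • I) ∧
        ‖z - ((x0 : ℍ[ℝ]) + y0 • I)‖ < R} := by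
  ext q
  have hslice := sameSlice_coe_add_smul_iff hI x0 hy.ne' q
  by_cases hs : SameSlice q ((x0 : ℍ[ℝ]) + y0 • I)
  · simp only [Set.mem_ofPred_eq, qsigma_of_sameSlice hs, hslice.1 hs, true_and]
  · have hnorm_im : ‖((x0 : ℍ[ℝ]) + y0 • I).im‖ = y0 := by
      rw [im_coe_add_smul (re_eq_zero_of_mem_QS hI), norm_smul, norm_eq_one_of_mem_QS hI,
        mul_one, Real.norm_of_nonneg hy.le]
    have hfar := hnorm_im ▸ norm_im_le_qsigma_of_not_sameSlice hs
    simp only [Set.mem_ofPred_eq, ← hslice, hs, false_and, iff_false, not_lt]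
    exact hRy.trans hfar

/-- for `q₀ = x₀ + Iy₀` with `y₀ > 0` and `0 < R ≤ y₀`, the σ-ball
`Σ(q₀,R)` is the 2-dimensional disc of radius `R` around `q₀` in the plane `L_I`. -/
theorem sigma_ball_eq_disc (x0 y0 R : ℝ) (I : ℍ[ℝ]) (hI : I ∈ QS)
    (hy : 0 < y0) (hR : 0 < R) (hRy : R ≤ y0) :
    {q : ℍ[ℝ] | qsigma q ((x0 : ℍ[ℝ]) + y0 • I) < R} =
      {z : ℍ[ℝ] | (∃ a b : ℝ, z = (a : ℍ[ℝ]) + b • I) ∧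
        ‖z - ((x0 : ℍ[ℝ]) + y0 • I)‖ < R} :=
  sigma_ball_eq_disc_general x0 y0 R I hI hy hRy
end
end

section
/- Let f be a slice regular function on a symmetric slice domain Ω ⊆ ℍ, let x₀,y₀ ∈ ℝ and R > 0 be such that U(x₀+y₀𝕊, R) ⊆ Ω, and let q₀ ∈ x₀+y₀𝕊. Then there exists a sequence (A_n)_{n∈ℕ} of quaternions such that for every q ∈ U(x₀+y₀𝕊, R) the series Σ_{n∈ℕ} ((q−x₀)²+y₀²)^n (A_{2n} + (q−q₀)A_{2n+1}) converges and equals f(q). -/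
open Quaternion Filter Topology

noncomputable section

namespace SphExp

lemma qs_re_im {I : ℍ[ℝ]} (hI : I ∈ QS) : I.re = 0 ∧ normSq I = 1 := by
  have h : I * I = -1 := by rw [← pow_two]; exact hI
  have hre : (I * I).re = (-1 : ℍ[ℝ]).re := by rw [h]
  have h1 : (I * I).imI = (-1 : ℍ[ℝ]).imI := by rw [h]
  have h2 : (I * I).imJ = (-1 : ℍ[ℝ]).imJ := by rw [h]
  have h3 : (I * I).imK = (-1 : ℍ[ℝ]).imK := by rw [h]
  simp only [Quaternion.re_mul, Quaternion.imI_mul, Quaternion.imJ_mul, Quaternion.imK_mul,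
    Quaternion.re_neg, Quaternion.imI_neg, Quaternion.imJ_neg, Quaternion.imK_neg,
    Quaternion.re_coe, Quaternion.imI_coe, Quaternion.imJ_coe, Quaternion.imK_coe,
    Quaternion.re_one, Quaternion.imI_one, Quaternion.imJ_one, Quaternion.imK_one] at hre h1 h2 h3
  have hre0 : I.re = 0 := by nlinarith [sq_nonneg I.re, sq_nonneg I.imI, sq_nonneg I.imJ, sq_nonneg I.imK]
  refine ⟨hre0, ?_⟩
  rw [Quaternion.normSq_def']
  nlinarith [hre0]

lemma qs_mul_self {I : ℍ[ℝ]} (hI : I ∈ QS) : I * I = -1 := by rw [← pow_two]; exact hI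

lemma qs_norm {I : ℍ[ℝ]} (hI : I ∈ QS) : ‖I‖ = 1 := by
  have := (qs_re_im hI).2
  have h := Quaternion.normSq_eq_norm_mul_self I
  nlinarith [norm_nonneg I]

lemma qs_neg {I : ℍ[ℝ]} (hI : I ∈ QS) : -I ∈ QS := by
  simp only [QS, Set.mem_setOf_eq] at hI ⊢
  rw [neg_pow]; simp [hI]

/-- The embedding ℂ → ℍ determined by an imaginary unit `I`. -/
def emb (I : ℍ[ℝ]) (hI : I ∈ QS) : ℂ →ₐ[ℝ] ℍ[ℝ] := Complex.liftAux I (qs_mul_self hI)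

lemma emb_apply (I : ℍ[ℝ]) (hI : I ∈ QS) (z : ℂ) :
    emb I hI z = (z.re : ℍ[ℝ]) + z.im • I := by
  rw [emb, Complex.liftAux_apply]; rfl

lemma emb_norm (I : ℍ[ℝ]) (hI : I ∈ QS) (z : ℂ) : ‖emb I hI z‖ = ‖z‖ := by
  have h1 : normSq (emb I hI z) = z.re ^ 2 + z.im ^ 2 := by
    obtain ⟨hre, hsq⟩ := qs_re_im hI
    rw [emb_apply, Quaternion.normSq_def']
    rw [Quaternion.normSq_def'] at hsq
    simp only [Quaternion.re_add, Quaternion.imI_add, Quaternion.imJ_add, Quaternion.imK_add,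
      Quaternion.re_coe, Quaternion.imI_coe, Quaternion.imJ_coe, Quaternion.imK_coe,
      Quaternion.re_smul, Quaternion.imI_smul, Quaternion.imJ_smul, Quaternion.imK_smul,
      smul_eq_mul, hre]
    rw [hre] at hsq
    linear_combination (z.im ^ 2) * hsq
  have h2 := Quaternion.normSq_eq_norm_mul_self (emb I hI z)
  have h3 : ‖z‖ * ‖z‖ = z.re ^ 2 + z.im ^ 2 := by
    rw [show ‖z‖ * ‖z‖ = ‖z‖ ^ 2 by ring, Complex.sq_norm,
      Complex.normSq_apply]; ring
  nlinarith [norm_nonneg (emb I hI z), norm_nonneg z]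

end SphExp

namespace SphExp2
open SphExp

/-- complex normed-space structure on ℍ induced by imaginary unit I (left multiplication) -/
def qNS (I : ℍ[ℝ]) (hI : I ∈ QS) : NormedSpace ℂ ℍ[ℝ] :=
  letI : Module ℂ ℍ[ℝ] := Module.compHom ℍ[ℝ] (emb I hI).toRingHom
  { norm_smul_le := fun c q => by
      have h : c • q = emb I hI c * q := rfl
      rw [h, norm_mul, emb_norm] }

def qTower (I : ℍ[ℝ]) (hI : I ∈ QS) :
    letI := qNS I hI; IsScalarTower ℝ ℂ ℍ[ℝ] := by
  letI := qNS I hI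
  constructor
  intro r c q
  show emb I hI (r • c) * q = r • (emb I hI c * q)
  rw [map_smul, smul_mul_assoc]

lemma holo_of_CR (J : ℍ[ℝ]) (hJ : J ∈ QS) (g : ℂ → ℍ[ℝ]) (z : ℂ) (L : ℂ →L[ℝ] ℍ[ℝ])
    (hL : HasFDerivAt g L z) (hcr : L Complex.I = J * L 1) :
    @DifferentiableAt ℂ _ ℂ _ _ _ ℍ[ℝ] _ (qNS J hJ).toModule _ g z := by
  letI := qNS J hJ
  letI := qTower J hJ
  have hsmul : ∀ (c : ℂ) (q : ℍ[ℝ]), c • q = emb J hJ c * q := fun c q => rfl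
  let Lc : ℂ →L[ℂ] ℍ[ℝ] := LinearMap.mkContinuous
    { toFun := fun c => c • (L 1)
      map_add' := fun a b => add_smul a b _
      map_smul' := fun a c => by simp [mul_smul] }
    ‖L 1‖ (fun c => by
      show ‖c • L 1‖ ≤ ‖L 1‖ * ‖c‖
      rw [hsmul, norm_mul, emb_norm, mul_comm])
  have hre : Lc.restrictScalars ℝ = L := by
    apply ContinuousLinearMap.ext
    intro c
    have h0 : (Lc.restrictScalars ℝ) c = emb J hJ c * L 1 := rfl
    rw [h0, emb_apply]
    rw [add_mul, Quaternion.coe_mul_eq_smul, smul_mul_assoc, ← hcr]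
    rw [← map_smul, ← map_smul, ← map_add]
    congr 1
    rw [Complex.real_smul, Complex.real_smul, mul_one, Complex.re_add_im]
  exact (hasFDerivAt_of_restrictScalars ℝ hL hre).differentiableAt

lemma u_deriv {f : ℍ[ℝ] → ℍ[ℝ]} {Ω : Set ℍ[ℝ]} (hf : SliceRegularOn f Ω) {I : ℍ[ℝ]}
    (hI : I ∈ QS) {z : ℂ} (hz : emb I hI z ∈ Ω) :
    ∃ L : ℂ →L[ℝ] ℍ[ℝ], HasFDerivAt (fun w => f (emb I hI w)) L z ∧
      L Complex.I = I * L 1 := by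
  have hmem : ((z.re : ℍ[ℝ]) + z.im • I) ∈ Ω := by rwa [emb_apply] at hz
  obtain ⟨hd, hcr⟩ := hf I hI (z.re, z.im) hmem
  set D := fderiv ℝ (sliceFun f I) (z.re, z.im) with hD
  have hDd : HasFDerivAt (sliceFun f I) D (z.re, z.im) := hd.hasFDerivAt
  have he : HasFDerivAt (fun w : ℂ => ((w.re, w.im) : ℝ × ℝ))
      (Complex.equivRealProdCLM : ℂ →L[ℝ] ℝ × ℝ) z := by
    have := (Complex.equivRealProdCLM : ℂ ≃L[ℝ] ℝ × ℝ).hasFDerivAt (x := z)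
    exact this
  have hcomp : HasFDerivAt (fun w => f (emb I hI w))
      (D.comp (Complex.equivRealProdCLM : ℂ →L[ℝ] ℝ × ℝ)) z := by
    have h2 := hDd.comp z he
    exact h2
  refine ⟨D.comp (Complex.equivRealProdCLM : ℂ →L[ℝ] ℝ × ℝ), hcomp, ?_⟩
  have e1 : (Complex.equivRealProdCLM : ℂ →L[ℝ] ℝ × ℝ) 1 = ((1 : ℝ), (0 : ℝ)) := by
    simp
  have eI : (Complex.equivRealProdCLM : ℂ →L[ℝ] ℝ × ℝ) Complex.I = ((0 : ℝ), (1 : ℝ)) := by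
    simp
  rw [ContinuousLinearMap.comp_apply, ContinuousLinearMap.comp_apply, e1, eI]
  -- hcr : D (1, 0) + I * D (0, 1) = 0
  have h3 : I * (D (1, 0) + I * D (0, 1)) = 0 := by rw [hcr, mul_zero]
  rw [mul_add, ← mul_assoc, qs_mul_self hI, neg_one_mul, add_comm] at h3
  exact neg_add_eq_zero.mp h3

end SphExp2
namespace SphExp3
open SphExp SphExp2

lemma emb_real (I : ℍ[ℝ]) (hI : I ∈ QS) (x : ℝ) : emb I hI (x : ℂ) = (x : ℍ[ℝ]) := by
  simp [emb_apply]

lemma emb_cont (I : ℍ[ℝ]) (hI : I ∈ QS) : Continuous (emb I hI) := by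
  have : (emb I hI : ℂ → ℍ[ℝ]) = fun z => (z.re : ℍ[ℝ]) + z.im • I := by
    funext z; exact emb_apply I hI z
  rw [this]
  exact ((Quaternion.continuous_coe).comp Complex.continuous_re).add
    (Complex.continuous_im.smul continuous_const)

lemma u_diffOn {f : ℍ[ℝ] → ℍ[ℝ]} {Ω : Set ℍ[ℝ]} (hf : SliceRegularOn f Ω) {I : ℍ[ℝ]}
    (hI : I ∈ QS) :
    @DifferentiableOn ℂ _ ℂ _ _ _ ℍ[ℝ] _ (qNS I hI).toModule _ (fun w => f (emb I hI w))
      ((emb I hI) ⁻¹' Ω) := by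
  letI := qNS I hI
  intro z hz
  obtain ⟨L, hL, hcr⟩ := u_deriv hf hI hz
  exact (holo_of_CR I hI _ z L hL hcr).differentiableWithinAt

/-- The combination map used in the representation formula. -/
def PhiL (J I0 : ℍ[ℝ]) : ℍ[ℝ] × ℍ[ℝ] →L[ℝ] ℍ[ℝ] :=
  (2:ℝ)⁻¹ • (ContinuousLinearMap.fst ℝ ℍ[ℝ] ℍ[ℝ] + ContinuousLinearMap.snd ℝ ℍ[ℝ] ℍ[ℝ]) +
  (ContinuousLinearMap.mul ℝ ℍ[ℝ] J).comp
    ((-(2:ℝ)⁻¹) • ((ContinuousLinearMap.mul ℝ ℍ[ℝ] I0).comp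
      (ContinuousLinearMap.fst ℝ ℍ[ℝ] ℍ[ℝ] - ContinuousLinearMap.snd ℝ ℍ[ℝ] ℍ[ℝ])))

lemma PhiL_apply (J I0 : ℍ[ℝ]) (p : ℍ[ℝ] × ℍ[ℝ]) :
    PhiL J I0 p = (2:ℝ)⁻¹ • (p.1 + p.2) + J * ((-(2:ℝ)⁻¹) • (I0 * (p.1 - p.2))) := rfl

lemma PhiL_diag (J I0 p : ℍ[ℝ]) : PhiL J I0 (p, p) = p := by
  rw [PhiL_apply]
  simp only [sub_self, mul_zero, smul_zero, add_zero]
  rw [← two_smul ℝ p, smul_smul]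
  norm_num

lemma key_CR {I0 J : ℍ[ℝ]} (hI0 : I0 * I0 = -1) (hJ : J * J = -1) (a b : ℍ[ℝ]) :
    PhiL J I0 (I0 * a, -(I0 * b)) = J * PhiL J I0 (a, b) := by
  have h1 : ∀ x : ℍ[ℝ], I0 * (I0 * x) = -x := fun x => by rw [← mul_assoc, hI0, neg_one_mul]
  have h2 : ∀ x : ℍ[ℝ], J * (J * x) = -x := fun x => by rw [← mul_assoc, hJ, neg_one_mul]
  simp only [PhiL_apply, mul_add, mul_sub, mul_neg, sub_neg_eq_add, h1, h2, mul_smul_comm,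
    smul_add, smul_sub, smul_neg, neg_neg]
  module

/-- The representation formula. -/
lemma rep {f : ℍ[ℝ] → ℍ[ℝ]} {Ω : Set ℍ[ℝ]} (hΩ : SymmSliceDomain Ω) (hf : SliceRegularOn f Ω)
    {I0 J : ℍ[ℝ]} (hI0 : I0 ∈ QS) (hJ : J ∈ QS) {z : ℂ} (hz : emb J hJ z ∈ Ω) :
    f (emb J hJ z) = PhiL J I0 (f (emb I0 hI0 z), f (emb I0 hI0 (starRingEnd ℂ z))) := by
  obtain ⟨hopen, hconn, hax, ⟨r, hr⟩, hsl⟩ := hΩ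
  letI := qNS J hJ
  set u : ℂ → ℍ[ℝ] := fun w => f (emb I0 hI0 w) with hu
  set g : ℂ → ℍ[ℝ] := fun w => f (emb J hJ w) with hg
  set e : ℂ → ℍ[ℝ] := fun w => PhiL J I0 (u w, u (starRingEnd ℂ w)) with he
  set V : Set ℂ := (emb J hJ) ⁻¹' Ω with hV
  have hVopen : IsOpen V := hopen.preimage (emb_cont J hJ)
  have hmem : ∀ w : ℂ, w ∈ V → emb I0 hI0 w ∈ Ω ∧ emb I0 hI0 (starRingEnd ℂ w) ∈ Ω := by
    intro w hw
    have hs := hax w.re w.im J hJ (by rwa [← emb_apply])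
    constructor
    · exact hs ⟨I0, hI0, emb_apply _ _ _⟩
    · refine hs ⟨-I0, qs_neg hI0, ?_⟩
      rw [emb_apply]
      simp [smul_neg]
  have hgd : DifferentiableOn ℂ g V := u_diffOn hf hJ
  have hed : DifferentiableOn ℂ e V := by
    intro w hw
    obtain ⟨h1, h2⟩ := hmem w hw
    obtain ⟨Lu, hLu, hcru⟩ := u_deriv hf hI0 h1
    obtain ⟨Lu', hLu', hcru'⟩ := u_deriv hf hI0 h2
    have hconj : HasFDerivAt (fun w' => u (starRingEnd ℂ w'))
        (Lu'.comp (Complex.conjCLE : ℂ →L[ℝ] ℂ)) w := by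
      have hc : HasFDerivAt (fun w' : ℂ => starRingEnd ℂ w')
          (Complex.conjCLE : ℂ →L[ℝ] ℂ) w := Complex.conjCLE.hasFDerivAt
      exact hLu'.comp w hc
    have hpair : HasFDerivAt (fun w' => ((u w', u (starRingEnd ℂ w')) : ℍ[ℝ] × ℍ[ℝ]))
        (Lu.prod (Lu'.comp (Complex.conjCLE : ℂ →L[ℝ] ℂ))) w := hLu.prodMk hconj
    have heD : HasFDerivAt e
        ((PhiL J I0).comp (Lu.prod (Lu'.comp (Complex.conjCLE : ℂ →L[ℝ] ℂ)))) w :=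
      ((PhiL J I0).hasFDerivAt).comp w hpair
    refine (holo_of_CR J hJ e w _ heD ?_).differentiableWithinAt
    have e1 : (Lu.prod (Lu'.comp (Complex.conjCLE : ℂ →L[ℝ] ℂ))) 1 = (Lu 1, Lu' 1) := by
      simp [ContinuousLinearMap.prod_apply]
    have eI : (Lu.prod (Lu'.comp (Complex.conjCLE : ℂ →L[ℝ] ℂ))) Complex.I
        = (I0 * Lu 1, -(I0 * Lu' 1)) := by
      simp only [ContinuousLinearMap.prod_apply, ContinuousLinearMap.comp_apply]
      rw [hcru]
      congr 1
      have : (Complex.conjCLE : ℂ →L[ℝ] ℂ) Complex.I = -Complex.I := by simp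
      rw [this, map_neg, hcru']
    rw [ContinuousLinearMap.comp_apply, ContinuousLinearMap.comp_apply, e1, eI]
    exact key_CR (qs_mul_self hI0) (qs_mul_self hJ) (Lu 1) (Lu' 1)
  have hganal := hgd.analyticOnNhd hVopen
  have heanal := hed.analyticOnNhd hVopen
  have hVconn : IsPreconnected V := by
    have hS := hsl J hJ
    set ψ : ℍ[ℝ] → ℂ := fun q => (q.re : ℂ) + ((-((q * J).re) : ℝ) : ℂ) * Complex.I with hψ
    have hψc : Continuous ψ := by
      apply Continuous.add
      · exact Complex.continuous_ofReal.comp Quaternion.continuous_re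
      · exact ((Complex.continuous_ofReal.comp
          ((Quaternion.continuous_re.comp (continuous_id.mul continuous_const)).neg))).mul
          continuous_const
    have hψe : ∀ w : ℂ, ψ (emb J hJ w) = w := by
      intro w
      obtain ⟨hre, hsq⟩ := qs_re_im hJ
      rw [Quaternion.normSq_def'] at hsq
      have h1 : (emb J hJ w).re = w.re := by
        simp [emb_apply, hre]
      have h2 : ((emb J hJ w) * J).re = -w.im := by
        rw [emb_apply]
        simp only [Quaternion.re_mul, Quaternion.re_add, Quaternion.imI_add, Quaternion.imJ_add,
          Quaternion.imK_add, Quaternion.re_coe, Quaternion.imI_coe, Quaternion.imJ_coe,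
          Quaternion.imK_coe, Quaternion.re_smul, Quaternion.imI_smul, Quaternion.imJ_smul,
          Quaternion.imK_smul, smul_eq_mul, hre]
        rw [hre] at hsq
        linear_combination (-w.im) * hsq
      rw [hψ]
      simp only [h1, h2, neg_neg]
      exact Complex.re_add_im w
    have himg : V = ψ '' {q ∈ Ω | ∃ a b : ℝ, q = (a : ℍ[ℝ]) + b • J} := by
      apply Set.Subset.antisymm
      · intro w hw
        exact ⟨emb J hJ w, ⟨hw, ⟨w.re, w.im, emb_apply _ _ _⟩⟩, hψe w⟩
      · rintro w ⟨q, ⟨hqΩ, a, b, rfl⟩, rfl⟩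
        have hq : (a:ℍ[ℝ]) + b • J = emb J hJ ((a : ℂ) + (b : ℂ) * Complex.I) := by
          rw [emb_apply]
          simp
        show emb J hJ (ψ _) ∈ Ω
        rw [hq, hψe]
        rwa [← hq]
    rw [himg]
    exact (hS.image ψ hψc.continuousOn).isPreconnected
  have hreal : ∀ x : ℝ, g (x:ℂ) = e (x:ℂ) := by
    intro x
    rw [hg, he]
    simp only [Complex.conj_ofReal]
    rw [hu]
    simp only [emb_real]
    rw [PhiL_diag]
  have hrV : ((r:ℂ)) ∈ V := by
    rw [hV, Set.mem_preimage, emb_real]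
    exact hr
  have hseq : Filter.Tendsto (fun n : ℕ => ((r + 1/(n+1) : ℝ) : ℂ)) Filter.atTop
      (nhdsWithin (r:ℂ) {(r:ℂ)}ᶜ) := by
    apply tendsto_nhdsWithin_of_tendsto_nhds_of_eventually_within
    · have h0 : Filter.Tendsto (fun n : ℕ => (r + 1/(n+1) : ℝ)) Filter.atTop (nhds r) := by
        simpa using (tendsto_const_nhds : Filter.Tendsto (fun _ : ℕ => r) Filter.atTop (nhds r)).add tendsto_one_div_add_atTop_nhds_zero_nat
      exact ((Complex.continuous_ofReal.tendsto r).comp h0)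
    · refine Filter.Eventually.of_forall fun n => ?_
      simp only [Set.mem_compl_iff, Set.mem_singleton_iff]
      intro h
      have := Complex.ofReal_injective h
      have hpos : (0:ℝ) < 1/(n+1) := by positivity
      linarith
  have hfreq : ∃ᶠ w in nhdsWithin (r:ℂ) {(r:ℂ)}ᶜ, g w = e w :=
    hseq.frequently (Filter.Frequently.of_forall fun n => hreal _)
  exact hganal.eqOn_of_preconnected_of_frequently_eq heanal hVconn hrV hfreq hz

end SphExp3
namespace SphExp4
open SphExp SphExp2 SphExp3

def qComm (I : ℍ[ℝ]) (hI : I ∈ QS) :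
    letI := qNS I hI; SMulCommClass ℝ ℂ ℍ[ℝ] := by
  letI := qNS I hI
  constructor
  intro r c q
  show r • (emb I hI c * q) = emb I hI c * (r • q)
  exact (mul_smul_comm r _ q).symm

lemma slice_series {f : ℍ[ℝ] → ℍ[ℝ]} {Ω : Set ℍ[ℝ]} (hf : SliceRegularOn f Ω)
    {I0 : ℍ[ℝ]} (hI0 : I0 ∈ QS) (x0 y0 R : ℝ) (hR : 0 < R)
    (hU : sphU x0 y0 R ⊆ Ω) :
    ∃ bp bm : ℕ → ℍ[ℝ], ∀ z : ℂ, ‖(z - (x0:ℂ))^2 + (y0:ℂ)^2‖ < R^2 →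
      HasSum (fun n => emb I0 hI0 (((z - (x0:ℂ))^2 + (y0:ℂ)^2)^n) * bp n +
        emb I0 hI0 (((z - (x0:ℂ))^2 + (y0:ℂ)^2)^n * (z - (x0:ℂ))) * bm n)
        (f (emb I0 hI0 z)) := by
  letI := qNS I0 hI0
  letI := qComm I0 hI0
  set u : ℂ → ℍ[ℝ] := fun w => f (emb I0 hI0 w) with hu
  set sf : ℂ → ℂ := fun z => (z - (x0:ℂ))^2 + (y0:ℂ)^2 with hsf
  set C : Set ℂ := {z : ℂ | ‖sf z‖ < R^2} with hC
  have hCopen : IsOpen C := by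
    have hcont : Continuous fun z : ℂ => ‖sf z‖ := by
      apply continuous_norm.comp
      fun_prop
    exact isOpen_lt hcont continuous_const
  have hCsub : C ⊆ (emb I0 hI0) ⁻¹' Ω := by
    intro z hz
    apply hU
    show ‖(emb I0 hI0 z - (x0:ℍ[ℝ]))^2 + ((y0:ℍ[ℝ]))^2‖ < R^2
    have hpoly : (emb I0 hI0 z - (x0:ℍ[ℝ]))^2 + ((y0:ℍ[ℝ]))^2 = emb I0 hI0 (sf z) := by
      rw [hsf]
      rw [map_add, map_pow, map_sub, emb_real, map_pow, emb_real]
    rw [hpoly, emb_norm]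
    exact hz
  have hud : DifferentiableOn ℂ u C := (u_diffOn hf hI0).mono hCsub
  set σ : ℂ → ℂ := fun z => 2*(x0:ℂ) - z with hσ
  have hσC : ∀ z ∈ C, σ z ∈ C := by
    intro z hz
    show ‖sf (σ z)‖ < R^2
    have : sf (σ z) = sf z := by rw [hsf, hσ]; ring
    rwa [this]
  have hσd : Differentiable ℂ σ := (differentiable_const _).sub differentiable_id
  set Fp : ℂ → ℍ[ℝ] := fun z => (2:ℝ)⁻¹ • (u z + u (σ z)) with hFp
  set DD : ℂ → ℍ[ℝ] := fun z => (2:ℝ)⁻¹ • (u z - u (σ z)) with hDD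
  set Fm : ℂ → ℍ[ℝ] := dslope DD (x0:ℂ) with hFm
  have hD0 : DD (x0:ℂ) = 0 := by
    rw [hDD]
    have : σ (x0:ℂ) = (x0:ℂ) := by rw [hσ]; ring
    simp [this]
  have huσ : DifferentiableOn ℂ (fun z => u (σ z)) C :=
    hud.comp (hσd.differentiableOn) hσC
  have hFpd : DifferentiableOn ℂ Fp C := (hud.add huσ).const_smul ((2:ℝ)⁻¹)
  have hDDd : DifferentiableOn ℂ DD C := (hud.sub huσ).const_smul ((2:ℝ)⁻¹)
  have hFmd : DifferentiableOn ℂ Fm C := by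
    by_cases hx0 : (x0:ℂ) ∈ C
    · exact (Complex.differentiableOn_dslope (hCopen.mem_nhds hx0)).mpr hDDd
    · exact (differentiableOn_dslope_of_notMem hx0).mpr hDDd
  have hsplit : ∀ z : ℂ, u z = Fp z + (z - (x0:ℂ)) • Fm z := by
    intro z
    rcases eq_or_ne z (x0:ℂ) with rfl | hne
    · have hσx : σ (x0:ℂ) = (x0:ℂ) := by show 2*(x0:ℂ) - (x0:ℂ) = (x0:ℂ); ring
      rw [sub_self, zero_smul, add_zero]
      show u (x0:ℂ) = (2:ℝ)⁻¹ • (u (x0:ℂ) + u (σ (x0:ℂ)))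
      rw [hσx, ← two_smul ℝ (u (x0:ℂ)), smul_smul,
        show ((2:ℝ)⁻¹ * 2 : ℝ) = 1 by norm_num, one_smul]
    · rw [hFm, dslope_of_ne _ hne, slope_def_module, hD0, sub_zero, smul_smul,
        mul_inv_cancel₀ (sub_ne_zero.mpr hne), one_smul]
      show u z = (2:ℝ)⁻¹ • (u z + u (σ z)) + (2:ℝ)⁻¹ • (u z - u (σ z))
      rw [← smul_add]
      have : u z + u (σ z) + (u z - u (σ z)) = (2:ℝ) • u z := by
        rw [two_smul]; abel
      rw [this, smul_smul, show ((2:ℝ)⁻¹ * 2 : ℝ) = 1 by norm_num, one_smul]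
  have hFpσ : ∀ z : ℂ, Fp (σ z) = Fp z := by
    intro z
    have hσσ : σ (σ z) = z := by rw [hσ]; ring
    rw [hFp]
    simp only [hσσ]
    rw [add_comm]
  have hFmσ : ∀ z : ℂ, z ≠ (x0:ℂ) → Fm (σ z) = Fm z := by
    intro z hne
    have hσσ : σ (σ z) = z := by rw [hσ]; ring
    have hσne : σ z ≠ (x0:ℂ) := by
      rw [hσ]; intro h; apply hne
      have : z = 2*(x0:ℂ) - (x0:ℂ) := by linear_combination -h
      rw [this]; ring
    rw [hFm, dslope_of_ne _ hσne, dslope_of_ne _ hne, slope_def_module, slope_def_module, hD0,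
      sub_zero, sub_zero]
    have h1 : DD (σ z) = -DD z := by
      rw [hDD]
      simp only [hσσ]
      rw [← smul_neg, neg_sub]
    have h2 : σ z - (x0:ℂ) = -(z - (x0:ℂ)) := by rw [hσ]; ring
    rw [h1, h2, smul_neg, inv_neg, neg_smul, neg_neg]
  -- square root
  set rt : ℂ → ℂ := fun w => w ^ ((2:ℂ)⁻¹) with hrt
  have hrt0 : rt 0 = 0 := by
    rw [hrt]
    exact Complex.zero_cpow (by norm_num)
  have hrt_sq : ∀ w : ℂ, (rt w)^2 = w := by
    intro w
    rcases eq_or_ne w 0 with rfl | hw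
    · rw [hrt0]; ring
    · rw [hrt, sq, ← Complex.cpow_add _ _ hw]
      norm_num
  -- membership: if δ² = w and |w + y0²| < R² then x0 + δ ∈ C
  have hmemC : ∀ (w δ : ℂ), δ^2 = w → ‖w + (y0:ℂ)^2‖ < R^2 → ((x0:ℂ) + δ) ∈ C := by
    intro w δ hδ hw
    show ‖sf ((x0:ℂ) + δ)‖ < R^2
    have : sf ((x0:ℂ) + δ) = w + (y0:ℂ)^2 := by rw [hsf, ← hδ]; ring_nf
    rwa [this]
  set c : ℂ := -((y0:ℂ)^2) with hc
  set B : Set ℂ := Metric.ball c (R^2) with hB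
  have hmemB : ∀ w : ℂ, w ∈ B ↔ ‖w + (y0:ℂ)^2‖ < R^2 := by
    intro w
    rw [hB, Metric.mem_ball, Complex.dist_eq, hc, sub_neg_eq_add]
  -- generic branch differentiability
  have branch : ∀ FF : ℂ → ℍ[ℝ], DifferentiableOn ℂ FF C →
      (∀ z : ℂ, z ≠ (x0:ℂ) → FF (σ z) = FF z) →
      ∀ w₁ ∈ B, w₁ ≠ (0:ℂ) → DifferentiableAt ℂ (fun w => FF ((x0:ℂ) + rt w)) w₁ := by
    intro FF hFFd hFFσ w₁ hw₁ hne
    obtain ⟨ρ, hρd, hρsq⟩ : ∃ ρ : ℂ → ℂ, DifferentiableAt ℂ ρ w₁ ∧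
        ∀ᶠ w in nhds w₁, (ρ w)^2 = w := by
      by_cases hslit : w₁ ∈ Complex.slitPlane
      · exact ⟨rt, (differentiableAt_id.cpow (differentiableAt_const _) hslit),
          Filter.Eventually.of_forall hrt_sq⟩
      · have hneg : -w₁ ∈ Complex.slitPlane := by
          rw [Complex.mem_slitPlane_iff] at hslit ⊢
          push_neg at hslit
          simp only [Complex.neg_re, Complex.neg_im, ne_eq, neg_eq_zero]
          rcases lt_or_eq_of_le hslit.1 with h | h
          · exact Or.inl (by linarith)
          · exact absurd (Complex.ext (by simpa using h) (by simpa using hslit.2)) hne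
        refine ⟨fun w => Complex.I * (-w) ^ ((2:ℂ)⁻¹), ?_, ?_⟩
        · have hd1 : DifferentiableAt ℂ (fun w : ℂ => -w) w₁ :=
            (differentiable_id.neg).differentiableAt
          have hd2 : DifferentiableAt ℂ (fun w : ℂ => (-w) ^ ((2:ℂ)⁻¹)) w₁ :=
            hd1.cpow (differentiableAt_const _) hneg
          exact hd2.const_mul Complex.I
        · filter_upwards [eventually_ne_nhds hne] with w hw
          rw [mul_pow, Complex.I_sq, sq, ← Complex.cpow_add _ _ (neg_ne_zero.mpr hw)]
          norm_num
    have hρw₁ : (ρ w₁)^2 = w₁ := hρsq.self_of_nhds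
    have hmem1 : (x0:ℂ) + ρ w₁ ∈ C := hmemC w₁ _ hρw₁ ((hmemB w₁).mp hw₁)
    have hdiff2 : DifferentiableAt ℂ (fun w => FF ((x0:ℂ) + ρ w)) w₁ := by
      exact (hFFd.differentiableAt (hCopen.mem_nhds hmem1)).comp w₁
        ((differentiableAt_const _).add hρd)
    have heq : (fun w => FF ((x0:ℂ) + rt w)) =ᶠ[nhds w₁] fun w => FF ((x0:ℂ) + ρ w) := by
      filter_upwards [hρsq, eventually_ne_nhds hne] with w hsq hw0
      have hcases : rt w = ρ w ∨ rt w = -ρ w := by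
        have h0 : (rt w - ρ w) * (rt w + ρ w) = 0 := by
          linear_combination (hrt_sq w) - hsq
        rcases mul_eq_zero.mp h0 with h | h
        · exact Or.inl (sub_eq_zero.mp h)
        · exact Or.inr (eq_neg_of_add_eq_zero_left h)
      rcases hcases with h | h
      · rw [h]
      · have hρ0 : ρ w ≠ 0 := by
          intro h0; apply hw0; rw [← hsq, h0]; ring
        have : (x0:ℂ) + rt w = σ ((x0:ℂ) + ρ w) := by rw [h, hσ]; ring
        rw [this, hFFσ _ (by
          intro hcon
          apply hρ0
          have : ρ w = ((x0:ℂ) + ρ w) - (x0:ℂ) := by ring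
          rw [this, hcon]; ring)]
    exact heq.differentiableAt_iff.mpr hdiff2
  -- continuity of rt at 0
  have hrt_tend : Filter.Tendsto rt (nhds 0) (nhds 0) := by
    rw [tendsto_zero_iff_norm_tendsto_zero]
    have habs : ∀ w : ℂ, ‖rt w‖ = ‖w‖ ^ ((2:ℝ)⁻¹) := by
      intro w
      rw [hrt]
      have : ((2:ℂ))⁻¹ = (((2:ℝ)⁻¹ : ℝ) : ℂ) := by push_cast; ring
      rw [this, Complex.norm_cpow_real]
    simp only [habs]
    have h1 : ContinuousAt (fun x : ℝ => x ^ ((2:ℝ)⁻¹)) 0 :=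
      Real.continuousAt_rpow_const 0 _ (Or.inr (by norm_num))
    have h2 : Filter.Tendsto (fun w : ℂ => ‖w‖) (nhds 0) (nhds 0) := by
      simpa using continuous_norm.tendsto (0:ℂ)
    have h3 := (h1.tendsto).comp h2
    rw [Real.zero_rpow (by norm_num : ((2:ℝ)⁻¹ : ℝ) ≠ 0)] at h3
    exact h3
  -- differentiability of Gp/Gm on B
  have hGdiff : ∀ FF : ℂ → ℍ[ℝ], DifferentiableOn ℂ FF C →
      (∀ z : ℂ, z ≠ (x0:ℂ) → FF (σ z) = FF z) →
      DifferentiableOn ℂ (fun w => FF ((x0:ℂ) + rt w)) B := by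
    intro FF hFFd hFFσ w₁ hw₁
    rcases eq_or_ne w₁ (0:ℂ) with rfl | hne
    · -- removable singularity at 0
      have hx0C : (x0:ℂ) ∈ C := by
        have h0 : ((0:ℂ))^2 = 0 := by ring
        have := hmemC 0 0 h0 (by simpa using (hmemB 0).mp hw₁)
        simpa using this
      have hd : ∀ᶠ w in nhdsWithin (0:ℂ) {(0:ℂ)}ᶜ, DifferentiableAt ℂ
          (fun w => FF ((x0:ℂ) + rt w)) w := by
        have hBmem : ∀ᶠ w in nhdsWithin (0:ℂ) {(0:ℂ)}ᶜ, w ∈ B := by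
          apply Filter.Eventually.filter_mono nhdsWithin_le_nhds
          exact (Metric.isOpen_ball).eventually_mem hw₁
        filter_upwards [hBmem, self_mem_nhdsWithin] with w hwB hw0
        exact branch FF hFFd hFFσ w hwB hw0
      have hcont : ContinuousAt (fun w => FF ((x0:ℂ) + rt w)) 0 := by
        have hFcont : ContinuousAt FF ((x0:ℂ) + rt 0) := by
          rw [hrt0, add_zero]
          exact (hFFd.differentiableAt (hCopen.mem_nhds hx0C)).continuousAt
        have hinner : ContinuousAt (fun w => (x0:ℂ) + rt w) 0 := by
          show Filter.Tendsto _ _ (nhds ((x0:ℂ) + rt 0))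
          rw [hrt0]
          exact tendsto_const_nhds.add hrt_tend
        exact ContinuousAt.comp (x := (0:ℂ)) (f := fun w => (x0:ℂ) + rt w) hFcont hinner
      exact (Complex.analyticAt_of_differentiable_on_punctured_nhds_of_continuousAt hd
        hcont).differentiableAt.differentiableWithinAt
    · exact (branch FF hFFd hFFσ w₁ hw₁ hne).differentiableWithinAt
  have hGpd : DifferentiableOn ℂ (fun w => Fp ((x0:ℂ) + rt w)) B :=
    hGdiff Fp hFpd (fun z _ => hFpσ z)
  have hGmd : DifferentiableOn ℂ (fun w => Fm ((x0:ℂ) + rt w)) B := hGdiff Fm hFmd hFmσ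
  -- power series of a differentiable function on B, with fixed coefficient sequence
  have hR2 : (0:ℝ) < R^2 := by positivity
  have series : ∀ G : ℂ → ℍ[ℝ], DifferentiableOn ℂ G B → ∃ b : ℕ → ℍ[ℝ],
      ∀ w ∈ B, HasSum (fun n => (w - c)^n • b n) (G w) := by
    intro G hGd
    have key : ∀ t : ℝ, 0 < t → t < R^2 →
        HasFPowerSeriesOnBall G (cauchyPowerSeries G c t.toNNReal) c t.toNNReal := by
      intro t ht htR
      apply DifferentiableOn.hasFPowerSeriesOnBall
      · apply hGd.mono
        intro w hw
        rw [Metric.mem_closedBall, Real.coe_toNNReal _ ht.le] at hw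
        rw [hB, Metric.mem_ball]
        linarith
      · exact Real.toNNReal_pos.mpr ht
    set p := cauchyPowerSeries G c ((R^2)/2).toNNReal with hp
    have hp0 := key ((R^2)/2) (by positivity) (by linarith)
    refine ⟨fun n => p n (fun _ => 1), ?_⟩
    intro w hw
    set t := (dist w c + R^2)/2 with ht
    have hd0 : (0:ℝ) ≤ dist w c := dist_nonneg
    have hwRB : dist w c < R^2 := by rw [hB] at hw; exact Metric.mem_ball.mp hw
    have ht1 : 0 < t := by rw [ht]; positivity
    have ht2 : t < R^2 := by rw [ht]; linarith
    have hq := key t ht1 ht2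
    have hpq : cauchyPowerSeries G c t.toNNReal = p :=
      hq.hasFPowerSeriesAt.eq_formalMultilinearSeries hp0.hasFPowerSeriesAt
    have hmem : w - c ∈ Metric.eball (0:ℂ) t.toNNReal := by
      rw [mem_emetric_ball_zero_iff]
      apply ENNReal.coe_lt_coe.mpr
      rw [← norm_toNNReal, Real.toNNReal_lt_toNNReal_iff ht1, ← dist_eq_norm, ht]
      linarith
    have hs := hq.hasSum hmem
    rw [hpq] at hs
    rw [show c + (w - c) = w by ring] at hs
    have hterm : (fun n => p n fun _ => (w - c)) = fun n => (w - c)^n • p n (fun _ => 1) := by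
      funext n
      have h1 : (fun _ : Fin n => (w-c)) = fun _ : Fin n => (w-c) • (1:ℂ) := by
        funext i; simp
      rw [h1, (p n).map_smul_univ, Finset.prod_const, Finset.card_univ, Fintype.card_fin]
    rw [hterm] at hs
    exact hs
  obtain ⟨bp, hbp⟩ := series _ hGpd
  obtain ⟨bm, hbm⟩ := series _ hGmd
  refine ⟨bp, bm, ?_⟩
  intro z hz
  set w : ℂ := (z - (x0:ℂ))^2 with hw
  have hsfw : sf z = w + (y0:ℂ)^2 := by rw [hsf, hw]
  have hwB : w ∈ B := by rw [hmemB, ← hsfw]; exact hz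
  have hS1 := hbp w hwB
  have hS2 := hbm w hwB
  -- identify the values
  have hrtw : (rt w)^2 = (z - (x0:ℂ))^2 := by rw [hrt_sq]
  have hcase : rt w = (z - (x0:ℂ)) ∨ rt w = -(z - (x0:ℂ)) := by
    have h0 : (rt w - (z - (x0:ℂ))) * (rt w + (z - (x0:ℂ))) = 0 := by
      linear_combination hrtw
    rcases mul_eq_zero.mp h0 with h | h
    · left; linear_combination h
    · right; linear_combination h
  have hGpz : Fp ((x0:ℂ) + rt w) = Fp z := by
    rcases hcase with h | h
    · rw [h, show (x0:ℂ) + (z - (x0:ℂ)) = z by ring]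
    · rw [h, show (x0:ℂ) + -(z - (x0:ℂ)) = σ z by rw [hσ]; ring, hFpσ]
  have hGmz : Fm ((x0:ℂ) + rt w) = Fm z := by
    rcases eq_or_ne z (x0:ℂ) with rfl | hne
    · have hw0 : w = 0 := by rw [hw]; ring
      rw [hw0, hrt0, add_zero]
    · rcases hcase with h | h
      · rw [h, show (x0:ℂ) + (z - (x0:ℂ)) = z by ring]
      · rw [h, show (x0:ℂ) + -(z - (x0:ℂ)) = σ z by rw [hσ]; ring, hFmσ z hne]
  have hsum := hS1.add (hS2.const_smul (z - (x0:ℂ)))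
  have hval : Fp ((x0:ℂ) + rt w) + (z - (x0:ℂ)) • Fm ((x0:ℂ) + rt w) = u z := by
    rw [hGpz, hGmz, ← hsplit]
  rw [hval] at hsum
  have hterms : (fun n => (w - c)^n • bp n + (z - (x0:ℂ)) • ((w - c)^n • bm n)) =
      fun n => emb I0 hI0 ((sf z)^n) * bp n + emb I0 hI0 ((sf z)^n * (z - (x0:ℂ))) * bm n := by
    funext n
    have hwc : w - c = sf z := by rw [hsfw, hc]; ring
    rw [hwc, smul_smul, mul_comm (z - (x0:ℂ))]
    rfl
  rw [hterms] at hsum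
  exact hsum

end SphExp4
namespace SphExp5
open SphExp SphExp2 SphExp3 SphExp4

lemma imq_sq (q : ℍ[ℝ]) : q.im * q.im = -((‖q.im‖^2 : ℝ) : ℍ[ℝ]) := by
  have h1 : ‖q.im‖^2 = q.imI^2 + q.imJ^2 + q.imK^2 := by
    have h := Quaternion.normSq_eq_norm_mul_self q.im
    rw [Quaternion.normSq_def'] at h
    simp only [Quaternion.re_im, Quaternion.imI_im, Quaternion.imJ_im, Quaternion.imK_im] at h
    rw [sq]
    nlinarith [h]
  rw [h1]
  ext <;>
    simp only [Quaternion.re_mul, Quaternion.imI_mul, Quaternion.imJ_mul, Quaternion.imK_mul,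
      Quaternion.re_neg, Quaternion.imI_neg, Quaternion.imJ_neg, Quaternion.imK_neg,
      Quaternion.re_coe, Quaternion.imI_coe, Quaternion.imJ_coe, Quaternion.imK_coe,
      Quaternion.re_im, Quaternion.imI_im, Quaternion.imJ_im, Quaternion.imK_im, neg_neg,
      neg_zero] <;>
    ring

lemma exists_slice (I0 : ℍ[ℝ]) (hI0 : I0 ∈ QS) (q : ℍ[ℝ]) :
    ∃ J : ℍ[ℝ], ∃ hJ : J ∈ QS, ∃ z : ℂ, q = emb J hJ z := by
  rcases eq_or_ne q.im 0 with h0 | h0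
  · refine ⟨I0, hI0, (q.re : ℂ), ?_⟩
    rw [emb_real]
    conv_lhs => rw [← Quaternion.re_add_im q]
    rw [h0, add_zero]
  · set y : ℝ := ‖q.im‖ with hy
    have hy0 : y ≠ 0 := norm_ne_zero_iff.mpr h0
    set J : ℍ[ℝ] := y⁻¹ • q.im with hJdef
    have hJQS : J ∈ QS := by
      show J ^ 2 = -1
      rw [sq, hJdef, smul_mul_smul_comm, imq_sq, ← Quaternion.coe_mul_eq_smul, ← Quaternion.coe_neg,
        ← Quaternion.coe_mul, ← hy]
      rw [show y⁻¹ * y⁻¹ * -(y^2) = -1 by field_simp]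
      simp
    refine ⟨J, hJQS, (q.re : ℂ) + (y : ℂ) * Complex.I, ?_⟩
    rw [emb_apply]
    simp only [Complex.add_re, Complex.ofReal_re, Complex.mul_re, Complex.I_re, Complex.I_im,
      Complex.ofReal_im, Complex.add_im, Complex.mul_im]
    norm_num
    rw [hJdef, smul_smul, mul_inv_cancel₀ hy0, one_smul]
    exact (Quaternion.re_add_im q).symm

lemma emb_sf {I : ℍ[ℝ]} (hI : I ∈ QS) (x0 y0 : ℝ) (z : ℂ) :
    emb I hI ((z - (x0:ℂ))^2 + (y0:ℂ)^2) =
      (emb I hI z - ((x0:ℝ) : ℍ[ℝ]))^2 + (((y0:ℝ) : ℍ[ℝ]))^2 := by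
  rw [map_add, map_pow, map_sub, emb_real, map_pow, emb_real]

lemma conj_sf (x0 y0 : ℝ) (z : ℂ) :
    (starRingEnd ℂ z - (x0:ℂ))^2 + (y0:ℂ)^2 = starRingEnd ℂ ((z - (x0:ℂ))^2 + (y0:ℂ)^2) := by
  rw [map_add, map_pow, map_sub, Complex.conj_ofReal, map_pow, Complex.conj_ofReal]

/-- key combination identity -/
lemma phi_emb {I0 J : ℍ[ℝ]} (hI0 : I0 ∈ QS) (hJ : J ∈ QS) (c : ℂ) (Bq : ℍ[ℝ]) :
    PhiL J I0 (emb I0 hI0 c * Bq, emb I0 hI0 (starRingEnd ℂ c) * Bq) = emb J hJ c * Bq := by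
  have h1 : ∀ x : ℍ[ℝ], I0 * (I0 * x) = -x := fun x => by
    rw [← mul_assoc, qs_mul_self hI0, neg_one_mul]
  rw [PhiL_apply, emb_apply, emb_apply, emb_apply]
  simp only [Complex.conj_re, Complex.conj_im, neg_smul, Quaternion.coe_mul_eq_smul]
  simp only [add_mul, smul_mul_assoc, neg_mul, mul_add, mul_sub, mul_neg, mul_smul_comm, h1,
    smul_add, smul_sub, smul_neg, neg_neg]
  module

lemma phi_pair_add (J I0 : ℍ[ℝ]) (a b a' b' : ℍ[ℝ]) :
    PhiL J I0 (a + b, a' + b') = PhiL J I0 (a, a') + PhiL J I0 (b, b') := by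
  rw [show ((a + b, a' + b') : ℍ[ℝ] × ℍ[ℝ]) = (a, a') + (b, b') from rfl, map_add]

end SphExp5

open SphExp SphExp2 SphExp3 SphExp4 SphExp5 in
/-- spherical series expansion of a slice regular function on a set
`U(x₀+y₀𝕊, R)` contained in a symmetric slice domain. -/
theorem spherical_expansion (Ω : Set ℍ[ℝ]) (hΩ : SymmSliceDomain Ω)
    (f : ℍ[ℝ] → ℍ[ℝ]) (hf : SliceRegularOn f Ω) (x0 y0 R : ℝ) (hR : 0 < R)
    (hU : sphU x0 y0 R ⊆ Ω) (q0 : ℍ[ℝ]) (hq0 : q0 ∈ qSphere x0 y0) :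
    ∃ A : ℕ → ℍ[ℝ], ∀ q ∈ sphU x0 y0 R,
      Filter.Tendsto
        (fun N => ∑ n ∈ Finset.range N,
          ((q - (x0 : ℍ[ℝ])) ^ 2 + ((y0 : ℍ[ℝ])) ^ 2) ^ n *
            (A (2 * n) + (q - q0) * A (2 * n + 1)))
        Filter.atTop (nhds (f q)) := by
  obtain ⟨I0, hI0, hq0eq⟩ := hq0
  obtain ⟨bp, bm, hsp⟩ := slice_series hf hI0 x0 y0 R hR hU
  set A : ℕ → ℍ[ℝ] := fun k => if k % 2 = 0 then bp (k/2) + y0 • (I0 * bm (k/2)) else bm (k/2)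
    with hA
  have hA2 : ∀ n, A (2*n) = bp n + y0 • (I0 * bm n) := by
    intro n
    have h2 : (2*n)/2 = n := by omega
    simp [hA, Nat.mul_mod_right, h2]
  have hA21 : ∀ n, A (2*n+1) = bm n := by
    intro n
    have h1 : ¬((2*n+1) % 2 = 0) := by omega
    have h2 : (2*n+1) / 2 = n := by omega
    simp [hA, h1, h2]
  refine ⟨A, ?_⟩
  intro q hq
  obtain ⟨J, hJ, z, hqz⟩ := exists_slice I0 hI0 q
  -- membership of z and conj z in the Cassini set
  have hzC : ‖(z - (x0:ℂ))^2 + (y0:ℂ)^2‖ < R^2 := by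
    have := hq
    rw [hqz] at this
    show ‖(z - (x0:ℂ))^2 + (y0:ℂ)^2‖ < R^2
    rw [← emb_norm J hJ, emb_sf hJ]
    exact this
  have hzC' : ‖(starRingEnd ℂ z - (x0:ℂ))^2 + (y0:ℂ)^2‖ < R^2 := by
    rw [conj_sf, Complex.norm_conj]
    exact hzC
  have hS1 := hsp z hzC
  have hS2 := hsp (starRingEnd ℂ z) hzC'
  have hS2' : HasSum (fun n => emb I0 hI0 (starRingEnd ℂ (((z - (x0:ℂ))^2 + (y0:ℂ)^2)^n)) * bp n
      + emb I0 hI0 (starRingEnd ℂ ((((z - (x0:ℂ))^2 + (y0:ℂ)^2)^n) * (z - (x0:ℂ)))) * bm n)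
      (f (emb I0 hI0 (starRingEnd ℂ z))) := by
    have heq : (fun n => emb I0 hI0 (((starRingEnd ℂ z - (x0:ℂ))^2 + (y0:ℂ)^2)^n) * bp n +
        emb I0 hI0 (((starRingEnd ℂ z - (x0:ℂ))^2 + (y0:ℂ)^2)^n * (starRingEnd ℂ z - (x0:ℂ)))
          * bm n) = (fun n => emb I0 hI0 (starRingEnd ℂ (((z - (x0:ℂ))^2 + (y0:ℂ)^2)^n)) * bp n
      + emb I0 hI0 (starRingEnd ℂ ((((z - (x0:ℂ))^2 + (y0:ℂ)^2)^n) * (z - (x0:ℂ)))) * bm n) := by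
      funext n
      have e1 : ((starRingEnd ℂ z - (x0:ℂ))^2 + (y0:ℂ)^2)^n
          = starRingEnd ℂ ((((z - (x0:ℂ))^2 + (y0:ℂ)^2))^n) := by
        rw [conj_sf, ← map_pow]
      have e2 : (((starRingEnd ℂ z - (x0:ℂ))^2 + (y0:ℂ)^2)^n) * (starRingEnd ℂ z - (x0:ℂ))
          = starRingEnd ℂ (((((z - (x0:ℂ))^2 + (y0:ℂ)^2))^n) * (z - (x0:ℂ))) := by
        rw [map_mul, ← e1]
        congr 1
        rw [map_sub, Complex.conj_ofReal]
      rw [e2, e1]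
    exact heq ▸ hS2
  set Sq : ℍ[ℝ] := (q - ((x0:ℝ) : ℍ[ℝ]))^2 + (((y0:ℝ) : ℍ[ℝ]))^2 with hSq
  have hSqe : Sq = emb J hJ ((z - (x0:ℂ))^2 + (y0:ℂ)^2) := by
    rw [hSq, hqz]
    exact (emb_sf hJ x0 y0 z).symm
  have hterm : ∀ n, Sq^n * (A (2*n) + (q - q0) * A (2*n+1)) =
      PhiL J I0 (emb I0 hI0 (((z - (x0:ℂ))^2 + (y0:ℂ)^2)^n) * bp n +
          emb I0 hI0 ((((z - (x0:ℂ))^2 + (y0:ℂ)^2)^n) * (z - (x0:ℂ))) * bm n,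
        emb I0 hI0 (starRingEnd ℂ (((z - (x0:ℂ))^2 + (y0:ℂ)^2)^n)) * bp n +
          emb I0 hI0 (starRingEnd ℂ ((((z - (x0:ℂ))^2 + (y0:ℂ)^2)^n) * (z - (x0:ℂ)))) * bm n)
      := by
    intro n
    have hstep1 : A (2*n) + (q - q0) * A (2*n+1) = bp n + (q - ((x0:ℝ):ℍ[ℝ])) * bm n := by
      rw [hA2, hA21, hq0eq,
        show q - (((x0:ℝ):ℍ[ℝ]) + y0 • I0) = (q - ((x0:ℝ):ℍ[ℝ])) - y0 • I0 from by abel,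
        sub_mul, smul_mul_assoc]
      module
    have h1 : Sq^n = emb J hJ ((((z - (x0:ℂ))^2 + (y0:ℂ)^2))^n) := by rw [hSqe, ← map_pow]
    have h2 : Sq^n * (q - ((x0:ℝ):ℍ[ℝ])) =
        emb J hJ (((((z - (x0:ℂ))^2 + (y0:ℂ)^2))^n) * (z - (x0:ℂ))) := by
      rw [h1, map_mul, map_sub, emb_real, ← hqz]
    rw [hstep1, mul_add, ← mul_assoc, h2, h1, phi_pair_add,
      phi_emb hI0 hJ _ (bp n), phi_emb hI0 hJ _ (bm n)]
  have hT1t := hS1.tendsto_sum_nat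
  have hT2t := hS2'.tendsto_sum_nat
  have hpairT := hT1t.prodMk_nhds hT2t
  have hcomp := (((PhiL J I0).continuous.tendsto
    (f (emb I0 hI0 z), f (emb I0 hI0 (starRingEnd ℂ z)))).comp hpairT)
  have hlim : PhiL J I0 (f (emb I0 hI0 z), f (emb I0 hI0 (starRingEnd ℂ z))) = f q := by
    rw [hqz]
    exact (rep hΩ hf hI0 hJ (by rw [← hqz]; exact hU hq)).symm
  rw [hlim] at hcomp
  apply hcomp.congr
  intro N
  show PhiL J I0 (_, _) = _
  rw [show ((∑ n ∈ Finset.range N, (emb I0 hI0 (((z - (x0:ℂ))^2 + (y0:ℂ)^2)^n) * bp n +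
          emb I0 hI0 ((((z - (x0:ℂ))^2 + (y0:ℂ)^2)^n) * (z - (x0:ℂ))) * bm n),
        ∑ n ∈ Finset.range N, (emb I0 hI0 (starRingEnd ℂ (((z - (x0:ℂ))^2 + (y0:ℂ)^2)^n)) * bp n
          + emb I0 hI0 (starRingEnd ℂ ((((z - (x0:ℂ))^2 + (y0:ℂ)^2)^n) * (z - (x0:ℂ)))) * bm n))
        : ℍ[ℝ] × ℍ[ℝ]) = ∑ n ∈ Finset.range N,
        ((emb I0 hI0 (((z - (x0:ℂ))^2 + (y0:ℂ)^2)^n) * bp n +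
          emb I0 hI0 ((((z - (x0:ℂ))^2 + (y0:ℂ)^2)^n) * (z - (x0:ℂ))) * bm n,
         emb I0 hI0 (starRingEnd ℂ (((z - (x0:ℂ))^2 + (y0:ℂ)^2)^n)) * bp n
          + emb I0 hI0 (starRingEnd ℂ ((((z - (x0:ℂ))^2 + (y0:ℂ)^2)^n) * (z - (x0:ℂ)))) * bm n))
      from (Prod.ext (by rw [Prod.fst_sum]) (by rw [Prod.snd_sum])).symm]
  rw [map_sum]
  exact (Finset.sum_congr rfl fun n _ => hterm n).symm
end
end

section
/- Let f be a slice regular function on a symmetric slice domain Ω ⊆ ℍ. Then f is affine on each sphere contained in Ω: for all x,y ∈ ℝ such that x+y𝕊 ⊆ Ω there exist quaternions a, b ∈ ℍ such that f(x+yJ) = a + J·b for every J ∈ 𝕊. -/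
open Quaternion Filter Topology

noncomputable section

/-! ### Auxiliary material -/

namespace SliceProofAux

/-- Structure of an imaginary unit: zero real part and unit imaginary part. -/
theorem unit_struct {J : ℍ[ℝ]} (hJ : J ^ 2 = -1) :
    J.re = 0 ∧ J.imI ^ 2 + J.imJ ^ 2 + J.imK ^ 2 = 1 := by
  rw [sq] at hJ
  have h1 := congrArg QuaternionAlgebra.re hJ
  have h2 := congrArg QuaternionAlgebra.imI hJ
  have h3 := congrArg QuaternionAlgebra.imJ hJ
  have h4 := congrArg QuaternionAlgebra.imK hJ
  simp [Quaternion.re_mul, Quaternion.imI_mul, Quaternion.imJ_mul,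
    Quaternion.imK_mul] at h1 h2 h3 h4
  have hre : J.re = 0 := by
    by_contra hre
    have e2 : J.imI = 0 := by
      have : J.re * J.imI = 0 := by linarith
      rcases mul_eq_zero.mp this with h | h
      · exact absurd h hre
      · exact h
    have e3 : J.imJ = 0 := by
      have : J.re * J.imJ = 0 := by linarith
      rcases mul_eq_zero.mp this with h | h
      · exact absurd h hre
      · exact h
    have e4 : J.imK = 0 := by
      have : J.re * J.imK = 0 := by linarith
      rcases mul_eq_zero.mp this with h | h
      · exact absurd h hre
      · exact h
    nlinarith
  exact ⟨hre, by nlinarith⟩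

/-- The type of imaginary units, bundled with their defining property. -/
def IU : Type := {J : ℍ[ℝ] // J ^ 2 = -1}

namespace IU

theorem mul_self' (J : IU) : J.1 * J.1 = -1 := by rw [← sq]; exact J.2

theorem re_zero (J : IU) : J.1.re = 0 := (unit_struct J.2).1

theorem im_norm (J : IU) : J.1.imI ^ 2 + J.1.imJ ^ 2 + J.1.imK ^ 2 = 1 :=
  (unit_struct J.2).2

/-- The embedding of `ℂ` into `ℍ` sending `i` to the imaginary unit `J`. -/
def emb (J : IU) (z : ℂ) : ℍ[ℝ] := (z.re : ℍ[ℝ]) + z.im • J.1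

theorem emb_mul (J : IU) (z w : ℂ) : emb J (z * w) = emb J z * emb J w := by
  have hJJ := mul_self' J
  unfold emb
  have h1 := congrArg QuaternionAlgebra.re hJJ
  have h2 := congrArg QuaternionAlgebra.imI hJJ
  have h3 := congrArg QuaternionAlgebra.imJ hJJ
  have h4 := congrArg QuaternionAlgebra.imK hJJ
  simp only [Quaternion.re_mul, Quaternion.imI_mul, Quaternion.imJ_mul, Quaternion.imK_mul,
    Quaternion.re_neg, Quaternion.imI_neg, Quaternion.imJ_neg, Quaternion.imK_neg,
    Quaternion.re_one, Quaternion.imI_one, Quaternion.imJ_one, Quaternion.imK_one] at h1 h2 h3 h4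
  ext <;>
    simp [Quaternion.re_mul, Quaternion.imI_mul, Quaternion.imJ_mul, Quaternion.imK_mul,
      Complex.mul_re, Complex.mul_im]
  · linear_combination (-(z.im * w.im)) * h1
  · linear_combination (-(z.im * w.im)) * h2
  · linear_combination (-(z.im * w.im)) * h3
  · linear_combination (-(z.im * w.im)) * h4

theorem emb_add (J : IU) (z w : ℂ) : emb J (z + w) = emb J z + emb J w := by
  unfold emb
  ext <;>
    simp [Quaternion.re_add, Quaternion.imI_add, Quaternion.imJ_add, Quaternion.imK_add,
      Quaternion.re_smul, Quaternion.imI_smul, Quaternion.imJ_smul, Quaternion.imK_smul] <;>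
    ring

theorem emb_one (J : IU) : emb J 1 = 1 := by simp [emb]

theorem emb_zero (J : IU) : emb J 0 = 0 := by simp [emb]

theorem emb_smul (J : IU) (r : ℝ) (z : ℂ) : emb J (r • z) = r • emb J z := by
  unfold emb
  ext <;>
    simp [Complex.real_smul, Complex.mul_re, Complex.mul_im,
      Quaternion.re_add, Quaternion.imI_add, Quaternion.imJ_add, Quaternion.imK_add,
      Quaternion.re_smul, Quaternion.imI_smul, Quaternion.imJ_smul, Quaternion.imK_smul] <;>
    ring

theorem emb_norm (J : IU) (z : ℂ) : ‖emb J z‖ = ‖z‖ := by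
  have hsq : ‖emb J z‖ ^ 2 = ‖z‖ ^ 2 := by
    have h1 : ‖emb J z‖ ^ 2 = Quaternion.normSq (emb J z) := by
      rw [sq, ← Quaternion.normSq_eq_norm_mul_self]
    have h2 : ‖z‖ ^ 2 = z.re ^ 2 + z.im ^ 2 := by
      rw [Complex.sq_norm, Complex.normSq_apply]; ring
    rw [h1, h2, Quaternion.normSq_def']
    unfold emb
    simp only [Quaternion.re_add, Quaternion.imI_add, Quaternion.imJ_add, Quaternion.imK_add,
      Quaternion.re_coe, Quaternion.imI_coe, Quaternion.imJ_coe, Quaternion.imK_coe,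
      Quaternion.re_smul, Quaternion.imI_smul, Quaternion.imJ_smul, Quaternion.imK_smul,
      smul_eq_mul, re_zero J]
    linear_combination (z.im ^ 2) * im_norm J
  have h3 : ‖emb J z‖ = Real.sqrt (‖emb J z‖ ^ 2) := (Real.sqrt_sq (norm_nonneg _)).symm
  rw [h3, hsq, Real.sqrt_sq (norm_nonneg _)]

theorem emb_real (J : IU) (r : ℝ) : emb J (r : ℂ) = (r : ℍ[ℝ]) := by simp [emb]

/-- `ℍ` equipped with the complex structure in which `J` acts as the imaginary unit. -/
def HJ (_ : IU) : Type := ℍ[ℝ]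

/-- Identity map `ℍ → HJ J`. -/
def ofH (J : IU) : ℍ[ℝ] → HJ J := id

/-- Identity map `HJ J → ℍ`. -/
def toH (J : IU) : HJ J → ℍ[ℝ] := id

instance (J : IU) : NormedAddCommGroup (HJ J) := inferInstanceAs (NormedAddCommGroup ℍ[ℝ])
instance (J : IU) : NormedSpace ℝ (HJ J) := inferInstanceAs (NormedSpace ℝ ℍ[ℝ])
instance (J : IU) : CompleteSpace (HJ J) := inferInstanceAs (CompleteSpace ℍ[ℝ])

instance (J : IU) : SMul ℂ (HJ J) := ⟨fun z q => ofH J (emb J z * toH J q)⟩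

instance (J : IU) : Module ℂ (HJ J) where
  one_smul q := congrArg (ofH J) (by rw [emb_one, one_mul]; rfl)
  mul_smul z w q := congrArg (ofH J) (by rw [emb_mul, mul_assoc]; rfl)
  smul_add z q r := congrArg (ofH J) (mul_add (emb J z) (toH J q) (toH J r))
  smul_zero z := congrArg (ofH J) (mul_zero _)
  add_smul z w q := congrArg (ofH J) (by rw [emb_add, add_mul]; rfl)
  zero_smul q := congrArg (ofH J) (by rw [emb_zero, zero_mul]; rfl)

instance (J : IU) : IsScalarTower ℝ ℂ (HJ J) :=
  ⟨fun r z q =>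
    congrArg (ofH J) (by rw [emb_smul]; exact smul_mul_assoc r (emb J z) (toH J q))⟩

instance (J : IU) : NormedSpace ℂ (HJ J) :=
  ⟨fun z q => by
    show ‖emb J z * toH J q‖ ≤ ‖z‖ * ‖toH J q‖
    rw [norm_mul, emb_norm]⟩

/-- A CLM into `ℍ` is also a CLM into `HJ J`. -/
def clmHJ (J : IU) (L : ℂ →L[ℝ] ℍ[ℝ]) : ℂ →L[ℝ] HJ J := L

/-- A real-differentiable function satisfying the Cauchy–Riemann equation
`∂ₓ + J ∂ᵧ = 0` is complex differentiable into `HJ J`. -/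
theorem diffAt_complex (J : IU) (G : ℂ → ℍ[ℝ]) (z : ℂ) (L : ℂ →L[ℝ] ℍ[ℝ])
    (hG : HasFDerivAt G L z) (hCR : L 1 + J.1 * L Complex.I = 0) :
    DifferentiableAt ℂ (fun w => ofH J (G w)) z := by
  have hJL : J.1 * L 1 = L Complex.I := by
    have h1 : L 1 = -(J.1 * L Complex.I) := eq_neg_of_add_eq_zero_left hCR
    rw [h1, mul_neg, ← mul_assoc, mul_self' J, neg_one_mul, neg_neg]
  let M : ℂ →L[ℂ] HJ J :=
    ContinuousLinearMap.smulRight (ContinuousLinearMap.id ℂ ℂ) (ofH J (L 1))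
  have hG' : HasFDerivAt (fun w => ofH J (G w)) (clmHJ J L) z := hG
  refine ⟨M, hasFDerivAt_of_restrictScalars ℝ hG' ?_⟩
  refine ContinuousLinearMap.ext fun w => ?_
  show emb J w * L 1 = L w
  have hw : w = w.re • (1 : ℂ) + w.im • Complex.I := by
    rw [Complex.real_smul, Complex.real_smul, mul_one, Complex.re_add_im]
  calc emb J w * L 1 = ((w.re : ℍ[ℝ]) + w.im • J.1) * L 1 := rfl
    _ = w.re • L 1 + w.im • (J.1 * L 1) := by
        rw [add_mul, Quaternion.coe_mul_eq_smul, smul_mul_assoc]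
    _ = w.re • L 1 + w.im • L Complex.I := by rw [hJL]
    _ = L (w.re • (1 : ℂ) + w.im • Complex.I) := by rw [map_add, map_smul, map_smul]
    _ = L w := by rw [← hw]

end IU

open IU in
/-- The slice function, as a function on `ℂ`, has a derivative satisfying
the Cauchy-Riemann equation. -/
theorem slice_deriv (f : ℍ[ℝ] → ℍ[ℝ]) (Ω : Set ℍ[ℝ]) (hf : SliceRegularOn f Ω)
    (I : ℍ[ℝ]) (hI : I ∈ QS) (z : ℂ) (hz : ((z.re : ℍ[ℝ]) + z.im • I) ∈ Ω) :
    ∃ L : ℂ →L[ℝ] ℍ[ℝ],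
      HasFDerivAt (fun w : ℂ => f ((w.re : ℍ[ℝ]) + w.im • I)) L z ∧
      L 1 + I * L Complex.I = 0 := by
  obtain ⟨hdiff, hCR⟩ := hf I hI (z.re, z.im) hz
  have hU : HasFDerivAt (⇑Complex.equivRealProdCLM)
      (Complex.equivRealProdCLM : ℂ →L[ℝ] ℝ × ℝ) z :=
    Complex.equivRealProdCLM.hasFDerivAt
  have hUz : (⇑Complex.equivRealProdCLM) z = (z.re, z.im) := rfl
  have hcomp := (hUz ▸ hdiff.hasFDerivAt).comp z hU
  refine ⟨(fderiv ℝ (sliceFun f I) (z.re, z.im)).comp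
      (Complex.equivRealProdCLM : ℂ →L[ℝ] ℝ × ℝ), ?_, ?_⟩
  · have hfe : (sliceFun f I ∘ ⇑Complex.equivRealProdCLM)
        = fun w : ℂ => f ((w.re : ℍ[ℝ]) + w.im • I) := rfl
    rwa [hfe] at hcomp
  · show fderiv ℝ (sliceFun f I) (z.re, z.im) ((Complex.equivRealProdCLM : ℂ →L[ℝ] ℝ × ℝ) 1)
        + I * fderiv ℝ (sliceFun f I) (z.re, z.im)
            ((Complex.equivRealProdCLM : ℂ →L[ℝ] ℝ × ℝ) Complex.I) = 0
    have h1 : (Complex.equivRealProdCLM : ℂ →L[ℝ] ℝ × ℝ) 1 = ((1 : ℝ), (0 : ℝ)) := rfl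
    have h2 : (Complex.equivRealProdCLM : ℂ →L[ℝ] ℝ × ℝ) Complex.I = ((0 : ℝ), (1 : ℝ)) := rfl
    rw [h1, h2]
    exact hCR

/-- The algebraic identity showing that the symmetrized combination satisfies the
Cauchy-Riemann equation in the slice of `Jq`. -/
theorem CR_combine (I Jq a1 a2 b1 b2 : ℍ[ℝ]) (hI : I * I = -1) (hJ : Jq * Jq = -1)
    (ha : a1 + I * a2 = 0) (hb : b1 + -I * b2 = 0) :
    ((a1 + b1) + (Jq * I) * (b1 - a1)) + Jq * ((a2 + b2) + (Jq * I) * (b2 - a2)) = 0 := by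
  have hII : ∀ v : ℍ[ℝ], I * (I * v) = -v := fun v => by rw [← mul_assoc, hI, neg_one_mul]
  have hJJ : ∀ v : ℍ[ℝ], Jq * (Jq * v) = -v := fun v => by rw [← mul_assoc, hJ, neg_one_mul]
  have ha' : a1 = -(I * a2) := eq_neg_of_add_eq_zero_left ha
  have hb' : b1 = I * b2 := by
    have h := eq_neg_of_add_eq_zero_left hb
    rwa [neg_mul, neg_neg] at h
  subst ha' hb'
  simp only [mul_add, mul_sub, mul_neg, sub_eq_add_neg, neg_add_rev, neg_neg,
    mul_assoc, hII, hJJ]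
  abel

open IU in
/-- The doubled representation formula. -/
theorem rep_formula (Ω : Set ℍ[ℝ]) (hopen : IsOpen Ω) (hax : AxSymm Ω)
    (r₀ : ℝ) (hr₀ : (r₀ : ℍ[ℝ]) ∈ Ω)
    (hslices : ∀ I ∈ QS, IsConnected {q ∈ Ω | ∃ a b : ℝ, q = (a : ℍ[ℝ]) + b • I})
    (f : ℍ[ℝ] → ℍ[ℝ]) (hf : SliceRegularOn f Ω)
    (I Jq : ℍ[ℝ]) (hI : I ∈ QS) (hIn : -I ∈ QS) (hJ : Jq ∈ QS)
    (x y : ℝ) (hmem : (x : ℍ[ℝ]) + y • Jq ∈ Ω) :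
    f ((x : ℍ[ℝ]) + y • Jq) + f ((x : ℍ[ℝ]) + y • Jq)
      = (f ((x : ℍ[ℝ]) + y • I) + f ((x : ℍ[ℝ]) + y • (-I)))
        + (Jq * I) * (f ((x : ℍ[ℝ]) + y • (-I)) - f ((x : ℍ[ℝ]) + y • I)) := by
  classical
  set Ju : IU := ⟨Jq, hJ⟩ with hJu
  set D : Set ℂ := {z : ℂ | ((z.re : ℍ[ℝ]) + z.im • Jq) ∈ Ω} with hD
  have hDopen : IsOpen D := by
    have hcont : Continuous fun z : ℂ => ((z.re : ℍ[ℝ]) + z.im • Jq) :=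
      ((Quaternion.continuous_coe).comp Complex.continuous_re).add
        (Complex.continuous_im.smul continuous_const)
    exact hopen.preimage hcont
  have hmem' : ∀ z ∈ D, ∀ K, K ∈ QS → ((z.re : ℍ[ℝ]) + z.im • K) ∈ Ω := by
    intro z hz K hK
    exact hax z.re z.im Jq hJ hz ⟨K, hK, rfl⟩
  set Ψ : ℂ → ℍ[ℝ] :=
    fun z => f ((z.re : ℍ[ℝ]) + z.im • Jq) + f ((z.re : ℍ[ℝ]) + z.im • Jq) with hΨ
  set Φ : ℂ → ℍ[ℝ] := fun z =>
    (f ((z.re : ℍ[ℝ]) + z.im • I) + f ((z.re : ℍ[ℝ]) + z.im • (-I)))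
      + (Jq * I) * (f ((z.re : ℍ[ℝ]) + z.im • (-I)) - f ((z.re : ℍ[ℝ]) + z.im • I)) with hΦ
  have hIm : I * I = -1 := by rw [← sq]; exact hI
  have hJm : Jq * Jq = -1 := by rw [← sq]; exact hJ
  have hΨdiff : ∀ z ∈ D, DifferentiableAt ℂ (fun w => ofH Ju (Ψ w)) z := by
    intro z hz
    obtain ⟨L, hL, hLCR⟩ := slice_deriv f Ω hf Jq hJ z hz
    refine diffAt_complex Ju Ψ z (L + L) (hL.add hL) ?_
    show (L 1 + L 1) + Jq * (L Complex.I + L Complex.I) = 0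
    have h2 : Jq * L Complex.I = -(L 1) := by
      have := eq_neg_of_add_eq_zero_right hLCR
      rw [this]
    rw [mul_add, h2]
    abel
  have hΦdiff : ∀ z ∈ D, DifferentiableAt ℂ (fun w => ofH Ju (Φ w)) z := by
    intro z hz
    obtain ⟨A, hA, hACR⟩ := slice_deriv f Ω hf I hI z (hmem' z hz I hI)
    obtain ⟨B, hB, hBCR⟩ := slice_deriv f Ω hf (-I) hIn z (hmem' z hz (-I) hIn)
    have hderiv : HasFDerivAt Φ
        ((A + B) + (ContinuousLinearMap.mul ℝ ℍ[ℝ] (Jq * I)).comp (B - A)) z :=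
      (hA.add hB).add
        ((ContinuousLinearMap.mul ℝ ℍ[ℝ] (Jq * I)).hasFDerivAt.comp z (hB.sub hA))
    refine diffAt_complex Ju Φ z _ hderiv ?_
    show ((A 1 + B 1) + (Jq * I) * (B 1 - A 1))
        + Jq * ((A Complex.I + B Complex.I) + (Jq * I) * (B Complex.I - A Complex.I)) = 0
    exact CR_combine I Jq (A 1) (A Complex.I) (B 1) (B Complex.I) hIm hJm hACR hBCR
  have hΨa : AnalyticOnNhd ℂ (fun w => ofH Ju (Ψ w)) D :=
    DifferentiableOn.analyticOnNhd (fun z hz => (hΨdiff z hz).differentiableWithinAt) hDopen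
  have hΦa : AnalyticOnNhd ℂ (fun w => ofH Ju (Φ w)) D :=
    DifferentiableOn.analyticOnNhd (fun z hz => (hΦdiff z hz).differentiableWithinAt) hDopen
  -- connectedness of the planar domain
  have hre0 : Jq.re = 0 := re_zero Ju
  have him0 : Jq.imI ^ 2 + Jq.imJ ^ 2 + Jq.imK ^ 2 = 1 := im_norm Ju
  have hqre : ∀ a b : ℝ, ((a : ℍ[ℝ]) + b • Jq).re = a := by
    intro a b
    simp [Quaternion.re_add, Quaternion.re_smul, hre0]
  have hDconn : IsPreconnected D := by
    obtain hc := hslices Jq hJ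
    set dot : ℍ[ℝ] → ℝ := fun q => q.imI * Jq.imI + q.imJ * Jq.imJ + q.imK * Jq.imK with hdotdef
    set rmap : ℍ[ℝ] → ℂ := fun q => (q.re : ℂ) + (dot q : ℂ) * Complex.I with hrmap
    have hrcont : Continuous rmap := by
      apply Continuous.add
      · exact Complex.continuous_ofReal.comp Quaternion.continuous_re
      · refine Continuous.mul ?_ continuous_const
        refine Complex.continuous_ofReal.comp ?_
        exact ((Quaternion.continuous_imI.mul continuous_const).add
          (Quaternion.continuous_imJ.mul continuous_const)).add
          (Quaternion.continuous_imK.mul continuous_const)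
    have hdot_eval : ∀ a b : ℝ, dot ((a : ℍ[ℝ]) + b • Jq) = b := by
      intro a b
      rw [hdotdef]
      simp only [Quaternion.imI_add, Quaternion.imJ_add, Quaternion.imK_add,
        Quaternion.imI_coe, Quaternion.imJ_coe, Quaternion.imK_coe,
        Quaternion.imI_smul, Quaternion.imJ_smul, Quaternion.imK_smul, smul_eq_mul,
        zero_add]
      linear_combination b * him0
    have hrm_eval : ∀ a b : ℝ, rmap ((a : ℍ[ℝ]) + b • Jq) = ⟨a, b⟩ := by
      intro a b
      rw [hrmap]
      simp only [hdot_eval, hqre]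
      exact Complex.ext (by simp) (by simp)
    have him : D = rmap '' {q ∈ Ω | ∃ a b : ℝ, q = (a : ℍ[ℝ]) + b • Jq} := by
      ext z
      constructor
      · intro hz
        refine ⟨(z.re : ℍ[ℝ]) + z.im • Jq, ⟨hz, z.re, z.im, rfl⟩, ?_⟩
        rw [hrm_eval]
      · rintro ⟨q, ⟨hq, a, b, rfl⟩, rfl⟩
        rw [hrm_eval]
        show ((Complex.mk a b).re : ℍ[ℝ]) + (Complex.mk a b).im • Jq ∈ Ω
        simpa using hq
    rw [him]
    exact (hc.image rmap hrcont.continuousOn).isPreconnected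
  -- the reference real point
  have hz₀D : ((r₀ : ℝ) : ℂ) ∈ D := by
    show (((r₀ : ℂ).re : ℍ[ℝ]) + (r₀ : ℂ).im • Jq) ∈ Ω
    simpa using hr₀
  -- the two functions agree on the reals
  have hreal : ∀ t : ℝ, Ψ ((t : ℝ) : ℂ) = Φ ((t : ℝ) : ℂ) := by
    intro t
    rw [hΨ, hΦ]
    simp
  have hfreq : ∃ᶠ z in 𝓝[≠] ((r₀ : ℝ) : ℂ),
      (fun w => ofH Ju (Ψ w)) z = (fun w => ofH Ju (Φ w)) z := by
    have htend : Tendsto (fun n : ℕ => ((r₀ + ((n : ℝ) + 1)⁻¹ : ℝ) : ℂ)) atTop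
        (𝓝[≠] ((r₀ : ℝ) : ℂ)) := by
      rw [tendsto_nhdsWithin_iff]
      constructor
      · have h1 : Tendsto (fun n : ℕ => r₀ + ((n : ℝ) + 1)⁻¹) atTop (𝓝 r₀) := by
          have h0 : Tendsto (fun n : ℕ => ((n : ℝ) + 1)⁻¹) atTop (𝓝 (0 : ℝ)) := by
            simpa [one_div] using tendsto_one_div_add_atTop_nhds_zero_nat (𝕜 := ℝ)
          have hc : Tendsto (fun _ : ℕ => r₀) atTop (𝓝 r₀) := tendsto_const_nhds
          simpa using hc.add h0
        exact (Complex.continuous_ofReal.tendsto r₀).comp h1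
      · refine Eventually.of_forall fun n => ?_
        have hne : ((n : ℝ) + 1)⁻¹ ≠ 0 := by positivity
        simp only [Set.mem_compl_iff, Set.mem_singleton_iff]
        intro hcon
        rw [Complex.ofReal_inj] at hcon
        exact hne (by linarith)
    exact htend.frequently (Frequently.of_forall fun n => congrArg (ofH Ju) (hreal _))
  have heq := hΨa.eqOn_of_preconnected_of_frequently_eq hΦa hDconn hz₀D hfreq
  have hz₁D : (Complex.mk x y) ∈ D := by
    show (((Complex.mk x y).re : ℍ[ℝ]) + (Complex.mk x y).im • Jq) ∈ Ω
    exact hmem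
  have hfin : Ψ (Complex.mk x y) = Φ (Complex.mk x y) := heq hz₁D
  rw [hΨ, hΦ] at hfin
  exact hfin

end SliceProofAux

/-- a slice regular function on a symmetric slice domain is affine on
every sphere `x + y𝕊` contained in the domain: `f(x+yJ) = a + J·b`. -/
theorem sliceRegular_affine_on_spheres (Ω : Set ℍ[ℝ]) (hΩ : SymmSliceDomain Ω)
    (f : ℍ[ℝ] → ℍ[ℝ]) (hf : SliceRegularOn f Ω) (x y : ℝ)
    (hsub : qSphere x y ⊆ Ω) :
    ∃ a b : ℍ[ℝ], ∀ J ∈ QS, f ((x : ℍ[ℝ]) + y • J) = a + J * b := by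
  obtain ⟨hopen, hconn, hax, ⟨r₀, hr₀⟩, hslices⟩ := hΩ
  set I : ℍ[ℝ] := ⟨0, 1, 0, 0⟩ with hIdef
  have hI : I ∈ QS := by
    show I ^ 2 = -1
    rw [sq, hIdef]
    change ((⟨0, 1, 0, 0⟩ : ℍ[ℝ]) * ⟨0, 1, 0, 0⟩) = -1
    ext <;>
      simp [Quaternion.re_mul, Quaternion.imI_mul, Quaternion.imJ_mul, Quaternion.imK_mul]
  have hIn : -I ∈ QS := by
    show (-I) ^ 2 = -1
    rw [neg_sq]
    exact hI
  refine ⟨(2⁻¹ : ℝ) • (f ((x : ℍ[ℝ]) + y • I) + f ((x : ℍ[ℝ]) + y • (-I))),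
          (2⁻¹ : ℝ) • (I * (f ((x : ℍ[ℝ]) + y • (-I)) - f ((x : ℍ[ℝ]) + y • I))), ?_⟩
  intro Jq hJ
  have hmem : (x : ℍ[ℝ]) + y • Jq ∈ Ω := hsub ⟨Jq, hJ, rfl⟩
  have key := SliceProofAux.rep_formula Ω hopen hax r₀ hr₀ hslices f hf I Jq hI hIn hJ x y hmem
  have h2 : f ((x : ℍ[ℝ]) + y • Jq)
      = (2⁻¹ : ℝ) • (f ((x : ℍ[ℝ]) + y • Jq) + f ((x : ℍ[ℝ]) + y • Jq)) := by
    rw [← two_smul ℝ, smul_smul]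
    norm_num
  rw [h2, key, smul_add, mul_smul_comm, mul_assoc]
end
end

section
/- Let Ω ⊆ ℍ be a symmetric slice domain, let x₀,y₀ ∈ ℝ with x₀+y₀𝕊 ⊆ Ω, and let f be slice regular on Ω ∖ (x₀+y₀𝕊). Assume that each point of x₀+y₀𝕊 is at worst a pole of f, i.e. there exists m ∈ ℕ such that for every I ∈ 𝕊 the function z ↦ (z−(x₀+y₀I))^m f(z), restricted to L_I, is bounded on a punctured neighborhood of x₀+y₀I in L_I. Then there exist k ∈ ℕ, R > 0 with U(x₀+y₀𝕊, R) ⊆ Ω, and a unique slice regular function g : U(x₀+y₀𝕊, R) → ℍ such that f(q) = ((q−x₀)²+y₀²)^{−k} g(q) for all q ∈ U(x₀+y₀𝕊, R) ∖ (x₀+y₀𝕊). -/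
open Quaternion Filter Topology

noncomputable section

theorem QS_mk : ((⟨0,1,0,0⟩ : ℍ[ℝ]) ∈ QS) := by
  show _ = _
  refine (pow_two _).trans ?_
  ext
  · exact (Quaternion.re_mul _ _).trans (by norm_num)
  · exact (Quaternion.imI_mul _ _).trans (by norm_num)
  · exact (Quaternion.imJ_mul _ _).trans (by norm_num)
  · exact (Quaternion.imK_mul _ _).trans (by norm_num)

theorem QS_re {I : ℍ[ℝ]} (h : I ∈ QS) : I.re = 0 ∧ I.imI^2 + I.imJ^2 + I.imK^2 = 1 := by
  have h' : I * I = -1 := by rw [← pow_two]; exact h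
  have h1 := congrArg QuaternionAlgebra.re h'
  have h2 := congrArg QuaternionAlgebra.imI h'
  have h3 := congrArg QuaternionAlgebra.imJ h'
  have h4 := congrArg QuaternionAlgebra.imK h'
  simp [Quaternion.re_mul, Quaternion.imI_mul, Quaternion.imJ_mul, Quaternion.imK_mul] at h1 h2 h3 h4
  ring_nf at h1 h2 h3 h4
  have hre : I.re = 0 := by
    by_contra hre
    have hI : I.imI = 0 := by
      rcases mul_eq_zero.mp (by linarith : I.re * I.imI = 0) with h | h
      · exact absurd h hre
      · exact h
    have hJ : I.imJ = 0 := by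
      rcases mul_eq_zero.mp (by linarith : I.re * I.imJ = 0) with h | h
      · exact absurd h hre
      · exact h
    have hK : I.imK = 0 := by
      rcases mul_eq_zero.mp (by linarith : I.re * I.imK = 0) with h | h
      · exact absurd h hre
      · exact h
    rw [hI, hJ, hK] at h1
    nlinarith
  refine ⟨hre, by rw [hre] at h1; nlinarith⟩

def ImU : Type := {I : ℍ[ℝ] // I * I = -1}

def Sl (_ : ImU) : Type := ℍ[ℝ]

instance (u : ImU) : NormedAddCommGroup (Sl u) := inferInstanceAs (NormedAddCommGroup ℍ[ℝ])
instance (u : ImU) : NormedSpace ℝ (Sl u) := inferInstanceAs (NormedSpace ℝ ℍ[ℝ])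
instance (u : ImU) : CompleteSpace (Sl u) := inferInstanceAs (CompleteSpace ℍ[ℝ])

def phvi (u : ImU) : ℂ →ₐ[ℝ] ℍ[ℝ] := Complex.liftAux u.1 u.2

theorem phi_apply (u : ImU) (z : ℂ) : phvi u z = (z.re : ℍ[ℝ]) + z.im • u.1 := by
  rw [phvi, Complex.liftAux_apply]
  norm_num

theorem u_mem_QS (u : ImU) : u.1 ∈ QS := by
  show _ = _ ; rw [pow_two]; exact u.2

theorem norm_phi (u : ImU) (z : ℂ) : ‖phvi u z‖ = ‖z‖ := by
  obtain ⟨hre, hsq⟩ := QS_re (u_mem_QS u)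
  have h2 : ‖phvi u z‖^2 = ‖z‖ ^ 2 := by
    rw [sq, ← Quaternion.normSq_eq_norm_mul_self, phi_apply, Complex.sq_norm]
    simp [Quaternion.normSq_def', Complex.normSq_apply, hre]
    ring_nf
    nlinarith [hsq]
  have := norm_nonneg z
  nlinarith [norm_nonneg (phvi u z)]

instance (u : ImU) : Module ℂ (Sl u) := Module.compHom ℍ[ℝ] (phvi u).toRingHom

def Sl.toH {u : ImU} (q : Sl u) : ℍ[ℝ] := q
def Sl.ofH {u : ImU} (q : ℍ[ℝ]) : Sl u := q

theorem smul_def (u : ImU) (z : ℂ) (q : Sl u) : (z • q).toH = phvi u z * q.toH := rfl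

instance (u : ImU) : IsScalarTower ℝ ℂ (Sl u) :=
  ⟨fun r z q => by
    show Sl.ofH (phvi u (r • z) * q.toH) = Sl.ofH (r • (phvi u z * q.toH))
    rw [map_smul, smul_mul_assoc]⟩

instance (u : ImU) : IsScalarTower ℂ ℂ (Sl u) :=
  ⟨fun r z q => by
    show Sl.ofH (phvi u (r * z) * q.toH) = Sl.ofH (phvi u r * (phvi u z * q.toH))
    rw [map_mul, mul_assoc]⟩

instance (u : ImU) : SMulCommClass ℂ ℂ (Sl u) :=
  ⟨fun r z q => by
    show Sl.ofH (phvi u r * (phvi u z * q.toH)) = Sl.ofH (phvi u z * (phvi u r * q.toH))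
    rw [← mul_assoc, ← mul_assoc, ← map_mul, ← map_mul, mul_comm r z]⟩

instance (u : ImU) : NormedSpace ℂ (Sl u) :=
  ⟨fun z q => by
    show ‖phvi u z * q.toH‖ ≤ ‖z‖ * ‖q.toH‖
    rw [norm_mul, norm_phi]⟩

/-- extensionality on the real basis 1, i of ℂ -/
theorem ext_RCLM (u : ImU) (A B : ℂ →L[ℝ] Sl u) (h1 : A 1 = B 1)
    (hi : A Complex.I = B Complex.I) : A = B := by
  ext z
  have hz : z.re • (1 : ℂ) + z.im • Complex.I = z := by simp [Complex.real_smul]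
  conv_lhs => rw [← hz]
  conv_rhs => rw [← hz]
  rw [map_add, map_add, map_smul, map_smul, map_smul, map_smul, h1, hi]

theorem hasFDeriv_of_restrict (u : ImU) {f : ℂ → Sl u} {G : ℂ →L[ℂ] Sl u} {x : ℂ}
    (h : HasFDerivAt f (G.restrictScalars ℝ) x) : HasFDerivAt f G x := by
  rw [hasFDerivAt_iff_isLittleO_nhds_zero] at h ⊢
  simpa using h

def cK (u : ImU) (h : ℍ[ℝ] → ℍ[ℝ]) : ℂ → Sl u := fun z => Sl.ofH (h (phvi u z))

theorem cK_eq (u : ImU) (h : ℍ[ℝ] → ℍ[ℝ]) (z : ℂ) :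
    cK u h z = Sl.ofH (sliceFun h u.1 (Complex.equivRealProdCLM z)) := by
  rw [cK, phi_apply]
  rfl

theorem slice_iff (u : ImU) (h : ℍ[ℝ] → ℍ[ℝ]) (p : ℝ × ℝ) :
    (DifferentiableAt ℝ (sliceFun h u.1) p ∧
      fderiv ℝ (sliceFun h u.1) p (1, 0) + u.1 * fderiv ℝ (sliceFun h u.1) p (0, 1) = 0)
    ↔ DifferentiableAt ℂ (cK u h) ((p.1 : ℂ) + (p.2 : ℂ) * Complex.I) := by
  set z0 : ℂ := (p.1 : ℂ) + (p.2 : ℂ) * Complex.I with hz0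
  have eRP : ∀ z : ℂ, Complex.equivRealProdCLM z = (z.re, z.im) := fun z => rfl
  have hEz0 : Complex.equivRealProdCLM z0 = p := by
    rw [eRP]
    simp [hz0]
  have hfun : cK u h = fun z => Sl.ofH (sliceFun h u.1 (Complex.equivRealProdCLM z)) :=
    funext (cK_eq u h)
  constructor
  · rintro ⟨hd, hcr⟩
    set D := fderiv ℝ (sliceFun h u.1) p with hD
    have hDp : HasFDerivAt (sliceFun h u.1) D p := hd.hasFDerivAt
    -- transport to Sl u
    let DS : (ℝ × ℝ) →L[ℝ] Sl u := D
    have hDp' : HasFDerivAt (fun q => Sl.ofH (u := u) (sliceFun h u.1 q)) DS p := hDp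
    have hC : HasFDerivAt (cK u h)
        (DS.comp (Complex.equivRealProdCLM : ℂ →L[ℝ] ℝ × ℝ)) z0 := by
      rw [hfun]
      rw [← hEz0] at hDp'
      exact hDp'.comp z0 (Complex.equivRealProdCLM.toContinuousLinearMap.hasFDerivAt (x := z0))
    set X : Sl u := Sl.ofH (D (1, 0)) with hX
    set G : ℂ →L[ℂ] Sl u := ContinuousLinearMap.toSpanSingleton ℂ X with hG
    have hGR : G.restrictScalars ℝ = DS.comp
        (Complex.equivRealProdCLM : ℂ →L[ℝ] ℝ × ℝ) := by
      apply ext_RCLM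
      · show (1 : ℂ) • X = Sl.ofH (u := u) (D (Complex.equivRealProdCLM 1))
        rw [one_smul]
        have h1 : Complex.equivRealProdCLM (1 : ℂ) = ((1 : ℝ), (0 : ℝ)) := by
          rw [eRP]; simp
        rw [h1]
      · show (Complex.I : ℂ) • X = Sl.ofH (u := u) (D (Complex.equivRealProdCLM Complex.I))
        have h1 : Complex.equivRealProdCLM (Complex.I) = ((0 : ℝ), (1 : ℝ)) := by
          rw [eRP]; simp
        rw [h1]
        have h2 : (Complex.I • X).toH = u.1 * X.toH := by
          rw [smul_def]
          congr 1
          rw [phvi]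
          exact Complex.liftAux_apply_I u.1 u.2
        show Sl.ofH (u := u) ((Complex.I • X).toH) = Sl.ofH (u := u) (D (0, 1))
        rw [h2]
        have h3 : u.1 * D (1, 0) = D (0, 1) := by
          have h4 : u.1 * (D (1, 0) + u.1 * D (0, 1)) = 0 := by
            rw [hcr, mul_zero]
          rw [mul_add, ← mul_assoc, u.2, neg_one_mul, add_neg_eq_zero] at h4
          exact h4
        show Sl.ofH (u := u) (u.1 * D (1, 0)) = Sl.ofH (u := u) (D (0, 1))
        rw [h3]
    rw [← hGR] at hC
    exact (hasFDeriv_of_restrict u hC).differentiableAt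
  · intro hC
    set G := fderiv ℂ (cK u h) z0 with hG
    have hGd : HasFDerivAt (cK u h) G z0 := hC.hasFDerivAt
    have hGR : HasFDerivAt (cK u h) (G.restrictScalars ℝ) z0 := hGd.restrictScalars ℝ
    have hsl : (fun q => Sl.ofH (sliceFun h u.1 q)) = (cK u h) ∘ (Complex.equivRealProdCLM.symm) := by
      funext q
      show Sl.ofH (sliceFun h u.1 q) = cK u h (Complex.equivRealProdCLM.symm q)
      rw [cK_eq, Complex.equivRealProdCLM.apply_symm_apply]
    have hsymm : Complex.equivRealProdCLM.symm p = z0 := by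
      rw [Complex.equivRealProdCLM_symm_apply]
    have hd' : HasFDerivAt (fun q => Sl.ofH (sliceFun h u.1 q))
        ((G.restrictScalars ℝ).comp (Complex.equivRealProdCLM.symm : (ℝ × ℝ) →L[ℝ] ℂ)) p := by
      rw [hsl]
      exact HasFDerivAt.comp p (hsymm ▸ hGR)
        (Complex.equivRealProdCLM.symm.toContinuousLinearMap.hasFDerivAt (x := p))
    set L := (G.restrictScalars ℝ).comp (Complex.equivRealProdCLM.symm : (ℝ × ℝ) →L[ℝ] ℂ) with hL
    have hdH : HasFDerivAt (sliceFun h u.1) (L : (ℝ × ℝ) →L[ℝ] ℍ[ℝ]) p := hd'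
    refine ⟨hdH.differentiableAt, ?_⟩
    have hfd := @HasFDerivAt.fderiv ℝ _ (ℝ × ℝ) _ _ _ ℍ[ℝ] _ _ _ _ _ _ _ _ _ _ _ hdH
    rw [hfd]
    have e10 : Complex.equivRealProdCLM.symm ((1 : ℝ), (0 : ℝ)) = 1 := by
      rw [Complex.equivRealProdCLM_symm_apply]; simp
    have e01 : Complex.equivRealProdCLM.symm ((0 : ℝ), (1 : ℝ)) = Complex.I := by
      rw [Complex.equivRealProdCLM_symm_apply]; simp
    have hv1 : (L : (ℝ × ℝ) →L[ℝ] ℍ[ℝ]) (1, 0) = (G 1).toH := by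
      show (G (Complex.equivRealProdCLM.symm (1, 0))).toH = (G 1).toH
      rw [e10]
    have hvI : (L : (ℝ × ℝ) →L[ℝ] ℍ[ℝ]) (0, 1) = (G Complex.I).toH := by
      show (G (Complex.equivRealProdCLM.symm (0, 1))).toH = (G Complex.I).toH
      rw [e01]
    show (G (Complex.equivRealProdCLM.symm (1, 0))).toH + ↑u.1 * (G (Complex.equivRealProdCLM.symm (0, 1))).toH = 0
    rw [e10, e01]
    have hGI : G Complex.I = Complex.I • G 1 := by
      rw [← map_smul, smul_eq_mul, mul_one]
    rw [hGI, smul_def]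
    show (G 1).toH + u.1 * ((phvi u Complex.I) * (G 1).toH) = 0
    rw [show phvi u Complex.I = u.1 from Complex.liftAux_apply_I u.1 u.2, ← mul_assoc, u.2,
      neg_one_mul]
    exact add_neg_cancel _

theorem smul_QS_sq {y : ℝ} {I : ℍ[ℝ]} (hI : I ∈ QS) :
    (y • I) ^ 2 = -((y : ℍ[ℝ]) ^ 2) := by
  rw [smul_pow, show I ^ 2 = -1 from hI, smul_neg, ← Quaternion.coe_pow]
  congr 1
  rw [show (1 : ℍ[ℝ]) = ((1 : ℝ) : ℍ[ℝ]) by norm_num, Quaternion.smul_coe, mul_one]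

theorem mem_qSphere_iff {x0 y0 : ℝ} {q : ℍ[ℝ]} :
    q ∈ qSphere x0 y0 ↔ (q - (x0 : ℍ[ℝ])) ^ 2 + ((y0 : ℍ[ℝ])) ^ 2 = 0 := by
  constructor
  · rintro ⟨I, hI, rfl⟩
    rw [add_sub_cancel_left, smul_QS_sq hI, neg_add_cancel]
  · intro h
    by_cases hy : y0 = 0
    · refine ⟨⟨0,1,0,0⟩, QS_mk, ?_⟩
      subst hy
      have h2 : (q - (x0 : ℍ[ℝ])) ^ 2 = 0 := by simpa using h
      have h3 : q - (x0 : ℍ[ℝ]) = 0 := by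
        exact pow_eq_zero_iff (two_ne_zero) |>.mp h2
      rw [sub_eq_zero] at h3
      rw [h3]
      simp
      exact zero_smul _ _
    · set w := q - (x0 : ℍ[ℝ]) with hw
      have hw2 : w ^ 2 = -((y0 : ℍ[ℝ]) ^ 2) := by
        rw [eq_neg_of_add_eq_zero_left h]
      refine ⟨y0⁻¹ • w, ?_, ?_⟩
      · show _ = _
        rw [smul_pow, hw2, smul_neg, ← Quaternion.coe_pow, Quaternion.smul_coe]
        have hh : y0⁻¹ ^ 2 * y0 ^ 2 = 1 := by field_simp
        rw [hh]
        norm_num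
      · rw [smul_smul, mul_inv_cancel₀ hy, one_smul, hw]
        abel

theorem continuous_aQ (x0 y0 : ℝ) :
    Continuous fun q : ℍ[ℝ] => ‖(q - (x0 : ℍ[ℝ])) ^ 2 + ((y0 : ℍ[ℝ])) ^ 2‖ := by
  fun_prop

theorem isOpen_sphU (x0 y0 R : ℝ) : IsOpen (sphU x0 y0 R) :=
  isOpen_lt (continuous_aQ x0 y0) continuous_const

theorem sphere_subset_sphU {x0 y0 R : ℝ} (hR : 0 < R) : qSphere x0 y0 ⊆ sphU x0 y0 R := by
  intro q hq
  show ‖_‖ < R ^ 2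
  rw [mem_qSphere_iff.mp hq]
  simpa using pow_pos hR 2

theorem exists_R {Ω : Set ℍ[ℝ]} (hO : IsOpen Ω) {x0 y0 : ℝ} (hsub : qSphere x0 y0 ⊆ Ω) :
    ∃ R : ℝ, 0 < R ∧ sphU x0 y0 R ⊆ Ω := by
  set T : Set ℍ[ℝ] := Metric.closedBall (x0 : ℍ[ℝ]) (Real.sqrt (1 + y0 ^ 2) + 1) \ Ω with hT
  have hTc : IsCompact T := by
    apply (isCompact_closedBall _ _).diff hO
  have key : ∃ ε : ℝ, 0 < ε ∧ ∀ q ∈ T, ε ≤ ‖(q - (x0 : ℍ[ℝ])) ^ 2 + ((y0 : ℍ[ℝ])) ^ 2‖ := by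
    rcases T.eq_empty_or_nonempty with hE | hNE
    · exact ⟨1, one_pos, by rw [hE]; simp⟩
    · obtain ⟨q0, hq0T, hq0min⟩ := hTc.exists_isMinOn hNE (continuous_aQ x0 y0).continuousOn
      refine ⟨‖(q0 - (x0 : ℍ[ℝ])) ^ 2 + ((y0 : ℍ[ℝ])) ^ 2‖, ?_, fun q hq => hq0min hq⟩
      rw [norm_pos_iff]
      intro hz
      exact hq0T.2 (hsub (mem_qSphere_iff.mpr hz))
  obtain ⟨ε, hε, hmin⟩ := key
  refine ⟨min 1 (Real.sqrt ε), lt_min one_pos (Real.sqrt_pos.mpr hε), ?_⟩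
  intro q hq
  have hq' : ‖(q - (x0 : ℍ[ℝ])) ^ 2 + ((y0 : ℍ[ℝ])) ^ 2‖ < min 1 (Real.sqrt ε) ^ 2 := hq
  have hlt1 : ‖(q - (x0 : ℍ[ℝ])) ^ 2 + ((y0 : ℍ[ℝ])) ^ 2‖ < 1 := by
    calc _ < min 1 (Real.sqrt ε) ^ 2 := hq'
    _ ≤ 1 ^ 2 := by
        apply pow_le_pow_left₀ (le_min zero_le_one (Real.sqrt_nonneg ε)) (min_le_left _ _)
    _ = 1 := one_pow 2
  have hltε : ‖(q - (x0 : ℍ[ℝ])) ^ 2 + ((y0 : ℍ[ℝ])) ^ 2‖ < ε := by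
    calc _ < min 1 (Real.sqrt ε) ^ 2 := hq'
    _ ≤ Real.sqrt ε ^ 2 := by
        apply pow_le_pow_left₀ (le_min zero_le_one (Real.sqrt_nonneg ε)) (min_le_right _ _)
    _ = ε := Real.sq_sqrt hε.le
  by_contra hqΩ
  have hqT : q ∈ T := by
    refine ⟨?_, hqΩ⟩
    rw [Metric.mem_closedBall]
    have h1 : ‖(q - (x0 : ℍ[ℝ])) ^ 2‖ ≤ ‖(q - (x0 : ℍ[ℝ])) ^ 2 + ((y0 : ℍ[ℝ])) ^ 2‖ + ‖((y0 : ℍ[ℝ])) ^ 2‖ := by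
      calc ‖(q - (x0 : ℍ[ℝ])) ^ 2‖ = ‖((q - (x0 : ℍ[ℝ])) ^ 2 + ((y0 : ℍ[ℝ])) ^ 2) - ((y0 : ℍ[ℝ])) ^ 2‖ := by
            congr 1; abel
      _ ≤ _ := norm_sub_le _ _
    have h2 : ‖((y0 : ℍ[ℝ])) ^ 2‖ = y0 ^ 2 := by
      rw [norm_pow, Quaternion.norm_coe, Real.norm_eq_abs, sq_abs]
    have h3 : ‖q - (x0 : ℍ[ℝ])‖ ^ 2 < 1 + y0 ^ 2 := by
      rw [← norm_pow]
      calc ‖(q - (x0 : ℍ[ℝ])) ^ 2‖ ≤ _ := h1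
      _ < 1 + y0 ^ 2 := by rw [h2]; linarith
    have h4 : ‖q - (x0 : ℍ[ℝ])‖ ≤ Real.sqrt (1 + y0 ^ 2) := by
      rw [← Real.sqrt_sq (norm_nonneg _)]
      exact Real.sqrt_le_sqrt h3.le
    rw [dist_eq_norm]
    linarith
  exact absurd (hmin q hqT) (not_le.mpr hltε)

theorem phi_real (u : ImU) (x : ℝ) : phvi u ((x : ℂ)) = ((x : ℝ) : ℍ[ℝ]) := by
  rw [← Complex.coe_algebraMap, AlgHom.commutes]
  exact congrFun QuaternionAlgebra.coe_algebraMap x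

theorem phi_A (u : ImU) (x0 y0 : ℝ) (z : ℂ) :
    (phvi u z - ((x0 : ℝ) : ℍ[ℝ])) ^ 2 + (((y0 : ℝ) : ℍ[ℝ])) ^ 2
      = phvi u ((z - (x0 : ℂ)) ^ 2 + ((y0 : ℂ)) ^ 2) := by
  rw [map_add, map_pow, map_pow, map_sub, phi_real, phi_real]

theorem phi_eq_zero_iff (u : ImU) (w : ℂ) : phvi u w = 0 ↔ w = 0 := by
  constructor
  · intro h
    have := norm_phi u w
    rw [h, norm_zero] at this
    exact norm_eq_zero.mp this.symm
  · rintro rfl; exact map_zero _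

theorem mem_sphere_slice (u : ImU) (x0 y0 : ℝ) (z : ℂ) :
    phvi u z ∈ qSphere x0 y0 ↔ (z - (x0 : ℂ)) ^ 2 + ((y0 : ℂ)) ^ 2 = 0 := by
  rw [mem_qSphere_iff, phi_A, phi_eq_zero_iff]

theorem mem_sphU_slice (u : ImU) (x0 y0 R : ℝ) (z : ℂ) :
    phvi u z ∈ sphU x0 y0 R ↔ ‖(z - (x0 : ℂ)) ^ 2 + ((y0 : ℂ)) ^ 2‖ < R ^ 2 := by
  show ‖_‖ < R ^ 2 ↔ _
  rw [phi_A, norm_phi]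

theorem A_factor (x0 y0 : ℝ) (z : ℂ) :
    (z - (x0 : ℂ)) ^ 2 + ((y0 : ℂ)) ^ 2
      = (z - ((x0 : ℂ) + (y0 : ℂ) * Complex.I)) * (z - ((x0 : ℂ) - (y0 : ℂ) * Complex.I)) := by
  linear_combination ((y0 : ℂ) ^ 2) * Complex.I_sq

open scoped Classical in
def gfun (x0 y0 : ℝ) (k : ℕ) (f : ℍ[ℝ] → ℍ[ℝ]) : ℍ[ℝ] → ℍ[ℝ] := fun q =>
  if q ∈ qSphere x0 y0 then 0 else ((q - (x0 : ℍ[ℝ])) ^ 2 + ((y0 : ℍ[ℝ])) ^ 2) ^ k * f q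

open scoped Classical in
theorem cK_gfun (u : ImU) (x0 y0 : ℝ) (k : ℕ) (f : ℍ[ℝ] → ℍ[ℝ]) (z : ℂ) :
    cK u (gfun x0 y0 k f) z = if (z - (x0 : ℂ)) ^ 2 + ((y0 : ℂ)) ^ 2 = 0 then 0
      else ((z - (x0 : ℂ)) ^ 2 + ((y0 : ℂ)) ^ 2) ^ k • cK u f z := by
  show Sl.ofH (u := u) (gfun x0 y0 k f (phvi u z)) = _
  rw [gfun]
  by_cases hz : (z - (x0 : ℂ)) ^ 2 + ((y0 : ℂ)) ^ 2 = 0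
  · rw [if_pos ((mem_sphere_slice u x0 y0 z).mpr hz), if_pos hz]
    rfl
  · rw [if_neg (fun hmem => hz ((mem_sphere_slice u x0 y0 z).mp hmem)), if_neg hz]
    show Sl.ofH (u := u) _ = Sl.ofH (u := u) (phvi u (((z - (x0 : ℂ)) ^ 2 + ((y0 : ℂ)) ^ 2) ^ k) * (cK u f z).toH)
    rw [map_pow, ← phi_A]
    rfl

theorem norm_smul_sl (u : ImU) (z : ℂ) (q : Sl u) : ‖z • q‖ = ‖z‖ * ‖q‖ := by
  show ‖phvi u z * q.toH‖ = _
  rw [norm_mul, norm_phi]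
  rfl

theorem cK_f_diff {x0 y0 R : ℝ} {u : ImU} {f : ℍ[ℝ] → ℍ[ℝ]} {Ω : Set ℍ[ℝ]}
    (hRsub : sphU x0 y0 R ⊆ Ω) (hf : SliceRegularOn f (Ω \ qSphere x0 y0)) {z : ℂ}
    (hz : (z - (x0 : ℂ)) ^ 2 + ((y0 : ℂ)) ^ 2 ≠ 0)
    (hmem : ‖(z - (x0 : ℂ)) ^ 2 + ((y0 : ℂ)) ^ 2‖ < R ^ 2) :
    DifferentiableAt ℂ (cK u f) z := by
  have hmem' : ((z.re : ℝ) : ℍ[ℝ]) + z.im • u.1 ∈ Ω \ qSphere x0 y0 := by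
    rw [← phi_apply]
    exact ⟨hRsub ((mem_sphU_slice u x0 y0 R z).mpr hmem),
      fun hs => hz ((mem_sphere_slice u x0 y0 z).mp hs)⟩
  have hsl := hf u.1 (u_mem_QS u) (z.re, z.im) hmem'
  have := (slice_iff u f (z.re, z.im)).mp hsl
  rwa [Complex.re_add_im] at this

theorem diff_ne {x0 y0 R : ℝ} {u : ImU} {f : ℍ[ℝ] → ℍ[ℝ]} {Ω : Set ℍ[ℝ]}
    (hRsub : sphU x0 y0 R ⊆ Ω) (hf : SliceRegularOn f (Ω \ qSphere x0 y0)) (k : ℕ) {z : ℂ}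
    (hz : (z - (x0 : ℂ)) ^ 2 + ((y0 : ℂ)) ^ 2 ≠ 0)
    (hmem : ‖(z - (x0 : ℂ)) ^ 2 + ((y0 : ℂ)) ^ 2‖ < R ^ 2) :
    DifferentiableAt ℂ (cK u (gfun x0 y0 k f)) z := by
  have hF : DifferentiableAt ℂ (cK u f) z := cK_f_diff hRsub hf hz hmem
  have hA : DifferentiableAt ℂ (fun w : ℂ => ((w - (x0 : ℂ)) ^ 2 + ((y0 : ℂ)) ^ 2) ^ k) z := by
    apply Differentiable.differentiableAt
    exact (((differentiable_id.sub_const _).pow 2).add_const _).pow k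
  have hmain : DifferentiableAt ℂ
      (fun w : ℂ => ((w - (x0 : ℂ)) ^ 2 + ((y0 : ℂ)) ^ 2) ^ k • cK u f w) z := hA.smul hF
  apply hmain.congr_of_eventuallyEq
  have hcont : ContinuousAt (fun w : ℂ => (w - (x0 : ℂ)) ^ 2 + ((y0 : ℂ)) ^ 2) z := by fun_prop
  filter_upwards [hcont.eventually_ne hz] with w hw
  rw [cK_gfun, if_neg hw]

theorem cK_g_tendsto {x0 y0 : ℝ} {u : ImU} {f : ℍ[ℝ] → ℍ[ℝ]} {m : ℕ}
    {z0 z1 : ℂ}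
    (hfact : ∀ z : ℂ, (z - (x0 : ℂ)) ^ 2 + ((y0 : ℂ)) ^ 2 = (z - z0) * (z - z1))
    {I' : ℍ[ℝ]}
    (hpt : ((x0 : ℝ) : ℍ[ℝ]) + y0 • I' = phvi u z0)
    (hfm : ∀ z : ℂ, ∃ a b : ℝ, phvi u z = ((a : ℝ) : ℍ[ℝ]) + b • I')
    {δ C : ℝ} (hδ : 0 < δ)
    (hC : ∀ z : ℍ[ℝ], (∃ a b : ℝ, z = ((a : ℝ) : ℍ[ℝ]) + b • I') →
      0 < ‖z - (((x0 : ℝ) : ℍ[ℝ]) + y0 • I')‖ → ‖z - (((x0 : ℝ) : ℍ[ℝ]) + y0 • I')‖ < δ →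
      ‖(z - (((x0 : ℝ) : ℍ[ℝ]) + y0 • I')) ^ m * f z‖ ≤ C) :
    Tendsto (cK u (gfun x0 y0 (m + 1) f)) (𝓝[≠] z0) (𝓝 0) := by
  set C' := max C 0 with hC'
  have hC'0 : 0 ≤ C' := le_max_right _ _
  have hdist : ∀ z : ℂ, ‖phvi u z - (((x0 : ℝ) : ℍ[ℝ]) + y0 • I')‖ = ‖z - z0‖ := by
    intro z
    rw [hpt, ← map_sub, norm_phi]
  apply squeeze_zero_norm' (a := fun z => C' * (‖z - z0‖ * ‖z - z1‖ ^ (m + 1)))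
  · have hball : ∀ᶠ z in 𝓝[≠] z0, ‖z - z0‖ < δ := by
      apply Filter.Eventually.filter_mono nhdsWithin_le_nhds
      have hcont : ContinuousAt (fun z : ℂ => ‖z - z0‖) z0 :=
        (continuous_norm.comp (continuous_id.sub continuous_const)).continuousAt
      have : ‖z0 - z0‖ < δ := by simpa using hδ
      exact hcont (Iio_mem_nhds this)
    filter_upwards [hball, self_mem_nhdsWithin] with z hzδ hzne
    have hzne' : z ≠ z0 := hzne
    by_cases hz : (z - (x0 : ℂ)) ^ 2 + ((y0 : ℂ)) ^ 2 = 0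
    · rw [cK_gfun, if_pos hz, norm_zero]
      positivity
    · rw [cK_gfun, if_neg hz, norm_smul_sl, norm_pow]
      have habs : ‖(z - (x0 : ℂ)) ^ 2 + ((y0 : ℂ)) ^ 2‖
          = ‖z - z0‖ * ‖z - z1‖ := by
        rw [hfact z, norm_mul]
      have hzpos : 0 < ‖z - z0‖ := by
        rw [norm_pos_iff, sub_ne_zero]
        exact hzne'
      have hb := hC (phvi u z) (hfm z) (by rw [hdist]; exact hzpos) (by rw [hdist]; exact hzδ)
      have hb' : ‖z - z0‖ ^ m * ‖f (phvi u z)‖ ≤ C' := by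
        rw [← hdist z, ← norm_pow, ← norm_mul]
        exact le_trans hb (le_max_left _ _)
      set t := ‖z - z0‖
      set s := ‖z - z1‖
      have hs0 : 0 ≤ s := norm_nonneg _
      have hN0 : 0 ≤ ‖f (phvi u z)‖ := norm_nonneg _
      have hcKf : ‖cK u f z‖ = ‖f (phvi u z)‖ := rfl
      rw [habs, hcKf]
      calc (t * s) ^ (m + 1) * ‖f (phvi u z)‖
          = (t * s ^ (m + 1)) * (t ^ m * ‖f (phvi u z)‖) := by ring
        _ ≤ (t * s ^ (m + 1)) * C' := by
            apply mul_le_mul_of_nonneg_left hb'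
            positivity
        _ = C' * (t * s ^ (m + 1)) := mul_comm _ _
  · have hcont : Continuous (fun z : ℂ => C' * (‖z - z0‖ * ‖z - z1‖ ^ (m + 1))) :=
      continuous_const.mul (((continuous_norm.comp (continuous_id.sub continuous_const))).mul
        ((continuous_norm.comp (continuous_id.sub continuous_const)).pow (m + 1)))
    have hval : C' * (‖z0 - z0‖ * ‖z0 - z1‖ ^ (m + 1)) = 0 := by
      simp
    have := hcont.tendsto z0
    rw [hval] at this
    exact this.mono_left nhdsWithin_le_nhds

theorem diff_at_root_aux {x0 y0 R : ℝ} {u : ImU} {f : ℍ[ℝ] → ℍ[ℝ]} {Ω : Set ℍ[ℝ]}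
    (hR0 : 0 < R) (hRsub : sphU x0 y0 R ⊆ Ω) (hf : SliceRegularOn f (Ω \ qSphere x0 y0)) {m : ℕ}
    {z0 z1 : ℂ}
    (hfact : ∀ z : ℂ, (z - (x0 : ℂ)) ^ 2 + ((y0 : ℂ)) ^ 2 = (z - z0) * (z - z1))
    (hz00 : (z0 - (x0 : ℂ)) ^ 2 + ((y0 : ℂ)) ^ 2 = 0)
    {I' : ℍ[ℝ]}
    (hpt : ((x0 : ℝ) : ℍ[ℝ]) + y0 • I' = phvi u z0)
    (hfm : ∀ z : ℂ, ∃ a b : ℝ, phvi u z = ((a : ℝ) : ℍ[ℝ]) + b • I')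
    {δ C : ℝ} (hδ : 0 < δ)
    (hC : ∀ z : ℍ[ℝ], (∃ a b : ℝ, z = ((a : ℝ) : ℍ[ℝ]) + b • I') →
      0 < ‖z - (((x0 : ℝ) : ℍ[ℝ]) + y0 • I')‖ → ‖z - (((x0 : ℝ) : ℍ[ℝ]) + y0 • I')‖ < δ →
      ‖(z - (((x0 : ℝ) : ℍ[ℝ]) + y0 • I')) ^ m * f z‖ ≤ C) :
    DifferentiableAt ℂ (cK u (gfun x0 y0 (m + 1) f)) z0 := by
  apply AnalyticAt.differentiableAt
  apply Complex.analyticAt_of_differentiable_on_punctured_nhds_of_continuousAt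
  · -- differentiable on punctured neighborhood
    have hev1 : ∀ᶠ z in 𝓝[≠] z0, z ≠ z1 := by
      rcases eq_or_ne z0 z1 with h | h
      · exact eventually_mem_nhdsWithin.mono (fun z hz => by
          simp only [Set.mem_compl_iff, Set.mem_singleton_iff] at hz
          rw [← h]; exact hz)
      · exact (eventually_ne_nhds h).filter_mono nhdsWithin_le_nhds
    have hcontA : ContinuousAt (fun z : ℂ => ‖(z - (x0 : ℂ)) ^ 2 + ((y0 : ℂ)) ^ 2‖) z0 := by
      apply Continuous.continuousAt
      exact continuous_norm.comp ((((continuous_id.sub continuous_const).pow 2).add continuous_const))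
    have hval : ‖(z0 - (x0 : ℂ)) ^ 2 + ((y0 : ℂ)) ^ 2‖ < R ^ 2 := by
      rw [hz00]
      simpa using pow_pos hR0 2
    have hev2 : ∀ᶠ z in 𝓝[≠] z0,
        ‖(z - (x0 : ℂ)) ^ 2 + ((y0 : ℂ)) ^ 2‖ < R ^ 2 := by
      have h : ∀ᶠ z in 𝓝 z0, ‖(z - (x0 : ℂ)) ^ 2 + ((y0 : ℂ)) ^ 2‖ < R ^ 2 :=
        hcontA (Iio_mem_nhds hval)
      exact h.filter_mono nhdsWithin_le_nhds
    filter_upwards [hev1, hev2, self_mem_nhdsWithin] with z hz1 hz2 hz0'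
    have hz0'' : z ≠ z0 := hz0'
    have hzne : (z - (x0 : ℂ)) ^ 2 + ((y0 : ℂ)) ^ 2 ≠ 0 := by
      rw [hfact z]
      exact mul_ne_zero (sub_ne_zero.mpr hz0'') (sub_ne_zero.mpr hz1)
    exact diff_ne hRsub hf (m + 1) hzne hz2
  · -- continuity at z0
    rw [← continuousWithinAt_compl_self]
    show Tendsto _ _ _
    have hval0 : cK u (gfun x0 y0 (m + 1) f) z0 = 0 := by
      rw [cK_gfun, if_pos hz00]
    rw [hval0]
    exact cK_g_tendsto hfact hpt hfm hδ hC

theorem gfun_regular {x0 y0 R : ℝ} {f : ℍ[ℝ] → ℍ[ℝ]} {Ω : Set ℍ[ℝ]} {m : ℕ}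
    (hR0 : 0 < R) (hRsub : sphU x0 y0 R ⊆ Ω) (hf : SliceRegularOn f (Ω \ qSphere x0 y0))
    (hpole : ∀ I ∈ QS, ∃ δ > (0 : ℝ), ∃ C : ℝ, ∀ z : ℍ[ℝ],
      (∃ a b : ℝ, z = (a : ℍ[ℝ]) + b • I) →
      0 < ‖z - ((x0 : ℍ[ℝ]) + y0 • I)‖ → ‖z - ((x0 : ℍ[ℝ]) + y0 • I)‖ < δ →
      ‖(z - ((x0 : ℍ[ℝ]) + y0 • I)) ^ m * f z‖ ≤ C) :
    SliceRegularOn (gfun x0 y0 (m + 1) f) (sphU x0 y0 R) := by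
  intro I hIQ p hp
  set u : ImU := ⟨I, by rw [← pow_two]; exact hIQ⟩ with hu
  apply (slice_iff u (gfun x0 y0 (m + 1) f) p).mpr
  set z0 : ℂ := (p.1 : ℂ) + (p.2 : ℂ) * Complex.I with hz0def
  have hphi : phvi u z0 = (p.1 : ℍ[ℝ]) + p.2 • I := by
    rw [phi_apply]
    simp [hz0def]
    rfl
  have hmem : ‖(z0 - (x0 : ℂ)) ^ 2 + ((y0 : ℂ)) ^ 2‖ < R ^ 2 :=
    (mem_sphU_slice u x0 y0 R z0).mp (by rw [hphi]; exact hp)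
  by_cases hz : (z0 - (x0 : ℂ)) ^ 2 + ((y0 : ℂ)) ^ 2 = 0
  · obtain ⟨δ, hδ, C, hC⟩ := hpole I hIQ
    have hzz := hz
    rw [A_factor] at hzz
    rcases mul_eq_zero.mp hzz with h | h
    · -- z0 = x0 + y0 i
      have hz0c : z0 = (x0 : ℂ) + (y0 : ℂ) * Complex.I := sub_eq_zero.mp h
      apply diff_at_root_aux hR0 hRsub hf (z1 := (x0 : ℂ) - (y0 : ℂ) * Complex.I)
        (fun z => by rw [A_factor, hz0c]) hz (I' := I) ?hpt ?hfm hδ hC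
      case hpt =>
        rw [hz0c, phi_apply]
        simp
        rfl
      case hfm =>
        intro z
        exact ⟨z.re, z.im, (phi_apply u z)⟩
    · -- z0 = x0 - y0 i
      obtain ⟨δ', hδ', C', hC'⟩ := hpole (-I) (by
        show (-I) ^ 2 = -1
        rw [neg_sq]; exact hIQ)
      have hz0c : z0 = (x0 : ℂ) - (y0 : ℂ) * Complex.I := sub_eq_zero.mp h
      apply diff_at_root_aux hR0 hRsub hf (z1 := (x0 : ℂ) + (y0 : ℂ) * Complex.I)
        (fun z => by rw [A_factor, hz0c]; ring) hz (I' := -I) ?hpt2 ?hfm2 hδ' hC'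
      case hpt2 =>
        rw [hz0c, phi_apply]
        simp
        rfl
      case hfm2 =>
        intro z
        refine ⟨z.re, -z.im, ?_⟩
        rw [phi_apply]
        simp
        rfl
  · exact diff_ne hRsub hf (m + 1) hz hmem


/-- extraction of a spherical pole: if each point of `x₀+y₀𝕊` is at worst
a pole of `f`, then `f(q) = ((q-x₀)²+y₀²)^{-k} g(q)` near the sphere for a unique slice
regular `g`. -/
theorem pole_extraction (Ω : Set ℍ[ℝ]) (hΩ : SymmSliceDomain Ω) (x0 y0 : ℝ)
    (hsub : qSphere x0 y0 ⊆ Ω) (f : ℍ[ℝ] → ℍ[ℝ])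
    (hf : SliceRegularOn f (Ω \ qSphere x0 y0))
    (hpole : ∃ m : ℕ, ∀ I ∈ QS, ∃ δ > (0 : ℝ), ∃ C : ℝ, ∀ z : ℍ[ℝ],
      (∃ a b : ℝ, z = (a : ℍ[ℝ]) + b • I) →
      0 < ‖z - ((x0 : ℍ[ℝ]) + y0 • I)‖ → ‖z - ((x0 : ℍ[ℝ]) + y0 • I)‖ < δ →
      ‖(z - ((x0 : ℍ[ℝ]) + y0 • I)) ^ m * f z‖ ≤ C) :
    ∃ (k : ℕ) (R : ℝ), 0 < R ∧ sphU x0 y0 R ⊆ Ω ∧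
      ∃ g : ℍ[ℝ] → ℍ[ℝ],
        (SliceRegularOn g (sphU x0 y0 R) ∧
          ∀ q ∈ sphU x0 y0 R \ qSphere x0 y0,
            f q = (((q - (x0 : ℍ[ℝ])) ^ 2 + ((y0 : ℍ[ℝ])) ^ 2)⁻¹) ^ k * g q) ∧
        ∀ g' : ℍ[ℝ] → ℍ[ℝ],
          (SliceRegularOn g' (sphU x0 y0 R) ∧
            ∀ q ∈ sphU x0 y0 R \ qSphere x0 y0,
              f q = (((q - (x0 : ℍ[ℝ])) ^ 2 + ((y0 : ℍ[ℝ])) ^ 2)⁻¹) ^ k * g' q) →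
          Set.EqOn g g' (sphU x0 y0 R) := by
  obtain ⟨m, hpole⟩ := hpole
  obtain ⟨R, hR0, hRsub⟩ := exists_R hΩ.1 hsub
  refine ⟨m + 1, R, hR0, hRsub, gfun x0 y0 (m + 1) f,
    ⟨⟨gfun_regular hR0 hRsub hf hpole, ?_⟩, ?_⟩⟩
  · -- formula
    rintro q ⟨hqU, hqS⟩
    have haz : (q - (x0 : ℍ[ℝ])) ^ 2 + ((y0 : ℍ[ℝ])) ^ 2 ≠ 0 :=
      fun h => hqS (mem_qSphere_iff.mpr h)
    show f q = _ * gfun x0 y0 (m + 1) f q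
    rw [gfun]
    simp only [if_neg hqS]
    rw [inv_pow, ← mul_assoc, inv_mul_cancel₀ (pow_ne_zero _ haz), one_mul]
  · -- uniqueness
    rintro g' ⟨hg'reg, hg'form⟩ q hqU
    have hoff : ∀ w ∈ sphU x0 y0 R \ qSphere x0 y0, gfun x0 y0 (m + 1) f w = g' w := by
      rintro w ⟨hwU, hwS⟩
      have haz : (w - (x0 : ℍ[ℝ])) ^ 2 + ((y0 : ℍ[ℝ])) ^ 2 ≠ 0 :=
        fun h => hwS (mem_qSphere_iff.mpr h)
      have h1 := hg'form w ⟨hwU, hwS⟩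
      rw [gfun]
      simp only [if_neg hwS]
      rw [h1, inv_pow, ← mul_assoc, mul_inv_cancel₀ (pow_ne_zero _ haz), one_mul]
    by_cases hqS : q ∈ qSphere x0 y0
    · obtain ⟨J, hJQ, rfl⟩ := hqS
      set u : ImU := ⟨J, by rw [← pow_two]; exact hJQ⟩ with hu
      set c : ℂ := (x0 : ℂ) + (y0 : ℂ) * Complex.I with hcdef
      set cb : ℂ := (x0 : ℂ) - (y0 : ℂ) * Complex.I with hcbdef
      have hphic : phvi u c = (x0 : ℍ[ℝ]) + y0 • J := by
        rw [phi_apply]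
        simp [hcdef]
        rfl
      have hAc : (c - (x0 : ℂ)) ^ 2 + ((y0 : ℂ)) ^ 2 = 0 := by
        rw [A_factor]
        simp [hcdef, hcbdef]
      have hqU' : ((x0 : ℝ) : ℍ[ℝ]) + (y0 : ℝ) • J ∈ sphU x0 y0 R := hqU
      have hgd : DifferentiableAt ℂ (cK u (gfun x0 y0 (m + 1) f)) c := by
        have := (slice_iff u (gfun x0 y0 (m + 1) f) (x0, y0)).mp
          ((gfun_regular hR0 hRsub hf hpole) J hJQ (x0, y0) hqU')
        exact this
      have hg'd : DifferentiableAt ℂ (cK u g') c := by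
        have := (slice_iff u g' (x0, y0)).mp (hg'reg J hJQ (x0, y0) hqU')
        exact this
      have hevEq : cK u (gfun x0 y0 (m + 1) f) =ᶠ[𝓝[≠] c] cK u g' := by
        have hev1 : ∀ᶠ z in 𝓝[≠] c, z ≠ cb := by
          rcases eq_or_ne c cb with h | h
          · exact eventually_mem_nhdsWithin.mono (fun z hz => by
              simp only [Set.mem_compl_iff, Set.mem_singleton_iff] at hz
              rw [← h]; exact hz)
          · exact (eventually_ne_nhds h).filter_mono nhdsWithin_le_nhds
        have hcontA : ContinuousAt (fun z : ℂ => ‖(z - (x0 : ℂ)) ^ 2 + ((y0 : ℂ)) ^ 2‖) c := by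
          apply Continuous.continuousAt
          exact continuous_norm.comp ((((continuous_id.sub continuous_const).pow 2).add continuous_const))
        have hval : ‖(c - (x0 : ℂ)) ^ 2 + ((y0 : ℂ)) ^ 2‖ < R ^ 2 := by
          rw [hAc]
          simpa using pow_pos hR0 2
        have hev2 : ∀ᶠ z in 𝓝[≠] c,
            ‖(z - (x0 : ℂ)) ^ 2 + ((y0 : ℂ)) ^ 2‖ < R ^ 2 := by
          have h : ∀ᶠ z in 𝓝 c, ‖(z - (x0 : ℂ)) ^ 2 + ((y0 : ℂ)) ^ 2‖ < R ^ 2 :=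
            hcontA (Iio_mem_nhds hval)
          exact h.filter_mono nhdsWithin_le_nhds
        filter_upwards [hev1, hev2, self_mem_nhdsWithin] with z hz1 hz2 hz3
        have hz3' : z ≠ c := hz3
        have hAz : (z - (x0 : ℂ)) ^ 2 + ((y0 : ℂ)) ^ 2 ≠ 0 := by
          rw [A_factor]
          exact mul_ne_zero (sub_ne_zero.mpr hz3') (sub_ne_zero.mpr hz1)
        have hmem : phvi u z ∈ sphU x0 y0 R \ qSphere x0 y0 :=
          ⟨(mem_sphU_slice u x0 y0 R z).mpr hz2,
            fun hs => hAz ((mem_sphere_slice u x0 y0 z).mp hs)⟩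
        exact congrArg (Sl.ofH (u := u)) (hoff (phvi u z) hmem)
      have t1 : Tendsto (cK u (gfun x0 y0 (m + 1) f)) (𝓝[≠] c)
          (𝓝 (cK u (gfun x0 y0 (m + 1) f) c)) :=
        hgd.continuousAt.continuousWithinAt
      have t2 : Tendsto (cK u g') (𝓝[≠] c) (𝓝 (cK u g' c)) :=
        hg'd.continuousAt.continuousWithinAt
      have t1' : Tendsto (cK u g') (𝓝[≠] c) (𝓝 (cK u (gfun x0 y0 (m + 1) f) c)) :=
        t1.congr' hevEq
      have hfin : cK u (gfun x0 y0 (m + 1) f) c = cK u g' c := tendsto_nhds_unique t1' t2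
      show gfun x0 y0 (m + 1) f _ = g' _
      have : gfun x0 y0 (m + 1) f (phvi u c) = g' (phvi u c) := hfin
      rwa [hphic] at this
    · exact hoff q ⟨hqU, hqS⟩
end
end
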